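/- arXiv:2510.16725 — 5 statements merged into one kernel-verified Lean document; each statement's English description precedes it below -/
import Mathlib

section
/- Let g₁ : [0,∞) → [0,∞) be locally integrable with ∫₀^t g₁(τ)dτ → +∞ as t → +∞ and ∫_s^t g₁(τ)dτ > 0 whenever 0 ≤ s < t, and let α₃ : [0,∞) → [0,∞) be continuous with α₃(s) > 0 for all s > 0, continuously differentiable on (0,∞), and locally Lipschitz on [0,∞). Then there exists a function β of class 𝒦𝓛 such that for every T > 0, every y₀ ≥ 0, every continuous v : [0,T] → [0,∞), and every nonnegative absolutely continuous function y on [0,T] satisfying y(0) = y₀ and y′(t) ≤ −g₁(t)·α₃(y(t)) + v(t) for almost every t ∈ [0,T], one has y(t) ≤ β(y₀, t) + 2∫₀^t v(s)ds for all t ∈ [0,T]. -/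
open Set MeasureTheory Filter

noncomputable section

/-- A function of class 𝒦: continuous, strictly increasing on `[0,∞)`, vanishing at `0`,
and mapping `[0,∞)` into `[0,∞)`. -/
def ClassK (f : ℝ → ℝ) : Prop :=
  ContinuousOn f (Ici 0) ∧ StrictMonoOn f (Ici 0) ∧ f 0 = 0 ∧ ∀ s ∈ Ici (0:ℝ), 0 ≤ f s

/-- A function of class 𝒦∞: class 𝒦 and unbounded. -/
def ClassKInf (f : ℝ → ℝ) : Prop := ClassK f ∧ Tendsto f atTop atTop

/-- A function of class 𝒦𝓛. -/
def ClassKL (β : ℝ → ℝ → ℝ) : Prop :=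
  ContinuousOn (fun p : ℝ × ℝ => β p.1 p.2) (Ici 0 ×ˢ Ici 0) ∧
  (∀ t ∈ Ici (0:ℝ), ClassK (fun s => β s t)) ∧
  ∀ r > (0:ℝ), StrictAntiOn (fun t => β r t) (Ici 0) ∧
    Tendsto (fun t => β r t) atTop (nhds 0)

/-- `y` is absolutely continuous on `[0,T]` with (a.e.) derivative `y'`, i.e. `y` is the
indefinite integral of the integrable function `y'`. -/
def IsACDeriv (T : ℝ) (y y' : ℝ → ℝ) : Prop :=
  IntegrableOn y' (Icc 0 T) ∧ ∀ t ∈ Icc (0:ℝ) T, y t = y 0 + ∫ s in (0:ℝ)..t, y' s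

namespace Stmt6Aux

variable (g₁ α₃ : ℝ → ℝ)

/-- Primitive of the gain. -/
def G (t : ℝ) : ℝ := ∫ τ in (0:ℝ)..t, g₁ τ

/-- Minimum of `α₃` on `[ε, 3s]`. -/
def M (ε s : ℝ) : ℝ := sInf (α₃ '' Icc ε (3*s))

/-- Admissible decay levels. -/
def S (s t : ℝ) : Set ℝ :=
  {ε | ε = s ∨ (0 < ε ∧ ε ≤ s ∧ s < G g₁ t * M α₃ ε s)}

def h (s t : ℝ) : ℝ := sInf (S g₁ α₃ s t)

def P (s τ : ℝ) : ℝ := ∫ c in (1:ℝ)..2, h g₁ α₃ (s*c) τ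

def Q (s t : ℝ) : ℝ := ∫ u in (1/2:ℝ)..1, P g₁ α₃ s (t*u)

def B (s t : ℝ) : ℝ := s * Real.exp (-t) + 2 * Q g₁ α₃ s t

/-! ### Hypothesis bundle -/

structure Hyp : Prop where
  hg₁nn : ∀ t ∈ Ici (0:ℝ), 0 ≤ g₁ t
  hg₁int : ∀ T > (0:ℝ), IntegrableOn g₁ (Icc 0 T)
  hGdiv : Tendsto (fun t => ∫ τ in (0:ℝ)..t, g₁ τ) atTop atTop
  hGpos : ∀ s t : ℝ, 0 ≤ s → s < t → 0 < ∫ τ in s..t, g₁ τ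
  hα₃c : ContinuousOn α₃ (Ici 0)
  hα₃nn : ∀ s ∈ Ici (0:ℝ), 0 ≤ α₃ s
  hα₃pos : ∀ s > (0:ℝ), 0 < α₃ s

variable {g₁ α₃}
variable (H : Hyp g₁ α₃)
include H

/-! ### Facts about `G` -/

theorem g1ii {a b : ℝ} (ha : 0 ≤ a) (hb : 0 ≤ b) :
    IntervalIntegrable g₁ volume a b := by
  have h1 : IntegrableOn g₁ (Icc 0 (max a b + 1)) := H.hg₁int _ (by positivity)
  have h2 : uIcc a b ⊆ Icc 0 (max a b + 1) := by
    apply uIcc_subset_Icc <;> constructor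
    · exact ha
    · exact le_trans (le_max_left a b) (by linarith)
    · exact hb
    · exact le_trans (le_max_right a b) (by linarith)
  exact (h1.mono h2 le_rfl).intervalIntegrable

omit H in
theorem G_zero : G g₁ 0 = 0 := intervalIntegral.integral_same

theorem G_add {a b : ℝ} (ha : 0 ≤ a) (hab : a ≤ b) :
    G g₁ b = G g₁ a + ∫ τ in a..b, g₁ τ :=
  (intervalIntegral.integral_add_adjacent_intervals
    (g1ii H le_rfl ha) (g1ii H ha (ha.trans hab))).symm

theorem G_lt {a b : ℝ} (ha : 0 ≤ a) (hab : a < b) : G g₁ a < G g₁ b := by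
  rw [G_add H ha hab.le]
  linarith [H.hGpos a b ha hab]

theorem G_le {a b : ℝ} (ha : 0 ≤ a) (hab : a ≤ b) : G g₁ a ≤ G g₁ b := by
  rcases eq_or_lt_of_le hab with rfl | hlt
  · exact le_rfl
  · exact (G_lt H ha hlt).le

theorem G_nonneg {t : ℝ} (ht : 0 ≤ t) : 0 ≤ G g₁ t := by
  have := G_le H le_rfl ht
  rwa [G_zero] at this

theorem G_small {s : ℝ} (hs : 0 < s) (A : ℝ) :
    ∃ δ > 0, ∀ t ∈ Icc (0:ℝ) δ, G g₁ t * A ≤ s := by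
  rcases le_or_gt A 0 with hA | hA
  · refine ⟨1, one_pos, fun t ht => ?_⟩
    have := mul_nonpos_of_nonneg_of_nonpos (G_nonneg H ht.1) hA
    linarith
  · have hc : ContinuousOn (G g₁) (uIcc (0:ℝ) 1) := by
      apply intervalIntegral.continuousOn_primitive_interval
      rw [uIcc_of_le (by norm_num : (0:ℝ) ≤ 1)]
      exact H.hg₁int 1 one_pos
    have hcw : ContinuousWithinAt (G g₁) (uIcc (0:ℝ) 1) 0 :=
      hc 0 (by rw [uIcc_of_le (by norm_num : (0:ℝ) ≤ 1)]; exact ⟨le_rfl, by norm_num⟩)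
    rw [Metric.continuousWithinAt_iff] at hcw
    obtain ⟨δ, hδ, hδ'⟩ := hcw (s / A) (by positivity)
    refine ⟨min (δ/2) 1, by positivity, fun t ht => ?_⟩
    have ht1 : t ∈ uIcc (0:ℝ) 1 := by
      rw [uIcc_of_le (by norm_num : (0:ℝ) ≤ 1)]
      exact ⟨ht.1, ht.2.trans (min_le_right _ _)⟩
    have htd : dist t 0 < δ := by
      rw [Real.dist_eq, sub_zero, abs_of_nonneg ht.1]
      have h2 := ht.2.trans (min_le_left _ _)
      linarith
    have h3 := hδ' ht1 htd
    rw [Real.dist_eq, G_zero, sub_zero] at h3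
    have hGt : G g₁ t < s / A := (le_abs_self _).trans_lt h3
    calc G g₁ t * A ≤ (s/A) * A := mul_le_mul_of_nonneg_right hGt.le hA.le
      _ = s := by field_simp

/-! ### Facts about `M` -/

theorem M_bddBelow {ε s : ℝ} (hε : 0 < ε) : BddBelow (α₃ '' Icc ε (3*s)) := by
  refine ⟨0, fun x hx => ?_⟩
  obtain ⟨u, hu, rfl⟩ := hx
  exact H.hα₃nn u (le_trans hε.le hu.1)

theorem M_le_mem {ε s x : ℝ} (hε : 0 < ε) (hx : x ∈ Icc ε (3*s)) :
    M α₃ ε s ≤ α₃ x :=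
  csInf_le (M_bddBelow H hε) ⟨x, hx, rfl⟩

theorem M_nonneg {ε s : ℝ} (hε : 0 < ε) : 0 ≤ M α₃ ε s := by
  rcases le_or_gt ε (3*s) with h3 | h3
  · exact le_csInf ⟨α₃ ε, ⟨ε, ⟨le_rfl, h3⟩, rfl⟩⟩
      (fun x hx => by obtain ⟨u, hu, rfl⟩ := hx; exact H.hα₃nn u (le_trans hε.le hu.1))
  · unfold M
    rw [Icc_eq_empty (by linarith), image_empty, Real.sInf_empty]

theorem M_anti {ε s s' : ℝ} (hε : 0 < ε) (h3 : ε ≤ 3*s) (hss' : s ≤ s') :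
    M α₃ ε s' ≤ M α₃ ε s := by
  apply csInf_le_csInf (M_bddBelow H hε)
  · exact ⟨α₃ ε, ⟨ε, ⟨le_rfl, h3⟩, rfl⟩⟩
  · exact image_mono (Icc_subset_Icc le_rfl (by linarith))

theorem M_pos {ε s : ℝ} (hε : 0 < ε) (h3 : ε ≤ 3*s) : 0 < M α₃ ε s := by
  obtain ⟨x, hx, hmin⟩ := isCompact_Icc.exists_isMinOn (nonempty_Icc.mpr h3)
    (H.hα₃c.mono (fun u hu => le_trans hε.le hu.1))
  have h1 : α₃ x ≤ M α₃ ε s :=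
    le_csInf ⟨α₃ ε, ⟨ε, ⟨le_rfl, h3⟩, rfl⟩⟩ (by rintro b ⟨u, hu, rfl⟩; exact hmin hu)
  exact lt_of_lt_of_le (H.hα₃pos x (lt_of_lt_of_le hε hx.1)) h1

/-! ### Facts about `h` -/

omit H in
theorem S_nonempty (s t : ℝ) : (S g₁ α₃ s t).Nonempty := ⟨s, Or.inl rfl⟩

omit H in
theorem S_bddBelow {s : ℝ} (hs : 0 ≤ s) (t : ℝ) : BddBelow (S g₁ α₃ s t) := by
  refine ⟨0, fun ε hε => ?_⟩
  rcases hε with rfl | ⟨h1, _, _⟩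
  · exact hs
  · exact h1.le

omit H in
theorem h_le_self {s : ℝ} (hs : 0 ≤ s) (t : ℝ) : h g₁ α₃ s t ≤ s :=
  csInf_le (S_bddBelow hs t) (Or.inl rfl)

omit H in
theorem h_nonneg {s : ℝ} (hs : 0 ≤ s) (t : ℝ) : 0 ≤ h g₁ α₃ s t :=
  le_csInf (S_nonempty s t) (fun ε hε => by
    rcases hε with rfl | ⟨h1, _, _⟩
    · exact hs
    · exact h1.le)

omit H in
theorem h_zero (t : ℝ) : h g₁ α₃ 0 t = 0 :=
  le_antisymm (h_le_self le_rfl t) (h_nonneg le_rfl t)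

theorem h_mono {s s' t : ℝ} (hs : 0 ≤ s) (hss' : s ≤ s') (ht : 0 ≤ t) :
    h g₁ α₃ s t ≤ h g₁ α₃ s' t := by
  apply le_csInf (S_nonempty s' t)
  intro ε' hε'
  rcases hε' with rfl | ⟨h1, h2, h3⟩
  · exact (h_le_self hs t).trans hss'
  · rcases le_or_gt ε' s with hc | hc
    · refine csInf_le (S_bddBelow hs t) (Or.inr ⟨h1, hc, ?_⟩)
      have hM : M α₃ ε' s' ≤ M α₃ ε' s := M_anti H h1 (by linarith) hss'
      calc s ≤ s' := hss'
        _ < G g₁ t * M α₃ ε' s' := h3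
        _ ≤ G g₁ t * M α₃ ε' s := mul_le_mul_of_nonneg_left hM (G_nonneg H ht)
    · exact (h_le_self hs t).trans hc.le

theorem h_anti {s t t' : ℝ} (hs : 0 ≤ s) (ht : 0 ≤ t) (htt' : t ≤ t') :
    h g₁ α₃ s t' ≤ h g₁ α₃ s t := by
  apply le_csInf (S_nonempty s t)
  intro ε hε
  rcases hε with rfl | ⟨h1, h2, h3⟩
  · exact h_le_self hs t'
  · refine csInf_le (S_bddBelow hs t') (Or.inr ⟨h1, h2, ?_⟩)
    calc s < G g₁ t * M α₃ ε s := h3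
      _ ≤ G g₁ t' * M α₃ ε s :=
        mul_le_mul_of_nonneg_right (G_le H ht htt') (M_nonneg H h1)

theorem h_le_of_cond {s t ε : ℝ} (hs : 0 ≤ s) (h1 : 0 < ε) (h2 : ε ≤ s)
    (h3 : s < G g₁ t * M α₃ ε s) : h g₁ α₃ s t ≤ ε :=
  csInf_le (S_bddBelow hs t) (Or.inr ⟨h1, h2, h3⟩)

/-- For small times, `h s t = s`. -/
theorem h_eq_of_small {s t : ℝ} (hs : 0 < s) (ht : 0 ≤ t)
    (hsmall : G g₁ t * sSup (α₃ '' Icc 0 (3*s)) ≤ s) : h g₁ α₃ s t = s := by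
  refine le_antisymm (h_le_self hs.le t) (le_csInf (S_nonempty s t) ?_)
  intro ε hε
  rcases hε with rfl | ⟨h1, h2, h3⟩
  · exact le_rfl
  · exfalso
    have hbdd : BddAbove (α₃ '' Icc 0 (3*s)) :=
      (isCompact_Icc.image_of_continuousOn
        (H.hα₃c.mono (fun u hu => hu.1))).bddAbove
    have hMle : M α₃ ε s ≤ sSup (α₃ '' Icc 0 (3*s)) := by
      refine le_trans (M_le_mem H h1 ⟨by linarith, le_rfl⟩) ?_
      exact le_csSup hbdd ⟨3*s, ⟨by linarith, le_rfl⟩, rfl⟩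
    have : G g₁ t * M α₃ ε s ≤ s :=
      le_trans (mul_le_mul_of_nonneg_left hMle (G_nonneg H ht)) hsmall
    linarith

theorem h_tendsto {s : ℝ} (hs : 0 < s) :
    Tendsto (fun t => h g₁ α₃ s t) atTop (nhds 0) := by
  rw [tendsto_order]
  constructor
  · intro a ha
    exact Eventually.of_forall fun t => lt_of_lt_of_le ha (h_nonneg hs.le t)
  · intro a ha
    set ε := min (a/2) s with hε
    have hε0 : 0 < ε := lt_min (by linarith) hs
    have hεs : ε ≤ s := min_le_right _ _
    have hM : 0 < M α₃ ε s := M_pos H hε0 (by linarith)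
    have hG : Tendsto (G g₁) atTop atTop := H.hGdiv
    filter_upwards [hG.eventually_gt_atTop (s / M α₃ ε s)] with t hGt
    have h3 : s < G g₁ t * M α₃ ε s := by
      rw [div_lt_iff₀ hM] at hGt
      linarith
    calc h g₁ α₃ s t ≤ ε := h_le_of_cond H hs.le hε0 hεs h3
      _ ≤ a/2 := min_le_left _ _
      _ < a := by linarith

/-! ### Facts about `P` -/

theorem hc_monoOn {s τ : ℝ} (hs : 0 ≤ s) (hτ : 0 ≤ τ) :
    MonotoneOn (fun c => h g₁ α₃ (s*c) τ) (Icc (1:ℝ) 2) := by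
  intro c hc c' hc' hcc'
  exact h_mono H (by nlinarith [hc.1]) (by nlinarith [hc.1]) hτ

theorem hc_ii {s τ : ℝ} (hs : 0 ≤ s) (hτ : 0 ≤ τ) :
    IntervalIntegrable (fun c => h g₁ α₃ (s*c) τ) volume 1 2 := by
  apply MonotoneOn.intervalIntegrable
  rw [uIcc_of_le (by norm_num : (1:ℝ) ≤ 2)]
  exact hc_monoOn H hs hτ

omit H in
theorem id_ii {s : ℝ} : IntervalIntegrable (fun c : ℝ => s*c) volume 1 2 :=
  (continuous_const.mul continuous_id).intervalIntegrable _ _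

omit H in
theorem integral_sc {s : ℝ} : (∫ c in (1:ℝ)..2, s*c) = 3/2 * s := by
  rw [intervalIntegral.integral_const_mul, integral_id]
  ring

theorem P_nonneg {s τ : ℝ} (hs : 0 ≤ s) (hτ : 0 ≤ τ) : 0 ≤ P g₁ α₃ s τ := by
  apply intervalIntegral.integral_nonneg (by norm_num : (1:ℝ) ≤ 2)
  intro c hc
  exact h_nonneg (by nlinarith [hc.1]) τ

theorem P_le {s τ : ℝ} (hs : 0 ≤ s) (hτ : 0 ≤ τ) : P g₁ α₃ s τ ≤ 3/2 * s := by
  rw [← integral_sc (s := s)]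
  apply intervalIntegral.integral_mono_on (by norm_num) (hc_ii H hs hτ) id_ii
  intro c hc
  exact h_le_self (by nlinarith [hc.1]) τ

theorem P_ge_h {s τ : ℝ} (hs : 0 ≤ s) (hτ : 0 ≤ τ) : h g₁ α₃ s τ ≤ P g₁ α₃ s τ := by
  have : (∫ c in (1:ℝ)..2, h g₁ α₃ s τ) = h g₁ α₃ s τ := by
    rw [intervalIntegral.integral_const]; norm_num
  rw [← this]
  apply intervalIntegral.integral_mono_on (by norm_num)
    intervalIntegrable_const (hc_ii H hs hτ)
  intro c hc
  exact h_mono H hs (le_mul_of_one_le_right hs hc.1) hτ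

theorem P_mono {s s' τ : ℝ} (hs : 0 ≤ s) (hss' : s ≤ s') (hτ : 0 ≤ τ) :
    P g₁ α₃ s τ ≤ P g₁ α₃ s' τ := by
  apply intervalIntegral.integral_mono_on (by norm_num)
    (hc_ii H hs hτ) (hc_ii H (hs.trans hss') hτ)
  intro c hc
  exact h_mono H (by nlinarith [hc.1]) (by nlinarith [hc.1]) hτ

theorem P_anti {s τ τ' : ℝ} (hs : 0 ≤ s) (hτ : 0 ≤ τ) (hττ' : τ ≤ τ') :
    P g₁ α₃ s τ' ≤ P g₁ α₃ s τ := by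
  apply intervalIntegral.integral_mono_on (by norm_num)
    (hc_ii H hs (hτ.trans hττ')) (hc_ii H hs hτ)
  intro c hc
  exact h_anti H (by nlinarith [hc.1]) hτ hττ'

omit H in
theorem P_zero {τ : ℝ} : P g₁ α₃ 0 τ = 0 := by
  unfold P
  rw [intervalIntegral.integral_congr (g := fun _ => (0:ℝ))
    (fun c _ => by rw [zero_mul, h_zero]), intervalIntegral.integral_const, smul_zero]

theorem P_eq_of_small {s τ : ℝ} (hs : 0 < s) (hτ : 0 ≤ τ)
    (hsmall : G g₁ τ * sSup (α₃ '' Icc 0 (6*s)) ≤ s) : P g₁ α₃ s τ = 3/2 * s := by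
  have hbdd : BddAbove (α₃ '' Icc 0 (6*s)) :=
    (isCompact_Icc.image_of_continuousOn (H.hα₃c.mono (fun u hu => hu.1))).bddAbove
  rw [← integral_sc (s := s)]
  apply intervalIntegral.integral_congr
  intro c hc
  rw [uIcc_of_le (by norm_num : (1:ℝ) ≤ 2)] at hc
  have hsc : 0 < s*c := by nlinarith [hc.1]
  apply h_eq_of_small H hsc hτ
  have hsub : sSup (α₃ '' Icc 0 (3*(s*c))) ≤ sSup (α₃ '' Icc 0 (6*s)) := by
    apply csSup_le_csSup hbdd
    · exact ⟨α₃ 0, ⟨0, ⟨le_rfl, by nlinarith [hc.1]⟩, rfl⟩⟩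
    · exact image_mono (Icc_subset_Icc le_rfl (by nlinarith [hc.2]))
  calc G g₁ τ * sSup (α₃ '' Icc 0 (3*(s*c)))
      ≤ G g₁ τ * sSup (α₃ '' Icc 0 (6*s)) :=
        mul_le_mul_of_nonneg_left hsub (G_nonneg H hτ)
    _ ≤ s := hsmall
    _ ≤ s*c := le_mul_of_one_le_right hs.le hc.1

/-! ### Facts about `Q` -/

theorem Pu_antiOn {s t : ℝ} (hs : 0 ≤ s) (ht : 0 ≤ t) :
    AntitoneOn (fun u => P g₁ α₃ s (t*u)) (Icc (1/2:ℝ) 1) := by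
  intro u hu u' hu' huu'
  exact P_anti H hs (by nlinarith [hu.1]) (by nlinarith [hu.1])

theorem Pu_ii {s t : ℝ} (hs : 0 ≤ s) (ht : 0 ≤ t) :
    IntervalIntegrable (fun u => P g₁ α₃ s (t*u)) volume (1/2) 1 := by
  apply AntitoneOn.intervalIntegrable
  rw [uIcc_of_le (by norm_num : (1/2:ℝ) ≤ 1)]
  exact Pu_antiOn H hs ht

theorem Q_nonneg {s t : ℝ} (hs : 0 ≤ s) (ht : 0 ≤ t) : 0 ≤ Q g₁ α₃ s t := by
  apply intervalIntegral.integral_nonneg (by norm_num : (1/2:ℝ) ≤ 1)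
  intro u hu
  exact P_nonneg H hs (by nlinarith [hu.1])

theorem Q_le {s t : ℝ} (hs : 0 ≤ s) (ht : 0 ≤ t) : Q g₁ α₃ s t ≤ 3/4 * s := by
  have : (∫ _u in (1/2:ℝ)..1, 3/2 * s) = 3/4 * s := by
    rw [intervalIntegral.integral_const]; norm_num; ring
  rw [← this]
  apply intervalIntegral.integral_mono_on (by norm_num) (Pu_ii H hs ht)
    intervalIntegrable_const
  intro u hu
  exact P_le H hs (by nlinarith [hu.1])

theorem Q_ge_h {s t : ℝ} (hs : 0 ≤ s) (ht : 0 ≤ t) : h g₁ α₃ s t ≤ 2 * Q g₁ α₃ s t := by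
  have h1 : (∫ _u in (1/2:ℝ)..1, h g₁ α₃ s t) = 1/2 * h g₁ α₃ s t := by
    rw [intervalIntegral.integral_const, smul_eq_mul]; ring_nf
  have h2 : 1/2 * h g₁ α₃ s t ≤ Q g₁ α₃ s t := by
    rw [← h1]
    apply intervalIntegral.integral_mono_on (by norm_num)
      intervalIntegrable_const (Pu_ii H hs ht)
    intro u hu
    have hP1 : P g₁ α₃ s t ≤ P g₁ α₃ s (t*u) :=
      P_anti H hs (by nlinarith [hu.1]) (by nlinarith [hu.2])
    have hP2 : h g₁ α₃ s t ≤ P g₁ α₃ s t := P_ge_h H hs ht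
    exact hP2.trans hP1
  linarith

omit H in
theorem Q_zero {t : ℝ} : Q g₁ α₃ 0 t = 0 := by
  unfold Q
  rw [intervalIntegral.integral_congr (g := fun _ => (0:ℝ)) (fun u _ => P_zero),
    intervalIntegral.integral_const, smul_zero]

theorem Q_mono {s s' t : ℝ} (hs : 0 ≤ s) (hss' : s ≤ s') (ht : 0 ≤ t) :
    Q g₁ α₃ s t ≤ Q g₁ α₃ s' t := by
  apply intervalIntegral.integral_mono_on (by norm_num) (Pu_ii H hs ht)
    (Pu_ii H (hs.trans hss') ht)
  intro u hu
  exact P_mono H hs hss' (by nlinarith [hu.1])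

theorem Q_anti {s t t' : ℝ} (hs : 0 ≤ s) (ht : 0 ≤ t) (htt' : t ≤ t') :
    Q g₁ α₃ s t' ≤ Q g₁ α₃ s t := by
  apply intervalIntegral.integral_mono_on (by norm_num) (Pu_ii H hs (ht.trans htt'))
    (Pu_ii H hs ht)
  intro u hu
  exact P_anti H hs (by nlinarith [hu.1]) (by nlinarith [hu.1])

theorem Q_eq_of_small {s t : ℝ} (hs : 0 < s) (ht : 0 ≤ t)
    (hsmall : G g₁ t * sSup (α₃ '' Icc 0 (6*s)) ≤ s) : Q g₁ α₃ s t = 3/4 * s := by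
  have : (∫ _u in (1/2:ℝ)..1, 3/2 * s) = 3/4 * s := by
    rw [intervalIntegral.integral_const]; norm_num; ring
  rw [← this]
  apply intervalIntegral.integral_congr
  intro u hu
  rw [uIcc_of_le (by norm_num : (1/2:ℝ) ≤ 1)] at hu
  have htu : 0 ≤ t*u := by nlinarith [hu.1]
  apply P_eq_of_small H hs htu
  have hA : 0 ≤ sSup (α₃ '' Icc 0 (6*s)) :=
    Real.sSup_nonneg (by rintro x ⟨w, hw, rfl⟩; exact H.hα₃nn w hw.1)
  calc G g₁ (t*u) * sSup (α₃ '' Icc 0 (6*s))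
      ≤ G g₁ t * sSup (α₃ '' Icc 0 (6*s)) :=
        mul_le_mul_of_nonneg_right (G_le H htu (by nlinarith [hu.2])) hA
    _ ≤ s := hsmall

theorem Q_tendsto {r : ℝ} (hr : 0 < r) :
    Tendsto (fun t => Q g₁ α₃ r t) atTop (nhds 0) := by
  have hub : ∀ᶠ t in atTop, Q g₁ α₃ r t ≤ h g₁ α₃ (2*r) (t*(1/2)) := by
    filter_upwards [eventually_ge_atTop (0:ℝ)] with t ht
    have hP : ∀ u ∈ Icc (1/2:ℝ) 1, P g₁ α₃ r (t*u) ≤ h g₁ α₃ (2*r) (t*(1/2)) := by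
      intro u hu
      have h1 : P g₁ α₃ r (t*u) ≤ P g₁ α₃ r (t*(1/2)) :=
        P_anti H hr.le (by nlinarith [hu.1]) (by nlinarith [hu.1])
      have h2 : P g₁ α₃ r (t*(1/2)) ≤ 3/2 * r := P_le H hr.le (by nlinarith)
      -- bound P r τ ≤ h (2r) τ : via integral_mono with constant h(2r,τ)
      have h3 : P g₁ α₃ r (t*(1/2)) ≤ h g₁ α₃ (2*r) (t*(1/2)) := by
        have : (∫ _c in (1:ℝ)..2, h g₁ α₃ (2*r) (t*(1/2))) = h g₁ α₃ (2*r) (t*(1/2)) := by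
          rw [intervalIntegral.integral_const]; norm_num
        rw [← this]
        apply intervalIntegral.integral_mono_on (by norm_num)
          (hc_ii H hr.le (by nlinarith)) intervalIntegrable_const
        intro c hc
        exact h_mono H (by nlinarith [hc.1]) (by nlinarith [hc.2]) (by nlinarith)
      exact h1.trans h3
    have : Q g₁ α₃ r t ≤ ∫ _u in (1/2:ℝ)..1, h g₁ α₃ (2*r) (t*(1/2)) := by
      apply intervalIntegral.integral_mono_on (by norm_num) (Pu_ii H hr.le ht)
        intervalIntegrable_const hP
    calc Q g₁ α₃ r t ≤ ∫ _u in (1/2:ℝ)..1, h g₁ α₃ (2*r) (t*(1/2)) := this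
      _ = 1/2 * h g₁ α₃ (2*r) (t*(1/2)) := by
          rw [intervalIntegral.integral_const]; norm_num
      _ ≤ h g₁ α₃ (2*r) (t*(1/2)) := by
          have := h_nonneg (g₁ := g₁) (α₃ := α₃) (by linarith : (0:ℝ) ≤ 2*r) (t*(1/2))
          linarith
  have hlb : ∀ᶠ t in atTop, 0 ≤ Q g₁ α₃ r t := by
    filter_upwards [eventually_ge_atTop (0:ℝ)] with t ht
    exact Q_nonneg H hr.le ht
  have hcomp : Tendsto (fun t : ℝ => h g₁ α₃ (2*r) (t*(1/2))) atTop (nhds 0) := by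
    apply (h_tendsto H (by linarith : (0:ℝ) < 2*r)).comp
    exact Tendsto.atTop_mul_const (by norm_num) tendsto_id
  exact tendsto_of_tendsto_of_tendsto_of_le_of_le' tendsto_const_nhds hcomp hlb hub

/-! ### Lipschitz-type bound in `s` -/

theorem hσ_ii {τ x y : ℝ} (hτ : 0 ≤ τ) (hx : 0 ≤ x) (hy : 0 ≤ y) :
    IntervalIntegrable (fun σ => h g₁ α₃ σ τ) volume x y := by
  apply MonotoneOn.intervalIntegrable
  intro a ha b hb hab
  have ha0 : 0 ≤ a := by
    rcases le_total x y with hxy | hxy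
    · rw [uIcc_of_le hxy] at ha; exact hx.trans ha.1
    · rw [uIcc_of_ge hxy] at ha; exact hy.trans ha.1
  exact h_mono H ha0 hab hτ

omit H in
theorem P_eq {s τ : ℝ} (hs : 0 < s) :
    P g₁ α₃ s τ = s⁻¹ * ∫ σ in s..(2*s), h g₁ α₃ σ τ := by
  unfold P
  rw [intervalIntegral.integral_comp_mul_left (fun σ => h g₁ α₃ σ τ) hs.ne',
    smul_eq_mul, mul_one, mul_comm s 2]

theorem P_sub_le {a b τ : ℝ} (ha : 0 < a) (hab : a ≤ b) (hτ : 0 ≤ τ) :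
    P g₁ α₃ b τ - P g₁ α₃ a τ ≤ 4*b*(b-a)/a := by
  have hb : 0 < b := ha.trans_le hab
  have Rnn : ∀ x y : ℝ, 0 ≤ x → x ≤ y → 0 ≤ ∫ σ in x..y, h g₁ α₃ σ τ := fun x y hx hxy =>
    intervalIntegral.integral_nonneg hxy (fun σ hσ => h_nonneg (hx.trans hσ.1) τ)
  have Rub : (∫ σ in (2*a)..(2*b), h g₁ α₃ σ τ) ≤ (2*b-2*a)*(2*b) := by
    have hconst : (∫ _σ in (2*a)..(2*b), (2*b : ℝ)) = (2*b-2*a)*(2*b) := by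
      rw [intervalIntegral.integral_const, smul_eq_mul]
    rw [← hconst]
    apply intervalIntegral.integral_mono_on (by linarith)
      (hσ_ii H hτ (by linarith) (by linarith)) intervalIntegrable_const
    intro σ hσ
    exact (h_le_self (by linarith [hσ.1]) τ).trans hσ.2
  have s1 : (∫ σ in a..(2*a), h g₁ α₃ σ τ) + (∫ σ in (2*a)..(2*b), h g₁ α₃ σ τ)
      = ∫ σ in a..(2*b), h g₁ α₃ σ τ :=
    intervalIntegral.integral_add_adjacent_intervals
      (hσ_ii H hτ ha.le (by linarith)) (hσ_ii H hτ (by linarith) (by linarith))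
  have s2 : (∫ σ in a..b, h g₁ α₃ σ τ) + (∫ σ in b..(2*b), h g₁ α₃ σ τ)
      = ∫ σ in a..(2*b), h g₁ α₃ σ τ :=
    intervalIntegral.integral_add_adjacent_intervals
      (hσ_ii H hτ ha.le hb.le) (hσ_ii H hτ hb.le (by linarith))
  have hkey : (∫ σ in b..(2*b), h g₁ α₃ σ τ) - (∫ σ in a..(2*a), h g₁ α₃ σ τ)
      ≤ (2*b-2*a)*(2*b) := by
    have h1 := Rnn a b ha.le hab
    linarith
  have hinv : b⁻¹ ≤ a⁻¹ := by
    apply inv_anti₀ ha hab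
  have hRb := Rnn b (2*b) hb.le (by linarith)
  have hRa := Rnn a (2*a) ha.le (by linarith)
  rw [P_eq hb, P_eq ha]
  have step1 : b⁻¹ * (∫ σ in b..(2*b), h g₁ α₃ σ τ) ≤ a⁻¹ * ∫ σ in b..(2*b), h g₁ α₃ σ τ :=
    mul_le_mul_of_nonneg_right hinv hRb
  have step2 : a⁻¹ * ((∫ σ in b..(2*b), h g₁ α₃ σ τ) - ∫ σ in a..(2*a), h g₁ α₃ σ τ)
      ≤ a⁻¹ * ((2*b-2*a)*(2*b)) :=
    mul_le_mul_of_nonneg_left hkey (inv_nonneg.mpr ha.le)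
  have heq : a⁻¹ * ((2*b-2*a)*(2*b)) = 4*b*(b-a)/a := by
    field_simp; ring
  linarith [step1, step2, heq]

theorem Q_sub_le {a b t : ℝ} (ha : 0 < a) (hab : a ≤ b) (ht : 0 ≤ t) :
    Q g₁ α₃ b t - Q g₁ α₃ a t ≤ 2*b*(b-a)/a := by
  have hb : 0 < b := ha.trans_le hab
  have hsub : Q g₁ α₃ b t - Q g₁ α₃ a t
      = ∫ u in (1/2:ℝ)..1, (P g₁ α₃ b (t*u) - P g₁ α₃ a (t*u)) :=
    (intervalIntegral.integral_sub (Pu_ii H hb.le ht) (Pu_ii H ha.le ht)).symm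
  have hconst : (∫ _u in (1/2:ℝ)..1, 4*b*(b-a)/a) = 1/2 * (4*b*(b-a)/a) := by
    rw [intervalIntegral.integral_const, smul_eq_mul]; norm_num
  have hle : (∫ u in (1/2:ℝ)..1, (P g₁ α₃ b (t*u) - P g₁ α₃ a (t*u)))
      ≤ ∫ _u in (1/2:ℝ)..1, 4*b*(b-a)/a := by
    apply intervalIntegral.integral_mono_on (by norm_num)
      ((Pu_ii H hb.le ht).sub (Pu_ii H ha.le ht)) intervalIntegrable_const
    intro u hu
    exact P_sub_le H ha hab (by nlinarith [hu.1])
  rw [hsub]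
  calc (∫ u in (1/2:ℝ)..1, (P g₁ α₃ b (t*u) - P g₁ α₃ a (t*u)))
      ≤ 1/2 * (4*b*(b-a)/a) := by rw [← hconst]; exact hle
    _ = 2*b*(b-a)/a := by ring

/-! ### Continuity of `Q` in `t` -/

theorem Pτ_ii {s x y : ℝ} (hs : 0 ≤ s) (hx : 0 ≤ x) (hy : 0 ≤ y) :
    IntervalIntegrable (fun τ => P g₁ α₃ s τ) volume x y := by
  apply AntitoneOn.intervalIntegrable
  intro a ha b hb hab
  have ha0 : 0 ≤ a := by
    rcases le_total x y with hxy | hxy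
    · rw [uIcc_of_le hxy] at ha; exact hx.trans ha.1
    · rw [uIcc_of_ge hxy] at ha; exact hy.trans ha.1
  exact P_anti H hs ha0 hab

theorem Q_eq_pos {s t : ℝ} (hs : 0 ≤ s) (ht : 0 < t) :
    Q g₁ α₃ s t
      = t⁻¹ * ((∫ τ in (0:ℝ)..t, P g₁ α₃ s τ) - ∫ τ in (0:ℝ)..(t/2), P g₁ α₃ s τ) := by
  unfold Q
  rw [intervalIntegral.integral_comp_mul_left (fun τ => P g₁ α₃ s τ) ht.ne',
    smul_eq_mul, mul_one, mul_one_div]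
  congr 1
  rw [intervalIntegral.integral_interval_sub_left (Pτ_ii H hs le_rfl ht.le)
    (Pτ_ii H hs le_rfl (by linarith))]

theorem Qt_cwa {s t₀ : ℝ} (hs : 0 ≤ s) (ht₀ : 0 ≤ t₀) :
    ContinuousWithinAt (fun t => Q g₁ α₃ s t) (Ici 0) t₀ := by
  rcases eq_or_lt_of_le hs with rfl | hs
  · have hQ : (fun t => Q g₁ α₃ (0:ℝ) t) = fun _ => (0:ℝ) := funext fun t => Q_zero
    rw [hQ]; exact continuousWithinAt_const
  rcases eq_or_lt_of_le ht₀ with rfl | ht₀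
  · obtain ⟨δ, hδ, hδ'⟩ := G_small H hs (sSup (α₃ '' Icc 0 (6*s)))
    have hmem : Icc (0:ℝ) δ ∈ nhdsWithin 0 (Ici 0) := Icc_mem_nhdsGE_of_mem ⟨le_rfl, hδ⟩
    have hcc : ContinuousWithinAt (fun _ : ℝ => 3/4*s) (Ici (0:ℝ)) 0 :=
      continuousWithinAt_const
    refine hcc.congr_of_eventuallyEq ?_ ?_
    · filter_upwards [hmem] with t htm
      exact Q_eq_of_small H hs htm.1 (hδ' t htm)
    · exact Q_eq_of_small H hs le_rfl (hδ' 0 ⟨le_rfl, hδ.le⟩)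
  · set F : ℝ → ℝ := fun x => ∫ τ in (0:ℝ)..x, P g₁ α₃ s τ with hFdef
    have hint : IntegrableOn (fun τ => P g₁ α₃ s τ) (uIcc 0 (t₀+1)) volume := by
      rw [uIcc_of_le (by linarith)]
      apply AntitoneOn.integrableOn_isCompact isCompact_Icc
      intro a ha b hb hab
      exact P_anti H hs.le ha.1 hab
    have hFc : ContinuousOn F (Icc 0 (t₀+1)) := by
      have := intervalIntegral.continuousOn_primitive_interval hint
      rwa [uIcc_of_le (by linarith : (0:ℝ) ≤ t₀+1)] at this
    have h1 : ContinuousAt F t₀ := hFc.continuousAt (Icc_mem_nhds ht₀ (by linarith))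
    have h2 : ContinuousAt (fun t : ℝ => F (t/2)) t₀ := by
      have hF2 : ContinuousAt F (t₀/2) := hFc.continuousAt (Icc_mem_nhds (by linarith) (by linarith))
      have hdiv : ContinuousAt (fun t : ℝ => t/2) t₀ :=
        (continuous_id.div_const (2:ℝ)).continuousAt
      exact (ContinuousAt.comp hF2 hdiv : ContinuousAt (F ∘ fun t : ℝ => t/2) t₀)
    have hCA : ContinuousAt (fun t => t⁻¹ * (F t - F (t/2))) t₀ :=
      (continuousAt_id.inv₀ ht₀.ne').mul (h1.sub h2)
    have heq : (fun t => Q g₁ α₃ s t) =ᶠ[nhds t₀] fun t => t⁻¹ * (F t - F (t/2)) :=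
      eventually_of_mem (Ioi_mem_nhds ht₀) (fun t ht => Q_eq_pos H hs.le ht)
    exact (hCA.congr heq.symm).continuousWithinAt

/-! ### Joint continuity of `Q` -/

theorem Q_joint_cont :
    ContinuousOn (fun p : ℝ × ℝ => Q g₁ α₃ p.1 p.2) (Ici 0 ×ˢ Ici 0) := by
  rintro ⟨s₀, t₀⟩ hp
  have hs₀ : 0 ≤ s₀ := hp.1
  have ht₀ : 0 ≤ t₀ := hp.2
  rcases eq_or_lt_of_le hs₀ with rfl | hs₀'
  · -- squeeze at s₀ = 0
    unfold ContinuousWithinAt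
    have hval : (fun p : ℝ × ℝ => Q g₁ α₃ p.1 p.2) ((0:ℝ), t₀) = 0 := Q_zero
    rw [hval]
    apply squeeze_zero'
    · filter_upwards [self_mem_nhdsWithin] with p hq
      exact Q_nonneg H hq.1 hq.2
    · filter_upwards [self_mem_nhdsWithin] with p hq
      exact Q_le H hq.1 hq.2
    · have : Tendsto (fun p : ℝ × ℝ => 3/4 * p.1) (nhds ((0:ℝ), t₀)) (nhds (3/4 * 0)) :=
        (continuous_const.mul continuous_fst).tendsto _
      rw [mul_zero] at this
      exact this.mono_left nhdsWithin_le_nhds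
  · -- s₀ > 0
    unfold ContinuousWithinAt
    have hD : Tendsto (fun p : ℝ × ℝ => Q g₁ α₃ p.1 p.2 - Q g₁ α₃ s₀ p.2)
        (nhdsWithin (s₀, t₀) (Ici 0 ×ˢ Ici 0)) (nhds 0) := by
      apply squeeze_zero_norm' (a := fun p : ℝ × ℝ => 8 * |p.1 - s₀|)
      · have hball : {p : ℝ × ℝ | |p.1 - s₀| < s₀/2} ∈
            nhdsWithin (s₀, t₀) (Ici 0 ×ˢ Ici 0) := by
          apply nhdsWithin_le_nhds
          have : Continuous fun p : ℝ × ℝ => |p.1 - s₀| :=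
            (continuous_fst.sub continuous_const).abs
          have h0 : |(s₀, t₀).1 - s₀| < s₀/2 := by simp; linarith
          exact this.continuousAt.preimage_mem_nhds (Iio_mem_nhds (by simpa using h0))
        filter_upwards [hball, self_mem_nhdsWithin] with p hpb hpm
        set a := min p.1 s₀ with hadef
        set b := max p.1 s₀ with hbdef
        have habs : |p.1 - s₀| = b - a := by
          rcases le_total p.1 s₀ with hle | hle
          · rw [abs_of_nonpos (by linarith), hadef, hbdef, min_eq_left hle,
              max_eq_right hle]; ring
          · rw [abs_of_nonneg (by linarith), hadef, hbdef, min_eq_right hle,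
              max_eq_left hle]
        have ha : s₀/2 < a := by
          rcases le_total p.1 s₀ with hle | hle
          · rw [hadef, min_eq_left hle]
            obtain ⟨h1, h2⟩ := abs_sub_lt_iff.mp hpb
            linarith
          · rw [hadef, min_eq_right hle]; linarith
        have hb4a : b ≤ 4*a := by
          rcases le_total p.1 s₀ with hle | hle
          · rw [hbdef, max_eq_right hle]; linarith
          · rw [hbdef, max_eq_left hle]
            obtain ⟨h1, h2⟩ := abs_sub_lt_iff.mp hpb
            linarith
        have hab : a ≤ b := min_le_max
        have ht2 : 0 ≤ p.2 := hpm.2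
        have hQab : Q g₁ α₃ b p.2 - Q g₁ α₃ a p.2 ≤ 2*b*(b-a)/a :=
          Q_sub_le H (by linarith) hab ht2
        have hQmono : Q g₁ α₃ a p.2 ≤ Q g₁ α₃ b p.2 := Q_mono H (by linarith) hab ht2
        have habs2 : ‖Q g₁ α₃ p.1 p.2 - Q g₁ α₃ s₀ p.2‖ = Q g₁ α₃ b p.2 - Q g₁ α₃ a p.2 := by
          rcases le_total p.1 s₀ with hle | hle
          · have hmin : a = p.1 := by rw [hadef, min_eq_left hle]
            have hmax : b = s₀ := by rw [hbdef, max_eq_right hle]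
            rw [hmin, hmax, Real.norm_eq_abs, abs_of_nonpos (by
              have := Q_mono H (g₁ := g₁) (α₃ := α₃) (s := p.1) (s' := s₀)
                (by linarith [ha, min_le_left p.1 s₀]) hle ht2
              linarith)]
            ring
          · have hmin : a = s₀ := by rw [hadef, min_eq_right hle]
            have hmax : b = p.1 := by rw [hbdef, max_eq_left hle]
            rw [hmin, hmax, Real.norm_eq_abs, abs_of_nonneg (by
              have := Q_mono H (g₁ := g₁) (α₃ := α₃) (s := s₀) (s' := p.1) hs₀'.le hle ht2
              linarith)]
        rw [habs2]
        calc Q g₁ α₃ b p.2 - Q g₁ α₃ a p.2 ≤ 2*b*(b-a)/a := hQab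
          _ ≤ 8 * (b - a) := by
            rw [div_le_iff₀ (by linarith)]
            nlinarith [min_le_max (a := p.1) (b := s₀)]
          _ = 8 * |p.1 - s₀| := by rw [habs]
      · have : Tendsto (fun p : ℝ × ℝ => 8 * |p.1 - s₀|) (nhds (s₀, t₀))
            (nhds (8 * |s₀ - s₀|)) :=
          (continuous_const.mul (continuous_fst.sub continuous_const).abs).tendsto _
        simp only [sub_self, abs_zero, mul_zero] at this
        exact this.mono_left nhdsWithin_le_nhds
    have hQt : Tendsto (fun p : ℝ × ℝ => Q g₁ α₃ s₀ p.2)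
        (nhdsWithin (s₀, t₀) (Ici 0 ×ˢ Ici 0)) (nhds (Q g₁ α₃ s₀ t₀)) := by
      have hsnd : Tendsto (fun p : ℝ × ℝ => p.2)
          (nhdsWithin (s₀, t₀) (Ici 0 ×ˢ Ici 0)) (nhdsWithin t₀ (Ici 0)) :=
        continuous_snd.continuousWithinAt.tendsto_nhdsWithin (fun p hp => hp.2)
      exact (Qt_cwa H hs₀ ht₀).tendsto.comp hsnd
    have := hD.add hQt
    rw [zero_add] at this
    convert this using 2 with p
    ring

/-! ### The core comparison estimate -/

theorem h_le_B {s t : ℝ} (hs : 0 ≤ s) (ht : 0 ≤ t) : h g₁ α₃ s t ≤ B g₁ α₃ s t := by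
  have h1 := Q_ge_h H hs ht
  have h2 : 0 ≤ s * Real.exp (-t) := mul_nonneg hs (Real.exp_pos _).le
  show h g₁ α₃ s t ≤ s * Real.exp (-t) + 2 * Q g₁ α₃ s t
  linarith

theorem key (T : ℝ) (hT : 0 < T) (y₀ : ℝ) (hy₀ : 0 ≤ y₀) (v : ℝ → ℝ)
    (hv : ContinuousOn v (Icc 0 T)) (hvnn : ∀ t ∈ Icc (0:ℝ) T, 0 ≤ v t)
    (y y' : ℝ → ℝ) (hy0 : y 0 = y₀) (hynn : ∀ t ∈ Icc (0:ℝ) T, 0 ≤ y t)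
    (hy'int : IntegrableOn y' (Icc 0 T))
    (hyeq : ∀ t ∈ Icc (0:ℝ) T, y t = y 0 + ∫ s in (0:ℝ)..t, y' s)
    (hae : ∀ᵐ t ∂(volume.restrict (Icc (0:ℝ) T)), y' t ≤ -g₁ t * α₃ (y t) + v t) :
    ∀ t ∈ Icc (0:ℝ) T, y t - 2 * (∫ s in (0:ℝ)..t, v s) ≤ h g₁ α₃ y₀ t := by
  -- basic integrability facts
  have vii : ∀ a b : ℝ, 0 ≤ a → a ≤ b → b ≤ T → IntervalIntegrable v volume a b := by
    intro a b ha hab hbT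
    apply ContinuousOn.intervalIntegrable
    apply hv.mono
    rw [uIcc_of_le hab]
    exact Icc_subset_Icc ha hbT
  have y'ii : ∀ a b : ℝ, 0 ≤ a → a ≤ b → b ≤ T → IntervalIntegrable y' volume a b := by
    intro a b ha hab hbT
    apply IntegrableOn.intervalIntegrable
    apply hy'int.mono _ le_rfl
    rw [uIcc_of_le hab]
    exact Icc_subset_Icc ha hbT
  have ycont : ContinuousOn y (Icc 0 T) := by
    have hprim : ContinuousOn (fun t => y 0 + ∫ s in (0:ℝ)..t, y' s) (Icc 0 T) := by
      apply continuousOn_const.add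
      have hint : IntegrableOn y' (uIcc 0 T) volume := by
        rw [uIcc_of_le hT.le]; exact hy'int
      have := intervalIntegral.continuousOn_primitive_interval hint
      rwa [uIcc_of_le hT.le] at this
    exact hprim.congr hyeq
  have gαcont : ContinuousOn (fun s => α₃ (y s)) (Icc 0 T) :=
    H.hα₃c.comp ycont (fun s hs => hynn s hs)
  have gαint : IntegrableOn (fun s => α₃ (y s) * g₁ s) (Icc 0 T) := by
    obtain ⟨C, hC⟩ := isCompact_Icc.exists_bound_of_continuousOn gαcont
    exact Integrable.bdd_mul (H.hg₁int T hT)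
      (gαcont.aestronglyMeasurable measurableSet_Icc)
      ((ae_restrict_iff' measurableSet_Icc).mpr (ae_of_all _ hC))
  have gαii : ∀ a b : ℝ, 0 ≤ a → a ≤ b → b ≤ T →
      IntervalIntegrable (fun s => α₃ (y s) * g₁ s) volume a b := by
    intro a b ha hab hbT
    apply IntegrableOn.intervalIntegrable
    apply gαint.mono _ le_rfl
    rw [uIcc_of_le hab]
    exact Icc_subset_Icc ha hbT
  -- the master integral inequality
  have master : ∀ t₁ t₂ : ℝ, 0 ≤ t₁ → t₁ ≤ t₂ → t₂ ≤ T →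
      y t₂ ≤ y t₁ - (∫ s in t₁..t₂, α₃ (y s) * g₁ s) + ∫ s in t₁..t₂, v s := by
    intro t₁ t₂ h1 h12 h2T
    have h1T : t₁ ≤ T := h12.trans h2T
    have h02 : (0:ℝ) ≤ t₂ := h1.trans h12
    have hsub := intervalIntegral.integral_interval_sub_left
      (y'ii 0 t₂ le_rfl h02 h2T) (y'ii 0 t₁ le_rfl h1 h1T)
    have e1 : y t₂ - y t₁ = ∫ s in t₁..t₂, y' s := by
      rw [hyeq t₂ ⟨h02, h2T⟩, hyeq t₁ ⟨h1, h1T⟩]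
      rw [← hsub]; ring
    have hfun : (fun s => -g₁ s * α₃ (y s) + v s)
        = fun s => v s - α₃ (y s) * g₁ s := by funext s; ring
    have e2 : (∫ s in t₁..t₂, y' s) ≤ ∫ s in t₁..t₂, (-g₁ s * α₃ (y s) + v s) := by
      apply intervalIntegral.integral_mono_ae_restrict h12 (y'ii t₁ t₂ h1 h12 h2T)
      · rw [hfun]
        exact (vii t₁ t₂ h1 h12 h2T).sub (gαii t₁ t₂ h1 h12 h2T)
      · exact ae_restrict_of_ae_restrict_of_subset (Icc_subset_Icc h1 h2T) hae
    have e3 : (∫ s in t₁..t₂, (-g₁ s * α₃ (y s) + v s))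
        = (∫ s in t₁..t₂, v s) - ∫ s in t₁..t₂, α₃ (y s) * g₁ s := by
      rw [hfun, intervalIntegral.integral_sub (vii t₁ t₂ h1 h12 h2T)
        (gαii t₁ t₂ h1 h12 h2T)]
    linarith
  -- nonnegativity of the integrals
  have Inn : ∀ t ∈ Icc (0:ℝ) T, 0 ≤ ∫ s in (0:ℝ)..t, v s := by
    intro t htm
    apply intervalIntegral.integral_nonneg htm.1
    intro u hu
    exact hvnn u ⟨hu.1, hu.2.trans htm.2⟩
  have Jnn : ∀ t₁ t₂ : ℝ, 0 ≤ t₁ → t₁ ≤ t₂ → t₂ ≤ T →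
      0 ≤ ∫ s in t₁..t₂, α₃ (y s) * g₁ s := by
    intro t₁ t₂ h1 h12 h2T
    apply intervalIntegral.integral_nonneg h12
    intro u hu
    have hu0 : (0:ℝ) ≤ u := h1.trans hu.1
    exact mul_nonneg (H.hα₃nn _ (hynn u ⟨hu0, hu.2.trans h2T⟩)) (H.hg₁nn u hu0)
  have Isub : ∀ t₁ t₂ : ℝ, 0 ≤ t₁ → t₁ ≤ t₂ → t₂ ≤ T →
      (∫ s in (0:ℝ)..t₂, v s) - (∫ s in (0:ℝ)..t₁, v s) = ∫ s in t₁..t₂, v s := by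
    intro t₁ t₂ h1 h12 h2T
    exact intervalIntegral.integral_interval_sub_left
      (vii 0 t₂ le_rfl (h1.trans h12) h2T) (vii 0 t₁ le_rfl h1 (h12.trans h2T))
  have Vnn : ∀ t₁ t₂ : ℝ, 0 ≤ t₁ → t₁ ≤ t₂ → t₂ ≤ T →
      0 ≤ ∫ s in t₁..t₂, v s := by
    intro t₁ t₂ h1 h12 h2T
    apply intervalIntegral.integral_nonneg h12
    intro u hu
    exact hvnn u ⟨h1.trans hu.1, hu.2.trans h2T⟩
  -- w is nonincreasing
  have wmono : ∀ t₁ t₂ : ℝ, 0 ≤ t₁ → t₁ ≤ t₂ → t₂ ≤ T →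
      y t₂ - 2 * (∫ s in (0:ℝ)..t₂, v s) ≤ y t₁ - 2 * ∫ s in (0:ℝ)..t₁, v s := by
    intro t₁ t₂ h1 h12 h2T
    have hm := master t₁ t₂ h1 h12 h2T
    have hJ := Jnn t₁ t₂ h1 h12 h2T
    have hI := Isub t₁ t₂ h1 h12 h2T
    have hV := Vnn t₁ t₂ h1 h12 h2T
    linarith
  -- refined bound from 0
  have k3 : ∀ τ ∈ Icc (0:ℝ) T, y τ - 2 * (∫ s in (0:ℝ)..τ, v s)
      ≤ y₀ - (∫ s in (0:ℝ)..τ, α₃ (y s) * g₁ s) - ∫ s in (0:ℝ)..τ, v s := by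
    intro τ hτ
    have hm := master 0 τ le_rfl hτ.1 hτ.2
    rw [hy0] at hm
    linarith
  -- conclusion
  intro t ht
  apply le_csInf (S_nonempty y₀ t)
  intro ε hε
  rcases hε with rfl | ⟨hε0, hεy, hcond⟩
  · have := wmono 0 t le_rfl ht.1 ht.2
    rw [intervalIntegral.integral_same, hy0] at this
    linarith
  · by_contra hlt
    push_neg at hlt
    have hwτ : ∀ τ ∈ Icc (0:ℝ) t, ε < y τ - 2 * ∫ s in (0:ℝ)..τ, v s := by
      intro τ hτ
      exact lt_of_lt_of_le hlt (wmono τ t hτ.1 hτ.2 ht.2)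
    have hyτmem : ∀ τ ∈ Icc (0:ℝ) t, y τ ∈ Icc ε (3*y₀) := by
      intro τ hτ
      have hτT : τ ∈ Icc (0:ℝ) T := ⟨hτ.1, hτ.2.trans ht.2⟩
      have h3 := k3 τ hτT
      have hI := Inn τ hτT
      have hJ := Jnn 0 τ le_rfl hτ.1 hτT.2
      have hw := hwτ τ hτ
      constructor
      · linarith
      · linarith
    have hα : ∀ τ ∈ Icc (0:ℝ) t, M α₃ ε y₀ ≤ α₃ (y τ) := fun τ hτ =>
      M_le_mem H hε0 (hyτmem τ hτ)
    have hMnn : 0 ≤ M α₃ ε y₀ := M_nonneg H hε0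
    have hJge : M α₃ ε y₀ * G g₁ t ≤ ∫ s in (0:ℝ)..t, α₃ (y s) * g₁ s := by
      have hmii : IntervalIntegrable (fun s => M α₃ ε y₀ * g₁ s) volume 0 t :=
        (g1ii H le_rfl ht.1).const_mul _
      have hpt : (∫ s in (0:ℝ)..t, M α₃ ε y₀ * g₁ s) ≤ ∫ s in (0:ℝ)..t, α₃ (y s) * g₁ s := by
        apply intervalIntegral.integral_mono_on ht.1 hmii (gαii 0 t le_rfl ht.1 ht.2)
        intro u hu
        exact mul_le_mul_of_nonneg_right (hα u hu) (H.hg₁nn u hu.1)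
      have heq : (∫ s in (0:ℝ)..t, M α₃ ε y₀ * g₁ s) = M α₃ ε y₀ * G g₁ t := by
        rw [intervalIntegral.integral_const_mul]; rfl
      linarith
    have h3 := k3 t ht
    have hI := Inn t ht
    have hw := hwτ t ⟨ht.1, le_rfl⟩
    have : y₀ < G g₁ t * M α₃ ε y₀ := hcond
    nlinarith [hJge]

end Stmt6Aux

/-- Comparison principle with a locally integrable time-varying gain (case `g₂ ≡ 0`):
the estimate holds globally, without smallness restriction. -/
theorem stmt_6 (g₁ α₃ : ℝ → ℝ)
    (hg₁nn : ∀ t ∈ Ici (0:ℝ), 0 ≤ g₁ t)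
    (hg₁int : ∀ T > (0:ℝ), IntegrableOn g₁ (Icc 0 T))
    (hGdiv : Tendsto (fun t => ∫ τ in (0:ℝ)..t, g₁ τ) atTop atTop)
    (hGpos : ∀ s t : ℝ, 0 ≤ s → s < t → 0 < ∫ τ in s..t, g₁ τ)
    (hα₃c : ContinuousOn α₃ (Ici 0)) (hα₃nn : ∀ s ∈ Ici (0:ℝ), 0 ≤ α₃ s)
    (hα₃pos : ∀ s > (0:ℝ), 0 < α₃ s)
    (hα₃C1 : ∃ α₃' : ℝ → ℝ, ContinuousOn α₃' (Ioi 0) ∧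
      ∀ s ∈ Ioi (0:ℝ), HasDerivAt α₃ (α₃' s) s)
    (hα₃Lip : LocallyLipschitzOn (Ici 0) α₃) :
    ∃ β : ℝ → ℝ → ℝ, ClassKL β ∧
      ∀ T > (0:ℝ), ∀ y₀ ≥ (0:ℝ), ∀ v : ℝ → ℝ,
        ContinuousOn v (Icc 0 T) → (∀ t ∈ Icc (0:ℝ) T, 0 ≤ v t) →
        ∀ y y' : ℝ → ℝ,
        y 0 = y₀ →
        (∀ t ∈ Icc (0:ℝ) T, 0 ≤ y t) →
        IsACDeriv T y y' →
        (∀ᵐ t ∂(volume.restrict (Icc (0:ℝ) T)), y' t ≤ -g₁ t * α₃ (y t) + v t) →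
        ∀ t ∈ Icc (0:ℝ) T, y t ≤ β y₀ t + 2 * ∫ s in (0:ℝ)..t, v s := by
  have H : Stmt6Aux.Hyp g₁ α₃ := ⟨hg₁nn, hg₁int, hGdiv, hGpos, hα₃c, hα₃nn, hα₃pos⟩
  clear hα₃C1 hα₃Lip
  refine ⟨Stmt6Aux.B g₁ α₃, ⟨?_, ?_, ?_⟩, ?_⟩
  · -- joint continuity
    have h1 : Continuous fun p : ℝ × ℝ => p.1 * Real.exp (-p.2) :=
      continuous_fst.mul (Real.continuous_exp.comp continuous_snd.neg)
    exact h1.continuousOn.add (continuousOn_const.mul (Stmt6Aux.Q_joint_cont H))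
  · -- class K in the first argument
    intro t ht
    refine ⟨?_, ?_, ?_, ?_⟩
    · have hjoint : ContinuousOn (fun p : ℝ × ℝ => Stmt6Aux.B g₁ α₃ p.1 p.2)
          (Ici 0 ×ˢ Ici 0) := by
        have h1 : Continuous fun p : ℝ × ℝ => p.1 * Real.exp (-p.2) :=
          continuous_fst.mul (Real.continuous_exp.comp continuous_snd.neg)
        exact h1.continuousOn.add (continuousOn_const.mul (Stmt6Aux.Q_joint_cont H))
      have hmk : Continuous fun s : ℝ => (s, t) := continuous_id.prodMk continuous_const
      exact hjoint.comp hmk.continuousOn (fun s hs => ⟨hs, ht⟩)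
    · intro a ha b hb hab
      have hQ : Stmt6Aux.Q g₁ α₃ a t ≤ Stmt6Aux.Q g₁ α₃ b t := Stmt6Aux.Q_mono H ha hab.le ht
      have hexp : a * Real.exp (-t) < b * Real.exp (-t) :=
        mul_lt_mul_of_pos_right hab (Real.exp_pos _)
      show a * Real.exp (-t) + 2 * Stmt6Aux.Q g₁ α₃ a t
        < b * Real.exp (-t) + 2 * Stmt6Aux.Q g₁ α₃ b t
      linarith
    · show (0:ℝ) * Real.exp (-t) + 2 * Stmt6Aux.Q g₁ α₃ 0 t = 0
      rw [Stmt6Aux.Q_zero]; ring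
    · intro s hs
      have hQ : 0 ≤ Stmt6Aux.Q g₁ α₃ s t := Stmt6Aux.Q_nonneg H hs ht
      have hexp : 0 ≤ s * Real.exp (-t) := mul_nonneg hs (Real.exp_pos _).le
      show 0 ≤ s * Real.exp (-t) + 2 * Stmt6Aux.Q g₁ α₃ s t
      linarith
  · -- strictly decreasing and vanishing in time
    intro r hr
    constructor
    · intro t1 h1 t2 h2 hlt
      have hQ : Stmt6Aux.Q g₁ α₃ r t2 ≤ Stmt6Aux.Q g₁ α₃ r t1 :=
        Stmt6Aux.Q_anti H hr.le h1 hlt.le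
      have hexp : r * Real.exp (-t2) < r * Real.exp (-t1) :=
        mul_lt_mul_of_pos_left (Real.exp_lt_exp.mpr (neg_lt_neg hlt)) hr
      show r * Real.exp (-t2) + 2 * Stmt6Aux.Q g₁ α₃ r t2
        < r * Real.exp (-t1) + 2 * Stmt6Aux.Q g₁ α₃ r t1
      linarith
    · have t1 : Tendsto (fun t : ℝ => r * Real.exp (-t)) atTop (nhds (r * 0)) :=
        Real.tendsto_exp_neg_atTop_nhds_zero.const_mul r
      have t2 : Tendsto (fun t : ℝ => 2 * Stmt6Aux.Q g₁ α₃ r t) atTop (nhds (2 * 0)) :=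
        (Stmt6Aux.Q_tendsto H hr).const_mul 2
      have := t1.add t2
      simpa [Stmt6Aux.B] using this
  · -- the comparison estimate
    intro T hT y₀ hy₀ v hv hvnn y y' hy0 hynn hAC hae t ht
    obtain ⟨hy'int, hyeq⟩ := hAC
    have hk := Stmt6Aux.key H T hT y₀ hy₀ v hv hvnn y y' hy0 hynn hy'int hyeq hae t ht
    have hb := Stmt6Aux.h_le_B H hy₀ ht.1
    linarith
end
end

section
/- Let X be a real Banach space and V : [0,∞) × X → [0,∞). Assume: (a) there exist α₁, α₂ of class 𝒦∞ with α₁(‖x‖) ≤ V(t,x) ≤ α₂(‖x‖) for all x ∈ X and t ≥ 0; (b) g₁, g₂ : [0,∞) → [0,∞) are locally integrable with ∫₀^t g₁(τ)dτ → +∞ as t → +∞, ∫_s^t g₁(τ)dτ > 0 whenever 0 ≤ s < t, and g₂(t) ≤ g₁(t) for almost every t ≥ 0; (c) θ₁, θ₂ are of class 𝒦, φ is of class 𝒦, and there exists r′ > 0 such that the function s ↦ θ₁(α₂⁻¹(s)) − θ₂(α₁⁻¹(s)) is nonnegative on [0,r′], positive on (0,r′], continuously differentiable on (0,r′], and locally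 Lipschitz on [0,r′]. Then there exist β of class 𝒦𝓛, σ of class 𝒦∞, and γ of class 𝒦 (one may take σ(s) = α₁⁻¹(2s) and γ(s) = 2φ(s)) such that: for every T > 0, every continuous w : [0,T] → [0,∞), and every continuous x : [0,T] → X for which the function y(t) := V(t, x(t)) is absolutely continuous on [0,T] and satisfies y′(t) ≤ −g₁(t)·θ₁(‖x(t)‖) + g₂(t)·θ₂(‖x(t)‖) + φ(w(t)) for almost every t ∈ [0,T], if α₂(‖x(0)‖) + 2∫₀^T φ(w(s))ds < r′, then ‖x(t)‖ ≤ β(‖x(0)‖, t) + σ(∫₀^t γ(w(s))ds) for all t ∈ [0,T]. -/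
open Set MeasureTheory Filter Topology

noncomputable section

theorem kinv_facts (f finv : ℝ → ℝ) (hf : ClassKInf f)
    (hfi : ∀ s ∈ Ici (0:ℝ), 0 ≤ finv s ∧ f (finv s) = s ∧ finv (f s) = s) :
    finv 0 = 0 ∧ StrictMonoOn finv (Ici 0) ∧ ContinuousOn finv (Ici 0) ∧
      Tendsto finv atTop atTop ∧ (∀ s ∈ Ici (0:ℝ), 0 ≤ f s) := by
  obtain ⟨⟨hfc, hfm, hf0, hfnn⟩, hftop⟩ := hf
  have h0 : finv 0 = 0 := by
    have := (hfi 0 (mem_Ici.2 le_rfl)).2.2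
    rwa [hf0] at this
  have hmono : StrictMonoOn finv (Ici 0) := by
    intro a ha b hb hab
    by_contra h
    push_neg at h
    have h1 : f (finv b) ≤ f (finv a) :=
      hfm.monotoneOn (mem_Ici.2 (hfi b hb).1) (mem_Ici.2 (hfi a ha).1) h
    rw [(hfi a ha).2.1, (hfi b hb).2.1] at h1
    exact absurd h1 (not_le.2 hab)
  -- surjectivity-type fact
  have hsurj : ∀ v : ℝ, 0 ≤ v → finv (f v) = v ∧ 0 ≤ f v := fun v hv =>
    ⟨(hfi v hv).2.2, hfnn v hv⟩
  have hcont : ContinuousOn finv (Ici 0) := by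
    intro a ha
    rcases eq_or_lt_of_le (mem_Ici.1 ha : (0:ℝ) ≤ a) with rfl | hapos
    · -- at 0, continuity from the right within Ici 0
      have : ContinuousWithinAt finv (Ici 0) 0 := by
        refine hmono.continuousWithinAt_right_of_exists_between self_mem_nhdsWithin ?_
        intro b hb
        rw [h0] at hb ⊢
        obtain ⟨v, hv0, hvb⟩ := exists_between hb
        exact ⟨f v, (hsurj v hv0.le).2, by rw [(hsurj v hv0.le).1]; exact ⟨hv0, hvb.le⟩⟩
      exact this
    · -- interior point: full continuity
      have hfinva : 0 < finv a := by
        rcases (hfi a ha).1.lt_or_eq with h | h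
        · exact h
        · exfalso
          have : f (finv a) = a := (hfi a ha).2.1
          rw [← h, hf0] at this
          exact absurd this.symm hapos.ne'
      have : ContinuousAt finv a := by
        refine hmono.continuousAt_of_exists_between (Ici_mem_nhds hapos) ?_ ?_
        · intro b hb
          have hm : max b 0 < finv a := by
            rcases le_total b 0 with h | h
            · simpa [max_eq_right h] using hfinva
            · simpa [max_eq_left h] using hb
          refine ⟨f (max b 0), (hsurj _ (le_max_right _ _)).2, ?_⟩
          rw [(hsurj _ (le_max_right _ _)).1]
          exact ⟨le_max_left _ _, hm⟩
        · intro b hb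
          obtain ⟨v, hv1, hv2⟩ := exists_between hb
          have hv0 : 0 ≤ v := (hfi a ha).1.trans hv1.le
          refine ⟨f v, (hsurj v hv0).2, ?_⟩
          rw [(hsurj v hv0).1]
          exact ⟨hv1, hv2.le⟩
      exact this.continuousWithinAt
  refine ⟨h0, hmono, hcont, ?_, hfnn⟩
  rw [tendsto_atTop_atTop]
  intro M
  refine ⟨f (max M 0), fun s hs => ?_⟩
  have h1 : 0 ≤ f (max M 0) := hfnn _ (mem_Ici.2 (le_max_right _ _))
  have : finv (f (max M 0)) ≤ finv s :=
    hmono.monotoneOn (mem_Ici.2 h1) (mem_Ici.2 (h1.trans hs)) hs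
  rw [(hfi _ (mem_Ici.2 (le_max_right _ _))).2.2] at this
  exact (le_max_left _ _).trans this

set_option maxHeartbeats 2000000 in
/-- LiISS Lyapunov theorem in a Banach space: existence of an LiISS Lyapunov functional
implies the local iISS estimate along trajectories. -/
theorem stmt_7 (X : Type*) [NormedAddCommGroup X] [NormedSpace ℝ X] [CompleteSpace X]
    (V : ℝ → X → ℝ)
    (α₁ α₂ α₁inv α₂inv θ₁ θ₂ φ g₁ g₂ : ℝ → ℝ) (r' : ℝ) (hr' : 0 < r')
    -- (a) sandwich bounds by 𝒦∞ functions
    (hα₁ : ClassKInf α₁) (hα₂ : ClassKInf α₂)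
    (hα₁inv : ∀ s ∈ Ici (0:ℝ), 0 ≤ α₁inv s ∧ α₁ (α₁inv s) = s ∧ α₁inv (α₁ s) = s)
    (hα₂inv : ∀ s ∈ Ici (0:ℝ), 0 ≤ α₂inv s ∧ α₂ (α₂inv s) = s ∧ α₂inv (α₂ s) = s)
    (hV : ∀ t ∈ Ici (0:ℝ), ∀ x : X, α₁ ‖x‖ ≤ V t x ∧ V t x ≤ α₂ ‖x‖)
    -- (b) time-varying gains
    (hg₁nn : ∀ t ∈ Ici (0:ℝ), 0 ≤ g₁ t) (hg₂nn : ∀ t ∈ Ici (0:ℝ), 0 ≤ g₂ t)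
    (hg₁int : ∀ T > (0:ℝ), IntegrableOn g₁ (Icc 0 T))
    (hg₂int : ∀ T > (0:ℝ), IntegrableOn g₂ (Icc 0 T))
    (hGdiv : Tendsto (fun t => ∫ τ in (0:ℝ)..t, g₁ τ) atTop atTop)
    (hGpos : ∀ s t : ℝ, 0 ≤ s → s < t → 0 < ∫ τ in s..t, g₁ τ)
    (hle : ∀ᵐ t ∂(volume.restrict (Ici (0:ℝ))), g₂ t ≤ g₁ t)
    -- (c) comparison functions
    (hθ₁ : ClassK θ₁) (hθ₂ : ClassK θ₂) (hφ : ClassK φ)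
    (hδnn : ∀ s ∈ Icc (0:ℝ) r', 0 ≤ θ₁ (α₂inv s) - θ₂ (α₁inv s))
    (hδpos : ∀ s ∈ Ioc (0:ℝ) r', 0 < θ₁ (α₂inv s) - θ₂ (α₁inv s))
    (hδC1 : ∃ δ' : ℝ → ℝ, ContinuousOn δ' (Ioc 0 r') ∧
      ∀ s ∈ Ioc (0:ℝ) r',
        HasDerivWithinAt (fun s => θ₁ (α₂inv s) - θ₂ (α₁inv s)) (δ' s) (Ioc 0 r') s)
    (hδLip : LocallyLipschitzOn (Icc 0 r') (fun s => θ₁ (α₂inv s) - θ₂ (α₁inv s))) :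
    ∃ β : ℝ → ℝ → ℝ, ∃ σ γ : ℝ → ℝ, ClassKL β ∧ ClassKInf σ ∧ ClassK γ ∧
      ∀ T > (0:ℝ), ∀ w : ℝ → ℝ,
        ContinuousOn w (Icc 0 T) → (∀ t ∈ Icc (0:ℝ) T, 0 ≤ w t) →
        ∀ x : ℝ → X, ContinuousOn x (Icc 0 T) →
        ∀ y' : ℝ → ℝ,
        IsACDeriv T (fun t => V t (x t)) y' →
        (∀ᵐ t ∂(volume.restrict (Icc (0:ℝ) T)),
          y' t ≤ -g₁ t * θ₁ ‖x t‖ + g₂ t * θ₂ ‖x t‖ + φ (w t)) →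
        α₂ ‖x 0‖ + 2 * (∫ s in (0:ℝ)..T, φ (w s)) < r' →
        ∀ t ∈ Icc (0:ℝ) T, ‖x t‖ ≤ β ‖x 0‖ t + σ (∫ s in (0:ℝ)..t, γ (w s)) := by
  obtain ⟨hi1z, hi1m, hi1c, hi1top, hα₁nn⟩ := kinv_facts α₁ α₁inv hα₁ hα₁inv
  obtain ⟨hi2z, hi2m, hi2c, hi2top, hα₂nn⟩ := kinv_facts α₂ α₂inv hα₂ hα₂inv
  -- the decrease-rate function δ and its modulus ρ
  set δ : ℝ → ℝ := fun s => θ₁ (α₂inv s) - θ₂ (α₁inv s) with hδdef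
  have hδcont : ContinuousOn δ (Icc 0 r') := by
    have h2 : ContinuousOn (fun s => θ₁ (α₂inv s)) (Icc 0 r') :=
      hθ₁.1.comp (hi2c.mono (Icc_subset_Ici_self)) fun s hs => (hα₂inv s hs.1).1
    have h1 : ContinuousOn (fun s => θ₂ (α₁inv s)) (Icc 0 r') :=
      hθ₂.1.comp (hi1c.mono (Icc_subset_Ici_self)) fun s hs => (hα₁inv s hs.1).1
    exact h2.sub h1
  set ρ : ℝ → ℝ := fun a => sInf (δ '' Icc a r') with hρdef
  have himne : ∀ a : ℝ, a ≤ r' → (δ '' Icc a r').Nonempty := fun a ha =>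
    ⟨δ r', mem_image_of_mem δ (right_mem_Icc.2 ha)⟩
  have himbdd : ∀ a : ℝ, 0 ≤ a → BddBelow (δ '' Icc a r') := by
    intro a ha
    refine ⟨0, fun v hv => ?_⟩
    obtain ⟨u, hu, rfl⟩ := hv
    exact hδnn u ⟨ha.trans hu.1, hu.2⟩
  have hρnn : ∀ a : ℝ, 0 ≤ a → a ≤ r' → 0 ≤ ρ a := by
    intro a ha har
    refine le_csInf (himne a har) fun v hv => ?_
    obtain ⟨u, hu, rfl⟩ := hv
    exact hδnn u ⟨ha.trans hu.1, hu.2⟩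
  have hρ_le : ∀ a ∈ Ioc (0:ℝ) r', ∀ u ∈ Icc a r', ρ a ≤ δ u := fun a ha u hu =>
    csInf_le (himbdd a ha.1.le) (mem_image_of_mem δ hu)
  have hρpos : ∀ a ∈ Ioc (0:ℝ) r', 0 < ρ a := by
    intro a ha
    obtain ⟨u₀, hu₀, hmin⟩ := (isCompact_Icc (a := a) (b := r')).exists_isMinOn
      (nonempty_Icc.2 ha.2) (hδcont.mono (Icc_subset_Icc ha.1.le le_rfl))
    have h1 : 0 < δ u₀ := hδpos u₀ ⟨ha.1.trans_le hu₀.1, hu₀.2⟩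
    refine h1.trans_le (le_csInf (himne a ha.2) ?_)
    rintro v ⟨u, hu, rfl⟩
    exact hmin hu
  have hρK : ∀ a ∈ Ioc (0:ℝ) r', ρ a ≤ δ r' := fun a ha =>
    csInf_le (himbdd a ha.1.le) (mem_image_of_mem δ (right_mem_Icc.2 ha.2))
  -- the decay envelope N
  haveI hne : Nonempty ↑(Ioc (0:ℝ) r') := ⟨⟨r', hr', le_rfl⟩⟩
  set term : ℝ → ℝ → ℝ → ℝ := fun a c s => max a (max (c - ρ a * s) 0) with htermdef
  set N : ℝ → ℝ → ℝ := fun c s => ⨅ a : Ioc (0:ℝ) r', term a.1 c s with hNdef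
  have htermnn : ∀ a c s, 0 ≤ term a c s := fun a c s =>
    (le_max_right _ _).trans (le_max_right a _)
  have hbdd : ∀ c s, BddBelow (range fun a : Ioc (0:ℝ) r' => term a.1 c s) := by
    intro c s
    refine ⟨0, ?_⟩
    rintro v ⟨a, rfl⟩
    exact htermnn _ _ _
  have hN_le : ∀ c s, ∀ a : Ioc (0:ℝ) r', N c s ≤ term a.1 c s := fun c s a =>
    ciInf_le (hbdd c s) a
  have hle_N : ∀ c s v, (∀ a : Ioc (0:ℝ) r', v ≤ term a.1 c s) → v ≤ N c s := fun c s v h =>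
    le_ciInf h
  have hNnn : ∀ c s, 0 ≤ N c s := fun c s => hle_N c s 0 fun a => htermnn _ _ _
  have hNmono : ∀ s c c', c ≤ c' → N c s ≤ N c' s := by
    intro s c c' hcc
    refine hle_N _ _ _ fun a => (hN_le c s a).trans ?_
    exact max_le_max le_rfl (max_le_max (by linarith) le_rfl)
  have hNanti : ∀ c s s', 0 ≤ s → s ≤ s' → N c s' ≤ N c s := by
    intro c s s' hs hss
    refine hle_N _ _ _ fun a => (hN_le c s' a).trans ?_
    have hρa : 0 ≤ ρ a.1 := (hρpos a.1 a.2).le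
    exact max_le_max le_rfl (max_le_max (by nlinarith) le_rfl)
  have hNzero : ∀ s, 0 ≤ s → N 0 s = 0 := by
    intro s hs
    refine le_antisymm ?_ (hNnn 0 s)
    refine le_of_forall_pos_le_add ?_
    intro ε hε
    have hmem : min ε r' ∈ Ioc (0:ℝ) r' := ⟨lt_min hε hr', min_le_right _ _⟩
    have h1 := hN_le 0 s ⟨min ε r', hmem⟩
    have hρa : 0 ≤ ρ (min ε r') := (hρpos _ hmem).le
    have h2 : term (min ε r') 0 s = min ε r' := by
      have : (0:ℝ) - ρ (min ε r') * s ≤ 0 := by nlinarith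
      simp only [htermdef]
      rw [max_eq_right this, max_eq_left hmem.1.le]
    rw [h2] at h1
    calc N 0 s ≤ min ε r' := h1
    _ ≤ ε := min_le_left _ _
    _ ≤ 0 + ε := by linarith
  -- Lipschitz-type continuity of N
  have hδr : 0 < δ r' := hδpos r' ⟨hr', le_rfl⟩
  have hNlip : ∀ c c' s s', N c s ≤ N c' s' + (|c - c'| + δ r' * |s - s'|) := by
    intro c c' s s'
    set E := |c - c'| + δ r' * |s - s'| with hEdef
    have hEnn : 0 ≤ E := add_nonneg (abs_nonneg _) (mul_nonneg hδr.le (abs_nonneg _))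
    have key : ∀ a : Ioc (0:ℝ) r', N c s - E ≤ term a.1 c' s' := by
      intro a
      have hρa0 : 0 ≤ ρ a.1 := (hρpos a.1 a.2).le
      have hρaK : ρ a.1 ≤ δ r' := hρK a.1 a.2
      have hu : c - ρ a.1 * s ≤ (c' - ρ a.1 * s') + E := by
        have h2 : ρ a.1 * (s' - s) ≤ ρ a.1 * |s - s'| :=
          mul_le_mul_of_nonneg_left (by rw [abs_sub_comm]; exact le_abs_self _) hρa0
        have h3 : ρ a.1 * |s - s'| ≤ δ r' * |s - s'| :=
          mul_le_mul_of_nonneg_right hρaK (abs_nonneg _)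
        have h4 := le_abs_self (c - c')
        simp only [hEdef]
        nlinarith
      have hmax1 : max (c - ρ a.1 * s) 0 ≤ max (c' - ρ a.1 * s') 0 + E := by
        rcases le_total (c - ρ a.1 * s) 0 with h | h
        · rw [max_eq_right h]
          have := le_max_right (c' - ρ a.1 * s') 0
          linarith
        · rw [max_eq_left h]
          exact hu.trans (add_le_add (le_max_left _ _) le_rfl)
      have hterm : term a.1 c s ≤ term a.1 c' s' + E := by
        simp only [htermdef]
        calc max a.1 (max (c - ρ a.1 * s) 0)
            ≤ max a.1 (max (c' - ρ a.1 * s') 0 + E) := max_le_max le_rfl hmax1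
          _ ≤ max (a.1 + E) (max (c' - ρ a.1 * s') 0 + E) :=
              max_le_max (le_add_of_nonneg_right hEnn) le_rfl
          _ = max a.1 (max (c' - ρ a.1 * s') 0) + E := max_add_add_right _ _ _
      have := (hN_le c s a).trans hterm
      linarith
    have := le_ciInf key
    have h5 : N c s - E ≤ N c' s' := this
    linarith
  have hNcont : Continuous fun p : ℝ × ℝ => N p.1 p.2 := by
    have hlip : LipschitzWith ⟨1 + δ r', by positivity⟩ (fun p : ℝ × ℝ => N p.1 p.2) := by
      refine LipschitzWith.of_dist_le_mul fun p q => ?_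
      have hd1 : |p.1 - q.1| ≤ dist p q := by
        rw [Prod.dist_eq, ← Real.dist_eq]; exact le_max_left _ _
      have hd2 : |p.2 - q.2| ≤ dist p q := by
        rw [Prod.dist_eq, ← Real.dist_eq]; exact le_max_right _ _
      have h1 := hNlip p.1 q.1 p.2 q.2
      have h2 := hNlip q.1 p.1 q.2 p.2
      rw [abs_sub_comm q.1 p.1, abs_sub_comm q.2 p.2] at h2
      have h3 : δ r' * |p.2 - q.2| ≤ δ r' * dist p q := mul_le_mul_of_nonneg_left hd2 hδr.le
      rw [Real.dist_eq]
      change _ ≤ (1 + δ r') * dist p q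
      rw [abs_sub_le_iff]
      constructor <;> nlinarith
    exact hlip.continuous
  have hNlim : ∀ c, Tendsto (fun s => N c s) atTop (nhds 0) := by
    intro c
    rw [Metric.tendsto_atTop]
    intro ε hε
    have hmem : min (ε/2) r' ∈ Ioc (0:ℝ) r' := ⟨lt_min (half_pos hε) hr', min_le_right _ _⟩
    have hρa := hρpos _ hmem
    refine ⟨max c 0 / ρ (min (ε/2) r'), fun s hs => ?_⟩
    have h0 : max c 0 ≤ s * ρ (min (ε/2) r') := (div_le_iff₀ hρa).1 hs
    have h1 : c - ρ (min (ε/2) r') * s ≤ 0 := by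
      have := le_max_left c 0
      nlinarith
    have h2 := hN_le c s ⟨min (ε/2) r', hmem⟩
    have h3 : term (min (ε/2) r') c s = min (ε/2) r' := by
      simp only [htermdef]
      rw [max_eq_right h1, max_eq_left hmem.1.le]
    rw [Real.dist_eq, sub_zero, abs_of_nonneg (hNnn c s)]
    calc N c s ≤ min (ε/2) r' := h3 ▸ h2
      _ ≤ ε/2 := min_le_left _ _
      _ < ε := half_lt_self hε
  -- the function G
  set G : ℝ → ℝ := fun t => ∫ τ in (0:ℝ)..t, g₁ τ with hGdef
  have hg₁ii : ∀ u v : ℝ, 0 ≤ u → u ≤ v → IntervalIntegrable g₁ volume u v := by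
    intro u v hu huv
    rcases eq_or_lt_of_le huv with rfl | huv'
    · exact IntervalIntegrable.refl
    · have hv : 0 < v := hu.trans_lt huv'
      rw [intervalIntegrable_iff_integrableOn_Ioc_of_le huv]
      exact (hg₁int v hv).mono (fun z hz => ⟨hu.trans hz.1.le, hz.2⟩) le_rfl
  have hGmono : ∀ u v : ℝ, 0 ≤ u → u ≤ v → G u ≤ G v := by
    intro u v hu huv
    have h1 := intervalIntegral.integral_add_adjacent_intervals
      (hg₁ii 0 u le_rfl hu) (hg₁ii u v hu huv)
    have h2 : 0 ≤ ∫ τ in u..v, g₁ τ :=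
      intervalIntegral.integral_nonneg huv fun z hz => hg₁nn z (hu.trans hz.1)
    simp only [hGdef]
    linarith
  have hGnn : ∀ t : ℝ, 0 ≤ t → 0 ≤ G t := by
    intro t ht
    have := hGmono 0 t le_rfl ht
    simpa [hGdef, intervalIntegral.integral_same] using this
  have hGcont : ContinuousOn G (Ici 0) := by
    intro a ha
    have ha0 : (0:ℝ) ≤ a := ha
    have hmem : Icc (0:ℝ) (a+1) ∈ 𝓝[Ici 0] a := by
      refine mem_nhdsWithin.2 ⟨Iio (a+1), isOpen_Iio, lt_add_one a, ?_⟩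
      rintro z ⟨hz1, hz2⟩
      exact ⟨hz2, hz1.le⟩
    have hc : ContinuousOn (fun t => ∫ τ in Ioc 0 t, g₁ τ) (Icc 0 (a+1)) :=
      intervalIntegral.continuousOn_primitive (hg₁int (a+1) (by linarith))
    have hc2 : ContinuousOn G (Icc 0 (a+1)) := by
      refine hc.congr fun t ht => ?_
      simp only [hGdef]
      exact intervalIntegral.integral_of_le ht.1
    exact (hc2 a ⟨ha0, by linarith⟩).mono_of_mem_nhdsWithin hmem
  -- the three comparison functions
  refine ⟨fun r t => α₁inv (2 * N (α₂ r) (G t)) + r / (1 + t), fun s => α₁inv (2 * s), φ,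
    ?_, ?_, hφ, ?_⟩
  · -- ClassKL β
    have hα₂m : MonotoneOn α₂ (Ici 0) := hα₂.1.2.1.monotoneOn
    have hi1mm : MonotoneOn α₁inv (Ici 0) := hi1m.monotoneOn
    refine ⟨?_, ?_, ?_⟩
    · -- joint continuity
      have hpair : ContinuousOn (fun p : ℝ × ℝ => (α₂ p.1, G p.2)) (Ici 0 ×ˢ Ici 0) :=
        ContinuousOn.prodMk (hα₂.1.1.comp continuousOn_fst fun p hp => hp.1)
          (hGcont.comp continuousOn_snd fun p hp => hp.2)
      have h1 : ContinuousOn (fun p : ℝ × ℝ => N (α₂ p.1) (G p.2)) (Ici 0 ×ˢ Ici 0) :=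
        hNcont.comp_continuousOn hpair
      have h2 : ContinuousOn (fun p : ℝ × ℝ => α₁inv (2 * N (α₂ p.1) (G p.2)))
          (Ici 0 ×ˢ Ici 0) := by
        refine hi1c.comp (continuousOn_const.mul h1) fun p _ => ?_
        exact mul_nonneg (by norm_num) (hNnn _ _)
      have h3 : ContinuousOn (fun p : ℝ × ℝ => p.1 / (1 + p.2)) (Ici 0 ×ˢ Ici 0) := by
        refine ContinuousOn.div continuousOn_fst (continuousOn_const.add continuousOn_snd)
          fun p hp => ?_
        have : (0:ℝ) ≤ p.2 := hp.2
        intro h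
        linarith
      exact h2.add h3
    · -- ClassK in the first variable
      intro t ht
      have ht' : (0:ℝ) ≤ t := ht
      have hNc1 : Continuous (fun c => N c (G t)) :=
        hNcont.comp (continuous_id.prodMk continuous_const)
      refine ⟨?_, ?_, ?_, ?_⟩
      · have h1 : ContinuousOn (fun r => N (α₂ r) (G t)) (Ici 0) :=
          hNc1.comp_continuousOn hα₂.1.1
        have h2 : ContinuousOn (fun r => α₁inv (2 * N (α₂ r) (G t))) (Ici 0) := by
          refine hi1c.comp (continuousOn_const.mul h1) fun r _ => ?_
          exact mul_nonneg (by norm_num) (hNnn _ _)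
        exact h2.add ((continuous_id.div_const (1 + t)).continuousOn)
      · intro r1 hr1 r2 hr2 h12
        have ha : α₂ r1 ≤ α₂ r2 := hα₂m hr1 hr2 h12.le
        have hb : N (α₂ r1) (G t) ≤ N (α₂ r2) (G t) := hNmono _ _ _ ha
        have hc : α₁inv (2 * N (α₂ r1) (G t)) ≤ α₁inv (2 * N (α₂ r2) (G t)) :=
          hi1mm (mem_Ici.2 (mul_nonneg (by norm_num) (hNnn _ _)))
            (mem_Ici.2 (mul_nonneg (by norm_num) (hNnn _ _))) (by linarith)
        have hd : r1 / (1 + t) < r2 / (1 + t) := by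
          apply div_lt_div_of_pos_right h12
          linarith
        exact add_lt_add_of_le_of_lt hc hd
      · simp [hα₂.1.2.2.1, hNzero _ (hGnn t ht'), hi1z]
      · intro r hr
        refine add_nonneg ((hα₁inv _ (mem_Ici.2 (mul_nonneg (by norm_num) (hNnn _ _)))).1)
          (div_nonneg hr (by linarith))
    · -- decay in time
      intro r hrpos
      constructor
      · intro t1 ht1 t2 ht2 h12
        have hG12 : G t1 ≤ G t2 := hGmono t1 t2 ht1 h12.le
        have hb : N (α₂ r) (G t2) ≤ N (α₂ r) (G t1) := hNanti _ _ _ (hGnn t1 ht1) hG12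
        have hc : α₁inv (2 * N (α₂ r) (G t2)) ≤ α₁inv (2 * N (α₂ r) (G t1)) :=
          hi1mm (mem_Ici.2 (mul_nonneg (by norm_num) (hNnn _ _)))
            (mem_Ici.2 (mul_nonneg (by norm_num) (hNnn _ _))) (by linarith)
        have hd : r / (1 + t2) < r / (1 + t1) := by
          apply div_lt_div_of_pos_left hrpos
          · have : (0:ℝ) ≤ t1 := ht1
            linarith
          · exact (by linarith : (1:ℝ) + t1 < 1 + t2)
        exact add_lt_add_of_le_of_lt hc hd
      · have l1 : Tendsto (fun t => N (α₂ r) (G t)) atTop (nhds 0) :=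
          (hNlim (α₂ r)).comp hGdiv
        have l2 : Tendsto (fun t => 2 * N (α₂ r) (G t)) atTop (nhds 0) := by
          simpa using l1.const_mul 2
        have l3 : Tendsto (fun t => 2 * N (α₂ r) (G t)) atTop (𝓝[Ici 0] 0) :=
          tendsto_nhdsWithin_of_tendsto_nhds_of_eventually_within _ l2
            (Eventually.of_forall fun t => mem_Ici.2 (mul_nonneg (by norm_num) (hNnn _ _)))
        have l4 : Tendsto (fun t => α₁inv (2 * N (α₂ r) (G t))) atTop (nhds 0) := by
          have h := (hi1c 0 (mem_Ici.2 le_rfl)).tendsto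
          rw [hi1z] at h
          exact h.comp l3
        have l5 : Tendsto (fun t => r / (1 + t)) atTop (nhds 0) :=
          Tendsto.div_atTop tendsto_const_nhds (tendsto_atTop_add_const_left _ 1 tendsto_id)
        simpa using l4.add l5
  · -- ClassKInf σ
    refine ⟨⟨?_, ?_, ?_, ?_⟩, ?_⟩
    · refine hi1c.comp ((continuous_const.mul continuous_id).continuousOn) fun s hs => ?_
      exact mem_Ici.2 (mul_nonneg (by norm_num) hs)
    · intro a ha b hb hab
      exact hi1m (mem_Ici.2 (mul_nonneg (by norm_num) ha))
        (mem_Ici.2 (mul_nonneg (by norm_num) hb)) (by linarith)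
    · norm_num [hi1z]
    · intro s hs
      exact (hα₁inv _ (mem_Ici.2 (mul_nonneg (by norm_num) hs))).1
    · exact hi1top.comp (Tendsto.const_mul_atTop two_pos tendsto_id)
  · -- main estimate
    intro T hT w hwcont hwnn x hxcont y' hAC hae hsmall
    obtain ⟨hy'int, hyrep⟩ := hAC
    set y : ℝ → ℝ := fun t => V t (x t) with hydef
    set c₀ : ℝ := α₂ ‖x 0‖ with hc₀def
    set Φ : ℝ → ℝ := fun t => ∫ s in (0:ℝ)..t, φ (w s) with hΦdef
    -- basic facts about Φ
    have hφw_cont : ContinuousOn (fun s => φ (w s)) (Icc 0 T) :=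
      hφ.1.comp hwcont fun s hs => mem_Ici.2 (hwnn s hs)
    have hφw_int : IntegrableOn (fun s => φ (w s)) (Icc 0 T) :=
      hφw_cont.integrableOn_compact isCompact_Icc
    have hφw_ii : ∀ u v : ℝ, 0 ≤ u → u ≤ v → v ≤ T →
        IntervalIntegrable (fun s => φ (w s)) volume u v := by
      intro u v hu huv hv
      rw [intervalIntegrable_iff_integrableOn_Ioc_of_le huv]
      exact hφw_int.mono_set fun z hz => ⟨hu.trans hz.1.le, hz.2.trans hv⟩
    have hΦeq : ∀ u v : ℝ, 0 ≤ u → u ≤ v → v ≤ T →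
        Φ v - Φ u = ∫ s in u..v, φ (w s) := by
      intro u v hu huv hv
      have h := intervalIntegral.integral_add_adjacent_intervals
        (hφw_ii 0 u le_rfl hu (huv.trans hv)) (hφw_ii u v hu huv hv)
      simp only [hΦdef]
      linarith
    have hΦ0 : Φ 0 = 0 := intervalIntegral.integral_same
    have hΦ2 : ∀ u v : ℝ, 0 ≤ u → u ≤ v → v ≤ T → Φ u ≤ Φ v := by
      intro u v hu huv hv
      have h1 := hΦeq u v hu huv hv
      have h2 : 0 ≤ ∫ s in u..v, φ (w s) :=
        intervalIntegral.integral_nonneg huv fun z hz =>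
          hφ.2.2.2 _ (mem_Ici.2 (hwnn z ⟨hu.trans hz.1, hz.2.trans hv⟩))
      linarith
    have hΦnn : ∀ t ∈ Icc (0:ℝ) T, 0 ≤ Φ t := by
      intro t htm
      have h := hΦ2 0 t le_rfl htm.1 htm.2
      rwa [hΦ0] at h
    have hΦTnn : 0 ≤ Φ T := hΦnn T ⟨hT.le, le_rfl⟩
    have hΦcont : ContinuousOn Φ (Icc 0 T) := by
      have h := intervalIntegral.continuousOn_primitive_interval
        (f := fun s => φ (w s)) (a := 0) (b := T) (μ := volume)
        (by rw [uIcc_of_le hT.le]; exact hφw_int)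
      rw [uIcc_of_le hT.le] at h
      exact h
    -- basic facts about y
    have hy'ii : ∀ u v : ℝ, 0 ≤ u → u ≤ v → v ≤ T →
        IntervalIntegrable y' volume u v := by
      intro u v hu huv hv
      rw [intervalIntegrable_iff_integrableOn_Ioc_of_le huv]
      exact hy'int.mono_set fun z hz => ⟨hu.trans hz.1.le, hz.2.trans hv⟩
    have hydiff : ∀ u v : ℝ, 0 ≤ u → u ≤ v → v ≤ T →
        y v - y u = ∫ s in u..v, y' s := by
      intro u v hu huv hv
      have h := intervalIntegral.integral_add_adjacent_intervals
        (hy'ii 0 u le_rfl hu (huv.trans hv)) (hy'ii u v hu huv hv)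
      have h1 := hyrep u ⟨hu, huv.trans hv⟩
      have h2 := hyrep v ⟨hu.trans huv, hv⟩
      simp only [hydef] at h1 h2 ⊢
      linarith
    have hycont : ContinuousOn y (Icc 0 T) := by
      have hprim : ContinuousOn (fun t => ∫ s in (0:ℝ)..t, y' s) (Icc 0 T) := by
        have h := intervalIntegral.continuousOn_primitive_interval
          (f := y') (a := 0) (b := T) (μ := volume) (by rw [uIcc_of_le hT.le]; exact hy'int)
        rw [uIcc_of_le hT.le] at h
        exact h
      exact (continuousOn_const.add hprim).congr fun t htm => hyrep t htm
    have hynn : ∀ t ∈ Icc (0:ℝ) T, 0 ≤ y t := fun t htm =>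
      le_trans (hα₁nn _ (mem_Ici.2 (norm_nonneg _))) (hV t (mem_Ici.2 htm.1) (x t)).1
    have hy0c₀ : y 0 ≤ c₀ := (hV 0 (mem_Ici.2 le_rfl) (x 0)).2
    have hy0nn : 0 ≤ y 0 := hynn 0 ⟨le_rfl, hT.le⟩
    -- integrability of the dissipation term
    have hδg_ii : ∀ u v : ℝ, u ∈ Icc (0:ℝ) T → v ∈ Icc (0:ℝ) T → u ≤ v →
        (∀ τ ∈ Icc u v, y τ ≤ r') →
        IntervalIntegrable (fun τ => δ (y τ) * g₁ τ) volume u v := by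
      intro u v hu hv huv hyr
      have hsub : Icc u v ⊆ Icc (0:ℝ) T := Icc_subset_Icc hu.1 hv.2
      have hδycont : ContinuousOn (fun τ => δ (y τ)) (Icc u v) :=
        hδcont.comp (hycont.mono hsub) fun τ hτ => ⟨hynn τ (hsub hτ), hyr τ hτ⟩
      obtain ⟨C, hC⟩ := isCompact_Icc.exists_bound_of_continuousOn hδycont
      have hmeas : AEStronglyMeasurable (fun τ => δ (y τ))
          (volume.restrict (Icc u v)) := hδycont.aestronglyMeasurable measurableSet_Icc
      have hg₁uv : IntegrableOn g₁ (Icc u v) := (hg₁int T hT).mono_set hsub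
      have hbound : ∀ᵐ τ ∂(volume.restrict (Icc u v)), ‖δ (y τ)‖ ≤ C :=
        (ae_restrict_mem measurableSet_Icc).mono fun τ hτ => hC τ hτ
      have hint1 : IntegrableOn (fun τ => δ (y τ) * g₁ τ) (Icc u v) :=
        Integrable.bdd_mul hg₁uv hmeas hbound
      rw [intervalIntegrable_iff_integrableOn_Ioc_of_le huv]
      exact hint1.mono_set Ioc_subset_Icc_self
    -- the core differential inequality in integral form
    have core : ∀ u v : ℝ, u ∈ Icc (0:ℝ) T → v ∈ Icc (0:ℝ) T → u ≤ v →
        (∀ τ ∈ Icc u v, y τ ≤ r') →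
        y v + (∫ τ in u..v, δ (y τ) * g₁ τ) ≤ y u + (Φ v - Φ u) := by
      intro u v hu hv huv hyr
      have hsub : Icc u v ⊆ Icc (0:ℝ) T := Icc_subset_Icc hu.1 hv.2
      have hδgii := hδg_ii u v hu hv huv hyr
      have haeuv : ∀ᵐ τ ∂(volume.restrict (Icc u v)),
          y' τ ≤ -(δ (y τ) * g₁ τ) + φ (w τ) := by
        have h1 : ∀ᵐ τ ∂(volume.restrict (Icc u v)),
            y' τ ≤ -g₁ τ * θ₁ ‖x τ‖ + g₂ τ * θ₂ ‖x τ‖ + φ (w τ) :=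
          hae.filter_mono (ae_mono (Measure.restrict_mono hsub le_rfl))
        have h2 : ∀ᵐ τ ∂(volume.restrict (Icc u v)), g₂ τ ≤ g₁ τ :=
          hle.filter_mono (ae_mono (Measure.restrict_mono
            (hsub.trans (Icc_subset_Ici_self)) le_rfl))
        have h3 : ∀ᵐ τ ∂(volume.restrict (Icc u v)), τ ∈ Icc u v :=
          ae_restrict_mem measurableSet_Icc
        filter_upwards [h1, h2, h3] with τ hb1 hb2 hτ
        have hτT : τ ∈ Icc (0:ℝ) T := hsub hτ
        have hτ0 : (0:ℝ) ≤ τ := hτT.1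
        have hxτ : (0:ℝ) ≤ ‖x τ‖ := norm_nonneg _
        have hy1 : α₁ ‖x τ‖ ≤ y τ := (hV τ (mem_Ici.2 hτ0) (x τ)).1
        have hy2 : y τ ≤ α₂ ‖x τ‖ := (hV τ (mem_Ici.2 hτ0) (x τ)).2
        have hyτ0 : 0 ≤ y τ := hynn τ hτT
        have e1 : ‖x τ‖ ≤ α₁inv (y τ) := by
          have h := hi1m.monotoneOn (mem_Ici.2 (hα₁nn _ (mem_Ici.2 hxτ)))
            (mem_Ici.2 hyτ0) hy1
          rwa [(hα₁inv ‖x τ‖ (mem_Ici.2 hxτ)).2.2] at h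
        have e2 : α₂inv (y τ) ≤ ‖x τ‖ := by
          have h := hi2m.monotoneOn (mem_Ici.2 hyτ0)
            (mem_Ici.2 (hα₂nn _ (mem_Ici.2 hxτ))) hy2
          rwa [(hα₂inv ‖x τ‖ (mem_Ici.2 hxτ)).2.2] at h
        have e3 : θ₁ (α₂inv (y τ)) ≤ θ₁ ‖x τ‖ :=
          hθ₁.2.1.monotoneOn (mem_Ici.2 (hα₂inv _ (mem_Ici.2 hyτ0)).1) (mem_Ici.2 hxτ) e2
        have e4 : θ₂ ‖x τ‖ ≤ θ₂ (α₁inv (y τ)) :=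
          hθ₂.2.1.monotoneOn (mem_Ici.2 hxτ)
            (mem_Ici.2 (hα₁inv _ (mem_Ici.2 hyτ0)).1) e1
        have hg1τ : 0 ≤ g₁ τ := hg₁nn τ (mem_Ici.2 hτ0)
        have hg2τ : 0 ≤ g₂ τ := hg₂nn τ (mem_Ici.2 hτ0)
        have e5 : -g₁ τ * θ₁ ‖x τ‖ ≤ -g₁ τ * θ₁ (α₂inv (y τ)) := by nlinarith
        have e6 : g₂ τ * θ₂ ‖x τ‖ ≤ g₁ τ * θ₂ (α₁inv (y τ)) := by
          have h7 : 0 ≤ θ₂ (α₁inv (y τ)) :=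
            hθ₂.2.2.2 _ (mem_Ici.2 (hα₁inv _ (mem_Ici.2 hyτ0)).1)
          have h8 : 0 ≤ θ₂ ‖x τ‖ := hθ₂.2.2.2 _ (mem_Ici.2 hxτ)
          nlinarith
        have e7 : δ (y τ) * g₁ τ =
            g₁ τ * θ₁ (α₂inv (y τ)) - g₁ τ * θ₂ (α₁inv (y τ)) := by
          simp only [hδdef]
          ring
        linarith
      have hneg : IntervalIntegrable (fun τ => -(δ (y τ) * g₁ τ)) volume u v := by
        exact hδgii.neg
      have hg : IntervalIntegrable (fun τ => -(δ (y τ) * g₁ τ) + φ (w τ)) volume u v :=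
        hneg.add (hφw_ii u v hu.1 huv hv.2)
      have hmono := intervalIntegral.integral_mono_ae_restrict huv
        (hy'ii u v hu.1 huv hv.2) hg haeuv
      have hsplit : (∫ τ in u..v, (-(δ (y τ) * g₁ τ) + φ (w τ))) =
          -(∫ τ in u..v, δ (y τ) * g₁ τ) + (Φ v - Φ u) := by
        rw [intervalIntegral.integral_add hneg (hφw_ii u v hu.1 huv hv.2),
          intervalIntegral.integral_neg, hΦeq u v hu.1 huv hv.2]
      have hyd := hydiff u v hu.1 huv hv.2
      rw [hsplit] at hmono
      linarith
    -- invariance: y stays below y 0 + Φ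
    have hsmall' : y 0 + Φ T < r' := by
      simp only [hΦdef] at hsmall ⊢
      linarith
    have hinv : ∀ t ∈ Icc (0:ℝ) T, y t ≤ y 0 + Φ t := by
      set S : Set ℝ := {t | t ∈ Icc (0:ℝ) T ∧ ∀ τ ∈ Icc (0:ℝ) t, y τ ≤ y 0 + Φ τ} with hSdef
      have h0S : (0:ℝ) ∈ S := by
        refine ⟨⟨le_rfl, hT.le⟩, fun τ hτ => ?_⟩
        have hτ0 : τ = 0 := le_antisymm hτ.2 hτ.1
        rw [hτ0, hΦ0]
        linarith
      have hSne : S.Nonempty := ⟨0, h0S⟩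
      have hSbdd : BddAbove S := ⟨T, fun z hz => hz.1.2⟩
      set c := sSup S with hcdef
      have hc0 : 0 ≤ c := le_csSup hSbdd h0S
      have hcT : c ≤ T := csSup_le hSne fun z hz => hz.1.2
      have hIco : ∀ τ ∈ Ico (0:ℝ) c, y τ ≤ y 0 + Φ τ := by
        intro τ hτ
        obtain ⟨z, hzS, hz⟩ := exists_lt_of_lt_csSup hSne hτ.2
        exact hzS.2 τ ⟨hτ.1, hz.le⟩
      have hcc : y c ≤ y 0 + Φ c := by
        rcases eq_or_lt_of_le hc0 with hc0' | hcpos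
        · rw [← hc0', hΦ0]
          linarith
        · have hclos : c ∈ closure (Ico (0:ℝ) c) := by
            rw [closure_Ico (ne_of_lt hcpos)]
            exact ⟨hc0, le_rfl⟩
          have hne2 : (𝓝[Ico (0:ℝ) c] c).NeBot := mem_closure_iff_nhdsWithin_neBot.1 hclos
          have hsub2 : Ico (0:ℝ) c ⊆ Icc (0:ℝ) T := fun z hz => ⟨hz.1, hz.2.le.trans hcT⟩
          have hlim : Tendsto (fun τ => y τ - (y 0 + Φ τ)) (𝓝[Ico (0:ℝ) c] c)
              (𝓝 (y c - (y 0 + Φ c))) := by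
            have hcpa : ContinuousOn (fun τ => y 0 + Φ τ) (Icc (0:ℝ) T) :=
              continuousOn_const.add hΦcont
            have hct := (hycont.sub hcpa) c ⟨hc0, hcT⟩
            exact hct.mono hsub2
          have hev : ∀ᶠ τ in 𝓝[Ico (0:ℝ) c] c, y τ - (y 0 + Φ τ) ≤ 0 :=
            eventually_mem_nhdsWithin.mono fun τ hτ => sub_nonpos.2 (hIco τ hτ)
          have hfin := le_of_tendsto hlim hev
          linarith
      have hcS : c ∈ S := by
        refine ⟨⟨hc0, hcT⟩, fun τ hτ => ?_⟩
        rcases lt_or_eq_of_le hτ.2 with h | h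
        · exact hIco τ ⟨hτ.1, h⟩
        · rw [h]
          exact hcc
      have hcT' : c = T := by
        by_contra hnect
        have hcltT : c < T := lt_of_le_of_ne hcT hnect
        have hΦcT : Φ c ≤ Φ T := hΦ2 c T hc0 hcT le_rfl
        have hycr : y c < r' := by linarith
        have hcw : ContinuousWithinAt y (Icc (0:ℝ) T) c := hycont c ⟨hc0, hcT⟩
        have hev2 : ∀ᶠ τ in 𝓝[Icc (0:ℝ) T] c, y τ < r' :=
          Filter.Tendsto.eventually_lt_const hycr hcw
        obtain ⟨ε, hε, hball⟩ := Metric.mem_nhdsWithin_iff.1 hev2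
        set t₁ := min T (c + ε/2) with ht₁def
        have hct₁ : c < t₁ := lt_min hcltT (by linarith)
        have ht₁T : t₁ ≤ T := min_le_left _ _
        have ht₁0 : (0:ℝ) ≤ t₁ := hc0.trans hct₁.le
        have hyle : ∀ τ ∈ Icc c t₁, y τ ≤ r' := by
          intro τ hτ
          have h1 : τ ∈ Icc (0:ℝ) T := ⟨hc0.trans hτ.1, hτ.2.trans ht₁T⟩
          have h2 : dist τ c < ε := by
            rw [Real.dist_eq, abs_lt]
            have h3 : t₁ ≤ c + ε/2 := min_le_right _ _
            constructor
            · linarith [hτ.1]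
            · linarith [hτ.2]
          exact (hball ⟨Metric.mem_ball.2 h2, h1⟩).le
        have ht₁S : t₁ ∈ S := by
          refine ⟨⟨ht₁0, ht₁T⟩, fun τ hτ => ?_⟩
          rcases le_or_gt τ c with h | h
          · exact hcS.2 τ ⟨hτ.1, h⟩
          · have hτmem : τ ∈ Icc (0:ℝ) T := ⟨hτ.1, hτ.2.trans ht₁T⟩
            have hcore := core c τ ⟨hc0, hcT⟩ hτmem h.le
              fun z hz => hyle z ⟨hz.1, hz.2.trans hτ.2⟩
            have hintnn : 0 ≤ ∫ z in c..τ, δ (y z) * g₁ z := by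
              refine intervalIntegral.integral_nonneg h.le fun z hz => ?_
              have hz1 : z ∈ Icc c t₁ := ⟨hz.1, hz.2.trans hτ.2⟩
              have hz2 : z ∈ Icc (0:ℝ) T := ⟨hc0.trans hz.1, hz1.2.trans ht₁T⟩
              exact mul_nonneg (hδnn _ ⟨hynn z hz2, hyle z hz1⟩)
                (hg₁nn z (mem_Ici.2 hz2.1))
            linarith
        have hcont := le_csSup hSbdd ht₁S
        linarith
      intro t htm
      rw [hcT'] at hcS
      exact hcS.2 t htm
    have hyler : ∀ t ∈ Icc (0:ℝ) T, y t ≤ r' := by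
      intro t htm
      have h1 := hinv t htm
      have h2 := hΦ2 t T htm.1 htm.2 le_rfl
      linarith
    -- z := y - Φ is nonincreasing
    have hzanti : ∀ u v : ℝ, u ∈ Icc (0:ℝ) T → v ∈ Icc (0:ℝ) T → u ≤ v →
        y v - Φ v ≤ y u - Φ u := by
      intro u v hu hv huv
      have hcore := core u v hu hv huv fun τ hτ => hyler τ (Icc_subset_Icc hu.1 hv.2 hτ)
      have hnn : 0 ≤ ∫ τ in u..v, δ (y τ) * g₁ τ := by
        refine intervalIntegral.integral_nonneg huv fun z hz => ?_
        have hz' : z ∈ Icc (0:ℝ) T := Icc_subset_Icc hu.1 hv.2 hz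
        exact mul_nonneg (hδnn _ ⟨hynn z hz', hyler z hz'⟩) (hg₁nn z (mem_Ici.2 hz'.1))
      linarith
    -- the decay estimate
    have hdecay : ∀ t ∈ Icc (0:ℝ) T, max (y t - Φ t) 0 ≤ N c₀ (G t) := by
      intro t htm
      refine hle_N _ _ _ fun a => ?_
      by_cases hcase : ∃ s ∈ Icc (0:ℝ) t, y s ≤ a.1
      · obtain ⟨s, hs, hsa⟩ := hcase
        have hs' : s ∈ Icc (0:ℝ) T := ⟨hs.1, hs.2.trans htm.2⟩
        have h1 : y t - Φ t ≤ y s - Φ s := hzanti s t hs' htm hs.2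
        have h2 : 0 ≤ Φ s := hΦnn s hs'
        have h3 : y t - Φ t ≤ a.1 := by linarith
        calc max (y t - Φ t) 0 ≤ max a.1 0 := max_le_max h3 le_rfl
          _ = a.1 := max_eq_left a.2.1.le
          _ ≤ term a.1 c₀ (G t) := le_max_left _ _
      · push_neg at hcase
        have hcore := core 0 t ⟨le_rfl, hT.le⟩ htm htm.1
          fun τ hτ => hyler τ ⟨hτ.1, hτ.2.trans htm.2⟩
        have hδgii := hδg_ii 0 t ⟨le_rfl, hT.le⟩ htm htm.1
          fun τ hτ => hyler τ ⟨hτ.1, hτ.2.trans htm.2⟩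
        have hlow : ρ a.1 * G t ≤ ∫ z in (0:ℝ)..t, δ (y z) * g₁ z := by
          have hpt : ∀ z ∈ Icc (0:ℝ) t, ρ a.1 * g₁ z ≤ δ (y z) * g₁ z := by
            intro z hz
            have hz' : z ∈ Icc (0:ℝ) T := ⟨hz.1, hz.2.trans htm.2⟩
            have hδz : ρ a.1 ≤ δ (y z) :=
              hρ_le a.1 a.2 (y z) ⟨(hcase z hz).le, hyler z hz'⟩
            exact mul_le_mul_of_nonneg_right hδz (hg₁nn z (mem_Ici.2 hz.1))
          have h := intervalIntegral.integral_mono_on htm.1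
            ((hg₁ii 0 t le_rfl htm.1).const_mul (ρ a.1)) hδgii hpt
          rwa [intervalIntegral.integral_const_mul] at h
        have h1 : y t - Φ t ≤ c₀ - ρ a.1 * G t := by
          rw [hΦ0] at hcore
          simp only [hGdef]
          linarith
        calc max (y t - Φ t) 0 ≤ max (c₀ - ρ a.1 * G t) 0 := max_le_max h1 le_rfl
          _ ≤ term a.1 c₀ (G t) := le_max_right _ _
    -- conclusion
    intro t htm
    have ht0 : (0:ℝ) ≤ t := htm.1
    have hxt : (0:ℝ) ≤ ‖x t‖ := norm_nonneg _
    have hyt0 : 0 ≤ y t := hynn t htm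
    have e1 : ‖x t‖ ≤ α₁inv (y t) := by
      have h := hi1m.monotoneOn (mem_Ici.2 (hα₁nn _ (mem_Ici.2 hxt)))
        (mem_Ici.2 hyt0) (hV t (mem_Ici.2 ht0) (x t)).1
      rwa [(hα₁inv ‖x t‖ (mem_Ici.2 hxt)).2.2] at h
    have hN := hdecay t htm
    have hNt0 : 0 ≤ N c₀ (G t) := hNnn _ _
    have hΦt0 : 0 ≤ Φ t := hΦnn t htm
    have h2 : y t ≤ N c₀ (G t) + Φ t := by
      have h := le_max_left (y t - Φ t) 0
      linarith
    have h3 : α₁inv (y t) ≤ α₁inv (N c₀ (G t) + Φ t) :=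
      hi1m.monotoneOn (mem_Ici.2 hyt0) (mem_Ici.2 (by linarith)) h2
    have h4 : α₁inv (N c₀ (G t) + Φ t) ≤
        α₁inv (2 * N c₀ (G t)) + α₁inv (2 * Φ t) := by
      rcases le_total (N c₀ (G t)) (Φ t) with h | h
      · have h5 : α₁inv (N c₀ (G t) + Φ t) ≤ α₁inv (2 * Φ t) :=
          hi1m.monotoneOn (mem_Ici.2 (by linarith)) (mem_Ici.2 (by linarith)) (by linarith)
        have h6 : 0 ≤ α₁inv (2 * N c₀ (G t)) :=
          (hα₁inv _ (mem_Ici.2 (by linarith))).1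
        linarith
      · have h5 : α₁inv (N c₀ (G t) + Φ t) ≤ α₁inv (2 * N c₀ (G t)) :=
          hi1m.monotoneOn (mem_Ici.2 (by linarith)) (mem_Ici.2 (by linarith)) (by linarith)
        have h6 : 0 ≤ α₁inv (2 * Φ t) := (hα₁inv _ (mem_Ici.2 (by linarith))).1
        linarith
    have h7 : 0 ≤ ‖x 0‖ / (1 + t) := div_nonneg (norm_nonneg _) (by linarith)
    show ‖x t‖ ≤ α₁inv (2 * N c₀ (G t)) + ‖x 0‖ / (1 + t) + α₁inv (2 * Φ t)
    linarith
end
end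

section
/- Let X be a real Banach space and V : [0,∞) × X → [0,∞). Assume: (a) there exist α₁, α₂ of class 𝒦∞ with α₁(‖x‖) ≤ V(t,x) ≤ α₂(‖x‖) for all x ∈ X and t ≥ 0; (b) g₁ : [0,∞) → [0,∞) is locally integrable with ∫₀^t g₁(τ)dτ → +∞ as t → +∞ and ∫_s^t g₁(τ)dτ > 0 whenever 0 ≤ s < t; (c) θ₁ and φ are of class 𝒦, and the function s ↦ θ₁(α₂⁻¹(s)) is continuously differentiable on (0,∞) and locally Lipschitz on [0,∞). Then there exist β of class 𝒦𝓛, σ of class 𝒦∞, and γ of class 𝒦 (one may take σ(s) = α₁⁻¹(2s) and γ(s) = 2φ(s)) such that: for every T > 0, every continuous w : [0,T] → [0,∞), and every continuous x : [0,T] → X for which the function y(t) := V(t, x(t)) is absolutely continuous on [0,T] and satisfies y′(t) ≤ −g₁(t)·θ₁(‖x(t)‖) + φ(w(t)) for almost every t ∈ [0,T], one has ‖x(t)‖ ≤ β(‖x(0)‖, t) + σ(∫₀^t γ(w(s))ds) for all t ∈ [0,T], with no smallness restriction on x(0) or w. -/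
open Set MeasureTheory Filter

noncomputable section

lemma invFacts (α αinv : ℝ → ℝ) (hα : ClassKInf α)
    (hinv : ∀ s ∈ Ici (0:ℝ), 0 ≤ αinv s ∧ α (αinv s) = s ∧ αinv (α s) = s) :
    MonotoneOn αinv (Ici 0) ∧ StrictMonoOn αinv (Ici 0) ∧ ContinuousOn αinv (Ici 0)
      ∧ αinv 0 = 0 ∧ Tendsto αinv atTop atTop := by
  obtain ⟨⟨hc, hs, h0, hnn⟩, hdiv⟩ := hα
  have hmono : MonotoneOn αinv (Ici 0) := by
    intro a ha b hb hab
    by_contra h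
    push_neg at h
    have := hs (hinv b hb).1 (hinv a ha).1 h
    rw [(hinv a ha).2.1, (hinv b hb).2.1] at this
    exact absurd hab (not_le.2 this)
  have hinj : ∀ a ∈ Ici (0:ℝ), ∀ b ∈ Ici (0:ℝ), αinv a = αinv b → a = b := by
    intro a ha b hb h
    have := congrArg α h
    rwa [(hinv a ha).2.1, (hinv b hb).2.1] at this
  have hstrict : StrictMonoOn αinv (Ici 0) := by
    intro a ha b hb hab
    rcases lt_or_eq_of_le (hmono ha hb hab.le) with h | h
    · exact h
    · exact absurd (hinj a ha b hb h) (ne_of_lt hab)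
  have hzero : αinv 0 = 0 := by
    have := (hinv 0 (by simp)).2.2
    rwa [h0] at this
  refine ⟨hmono, hstrict, ?_, hzero, ?_⟩
  · -- continuity
    intro s₀ hs₀
    rw [Metric.continuousWithinAt_iff]
    intro ε hε
    set v₀ := αinv s₀ with hv₀
    have hv₀nn : 0 ≤ v₀ := (hinv s₀ hs₀).1
    have hαv₀ : α v₀ = s₀ := (hinv s₀ hs₀).2.1
    have hub : ∀ s ∈ Ici (0:ℝ), s ≤ α (v₀ + ε/2) → αinv s ≤ v₀ + ε/2 := by
      intro s hs hle
      have h1 : α (v₀ + ε/2) ∈ Ici (0:ℝ) := hnn _ (by simp; positivity)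
      have := hmono hs h1 hle
      rwa [(hinv _ (by positivity : (0:ℝ) ≤ v₀ + ε/2)).2.2] at this
    have hαgt : s₀ < α (v₀ + ε/2) := by
      have := hs hv₀nn (by simp; positivity : (v₀ + ε/2) ∈ Ici (0:ℝ)) (by linarith)
      rwa [hαv₀] at this
    by_cases hcase : v₀ ≤ ε/2
    · refine ⟨α (v₀ + ε/2) - s₀, by linarith, ?_⟩
      intro s hs hd
      rw [Real.dist_eq] at hd ⊢
      have h1 : αinv s ≤ v₀ + ε/2 := hub s hs (by cases abs_lt.1 hd; linarith)
      have h2 : 0 ≤ αinv s := (hinv s hs).1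
      rw [abs_lt]; constructor <;> [linarith; linarith]
    · push_neg at hcase
      have hv₀ε : (0:ℝ) ≤ v₀ - ε/2 := by linarith
      have hαlt : α (v₀ - ε/2) < s₀ := by
        have := hs hv₀ε hv₀nn (by linarith)
        rwa [hαv₀] at this
      refine ⟨min (α (v₀ + ε/2) - s₀) (s₀ - α (v₀ - ε/2)), by
        apply lt_min <;> linarith, ?_⟩
      intro s hs hd
      rw [Real.dist_eq] at hd ⊢
      have hd1 := lt_of_lt_of_le hd (min_le_left _ _)
      have hd2 := lt_of_lt_of_le hd (min_le_right _ _)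
      have h1 : αinv s ≤ v₀ + ε/2 := hub s hs (by cases abs_lt.1 hd1; linarith)
      have h2 : v₀ - ε/2 ≤ αinv s := by
        have hge : α (v₀ - ε/2) ≤ s := by cases abs_lt.1 hd2; linarith
        have := hmono (hnn _ hv₀ε) hs hge
        rwa [(hinv _ hv₀ε).2.2] at this
      rw [abs_lt]; constructor <;> linarith
  · -- tendsto atTop
    rw [tendsto_atTop]
    intro M
    rw [eventually_atTop]
    refine ⟨α (max M 0), fun s hsge => ?_⟩
    have hM0 : (0:ℝ) ≤ max M 0 := le_max_right _ _
    have hs0 : s ∈ Ici (0:ℝ) := le_trans (hnn _ hM0) hsge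
    have := hmono (hnn _ hM0) hs0 hsge
    rw [(hinv _ hM0).2.2] at this
    exact le_trans (le_max_left M 0) this



def Bfun (θ G : ℝ → ℝ) (r t : ℝ) : ℝ := sSup {v | v ∈ Icc 0 r ∧ θ v * G t ≤ r}

section BSec

variable {θ G : ℝ → ℝ}
  (hθc : ContinuousOn θ (Ici 0)) (hθs : StrictMonoOn θ (Ici 0)) (hθ0 : θ 0 = 0)
  (hθnn : ∀ v ∈ Ici (0:ℝ), 0 ≤ θ v)
  (hGc : ContinuousOn G (Ici 0)) (hGm : MonotoneOn G (Ici 0))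
  (hGnn : ∀ t ∈ Ici (0:ℝ), 0 ≤ G t) (hGdiv : Tendsto G atTop atTop)

lemma Bfun_bddAbove (r t : ℝ) : BddAbove {v | v ∈ Icc 0 r ∧ θ v * G t ≤ r} :=
  ⟨r, fun v hv => hv.1.2⟩

include hθ0 in
lemma Bfun_zero_mem {r t : ℝ} (hr : 0 ≤ r) : (0:ℝ) ∈ {v | v ∈ Icc 0 r ∧ θ v * G t ≤ r} := by
  refine ⟨⟨le_rfl, hr⟩, ?_⟩
  rw [hθ0, zero_mul]; exact hr

include hθ0 in
lemma Bfun_nonneg {r : ℝ} (t : ℝ) (hr : 0 ≤ r) : 0 ≤ Bfun θ G r t :=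
  le_csSup (Bfun_bddAbove r t) (Bfun_zero_mem hθ0 hr)

include hθ0 in
lemma Bfun_le {r : ℝ} (t : ℝ) (hr : 0 ≤ r) : Bfun θ G r t ≤ r :=
  csSup_le ⟨0, Bfun_zero_mem hθ0 hr⟩ fun v hv => hv.1.2

include hθ0 in
lemma Bfun_zero (t : ℝ) : Bfun θ G 0 t = 0 :=
  le_antisymm (Bfun_le hθ0 t le_rfl) (Bfun_nonneg hθ0 t le_rfl)

include hθ0 in
lemma Bfun_mono {r r' : ℝ} (t : ℝ) (hr : 0 ≤ r) (hrr' : r ≤ r') :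
    Bfun θ G r t ≤ Bfun θ G r' t := by
  apply csSup_le_csSup (Bfun_bddAbove r' t) ⟨0, Bfun_zero_mem hθ0 hr⟩
  rintro v ⟨⟨hv0, hvr⟩, hvt⟩
  exact ⟨⟨hv0, hvr.trans hrr'⟩, hvt.trans hrr'⟩

include hθ0 hθnn hGm in
lemma Bfun_anti {r : ℝ} (hr : 0 ≤ r) {t t' : ℝ} (ht : 0 ≤ t) (htt' : t ≤ t') :
    Bfun θ G r t' ≤ Bfun θ G r t := by
  apply csSup_le_csSup (Bfun_bddAbove r t) ⟨0, Bfun_zero_mem hθ0 hr⟩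
  rintro v ⟨⟨hv0, hvr⟩, hvt⟩
  refine ⟨⟨hv0, hvr⟩, le_trans ?_ hvt⟩
  exact mul_le_mul_of_nonneg_left (hGm ht (ht.trans htt') htt') (hθnn v hv0)

include hθ0 hθs hθnn hGnn hGdiv in
lemma Bfun_tendsto {r : ℝ} (hr : 0 < r) : Tendsto (fun t => Bfun θ G r t) atTop (nhds 0) := by
  rw [tendsto_order]
  constructor
  · intro a ha
    exact Eventually.of_forall fun t => lt_of_lt_of_le ha (Bfun_nonneg hθ0 t hr.le)
  · intro a ha
    set ε := min (a/2) (r/2) with hεdef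
    have hε : 0 < ε := lt_min (by linarith) (by linarith)
    have hεa : ε < a := lt_of_le_of_lt (min_le_left _ _) (by linarith)
    have hθε : 0 < θ ε := by
      have := hθs (le_refl (0:ℝ) : (0:ℝ) ∈ Ici 0) hε.le hε
      rwa [hθ0] at this
    filter_upwards [hGdiv.eventually_gt_atTop (r / θ ε)] with t hGt
    have : Bfun θ G r t ≤ ε := by
      apply csSup_le ⟨0, Bfun_zero_mem hθ0 hr.le⟩
      rintro v ⟨⟨hv0, hvr⟩, hvt⟩
      by_contra hcon
      push_neg at hcon
      have h1 : θ ε ≤ θ v := (hθs.monotoneOn) hε.le hv0 hcon.le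
      have hGtpos : 0 < G t := lt_of_le_of_lt (div_nonneg hr.le hθε.le) hGt
      have h2 : r / θ ε * θ ε < G t * θ v := by
        calc r / θ ε * θ ε < G t * θ ε := mul_lt_mul_of_pos_right hGt hθε
          _ ≤ G t * θ v := mul_le_mul_of_nonneg_left h1 hGtpos.le
      rw [div_mul_cancel₀ _ (ne_of_gt hθε)] at h2
      rw [mul_comm] at hvt
      linarith
    linarith
end BSec

section BCont

variable {θ G : ℝ → ℝ}
  (hθc : ContinuousOn θ (Ici 0)) (hθs : StrictMonoOn θ (Ici 0)) (hθ0 : θ 0 = 0)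
  (hθnn : ∀ v ∈ Ici (0:ℝ), 0 ≤ θ v)
  (hGc : ContinuousOn G (Ici 0)) (hGnn : ∀ t ∈ Ici (0:ℝ), 0 ≤ G t)

include hθc hθs hθ0 hθnn hGc hGnn in
lemma Bfun_contOn : ContinuousOn (fun p : ℝ × ℝ => Bfun θ G p.1 p.2) (Ici 0 ×ˢ Ici 0) := by
  intro p₀ hp₀
  obtain ⟨hr₀, ht₀⟩ : p₀.1 ∈ Ici (0:ℝ) ∧ p₀.2 ∈ Ici (0:ℝ) := hp₀
  set r₀ := p₀.1
  set t₀ := p₀.2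
  have hGcwa : ContinuousWithinAt (fun p : ℝ × ℝ => G p.2) (Ici 0 ×ˢ Ici 0) p₀ :=
    (hGc t₀ ht₀).comp continuous_snd.continuousWithinAt (fun p hp => hp.2)
  have hfst : ContinuousWithinAt (fun p : ℝ × ℝ => p.1) (Ici 0 ×ˢ Ici 0) p₀ :=
    continuous_fst.continuousWithinAt
  rw [ContinuousWithinAt, Metric.tendsto_nhds]
  intro ε hε
  rcases eq_or_lt_of_le (show (0:ℝ) ≤ r₀ from hr₀) with hr₀0 | hr₀pos
  · -- r₀ = 0
    have hB₀ : Bfun θ G r₀ t₀ = 0 := by rw [← hr₀0]; exact Bfun_zero hθ0 t₀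
    filter_upwards [eventually_mem_nhdsWithin,
      hfst.eventually (eventually_lt_nhds (show r₀ < ε by rw [← hr₀0]; exact hε))]
      with p hps hpε
    have hp1 : (0:ℝ) ≤ p.1 := hps.1
    rw [hB₀, Real.dist_eq, sub_zero, abs_of_nonneg (Bfun_nonneg hθ0 p.2 hp1)]
    exact lt_of_le_of_lt (Bfun_le hθ0 p.2 hp1) hpε
  · -- r₀ > 0
    set B₀ := Bfun θ G r₀ t₀ with hB₀def
    have hB₀nn : 0 ≤ B₀ := Bfun_nonneg hθ0 t₀ hr₀
    have hB₀le : B₀ ≤ r₀ := Bfun_le hθ0 t₀ hr₀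
    clear_value B₀
    have hU : ∀ᶠ p in nhdsWithin p₀ (Ici 0 ×ˢ Ici 0),
        Bfun θ G p.1 p.2 < B₀ + ε := by
      by_cases hBr : r₀ < B₀ + ε
      · filter_upwards [eventually_mem_nhdsWithin,
          hfst.eventually (eventually_lt_nhds hBr)] with p hps hpr
        exact lt_of_le_of_lt (Bfun_le hθ0 p.2 hps.1) hpr
      · push_neg at hBr
        set v₂ := B₀ + ε/2 with hv₂def
        clear_value v₂
        have hv₂0 : (0:ℝ) ≤ v₂ := by linarith
        have hv₂r : v₂ ≤ r₀ := by linarith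
        have hv₂gt : θ v₂ * G t₀ > r₀ := by
          by_contra hcon
          push_neg at hcon
          have : v₂ ≤ B₀ := hB₀def ▸ le_csSup (Bfun_bddAbove r₀ t₀) ⟨⟨hv₂0, hv₂r⟩, hcon⟩
          linarith
        have hF : ContinuousWithinAt (fun p : ℝ × ℝ => θ v₂ * G p.2 - p.1)
            (Ici 0 ×ˢ Ici 0) p₀ := (hGcwa.const_mul (θ v₂)).sub hfst
        have hFpos : (0:ℝ) < θ v₂ * G t₀ - r₀ := by linarith
        filter_upwards [eventually_mem_nhdsWithin, hF.eventually (eventually_gt_nhds hFpos)]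
          with p hps hFp
        have hBle : Bfun θ G p.1 p.2 ≤ v₂ := by
          apply csSup_le ⟨0, Bfun_zero_mem hθ0 hps.1⟩
          rintro v ⟨⟨hv0, hvr⟩, hvt⟩
          by_contra hcon
          push_neg at hcon
          have h1 : θ v₂ ≤ θ v := hθs.monotoneOn hv₂0 hv0 hcon.le
          have h2 : θ v₂ * G p.2 ≤ θ v * G p.2 :=
            mul_le_mul_of_nonneg_right h1 (hGnn p.2 hps.2)
          linarith
        linarith
    have hL : ∀ᶠ p in nhdsWithin p₀ (Ici 0 ×ˢ Ici 0),
        B₀ - ε < Bfun θ G p.1 p.2 := by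
      by_cases hB0 : B₀ - ε < 0
      · filter_upwards [eventually_mem_nhdsWithin] with p hps
        exact lt_of_lt_of_le hB0 (Bfun_nonneg hθ0 p.2 hps.1)
      · push_neg at hB0
        set v₁ := B₀ - ε/2 with hv₁def
        clear_value v₁
        have hv₁0 : (0:ℝ) ≤ v₁ := by linarith
        have hv₁B : v₁ < B₀ := by linarith
        have hv₁r : v₁ < r₀ := lt_of_lt_of_le hv₁B hB₀le
        -- θ B₀ * G t₀ ≤ r₀
        have hclose : θ B₀ * G t₀ ≤ r₀ := by
          by_contra hcon
          push_neg at hcon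
          have hcwa : ContinuousWithinAt (fun v => θ v * G t₀) (Ici 0) B₀ :=
            (hθc B₀ hB₀nn).mul continuousWithinAt_const
          have hev : {v | r₀ < θ v * G t₀} ∈ nhdsWithin B₀ (Ici 0) :=
            hcwa.eventually (eventually_gt_nhds hcon)
          rw [Metric.mem_nhdsWithin_iff] at hev
          obtain ⟨δ, hδ, hball⟩ := hev
          have hlt : B₀ - δ/2 < Bfun θ G r₀ t₀ := by rw [← hB₀def]; linarith
          obtain ⟨v, hvS, hvgt⟩ := exists_lt_of_lt_csSup
            (⟨0, Bfun_zero_mem hθ0 hr₀⟩ : Set.Nonempty {v | v ∈ Icc 0 r₀ ∧ θ v * G t₀ ≤ r₀})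
            hlt
          have hvle : v ≤ B₀ := hB₀def ▸ le_csSup (Bfun_bddAbove r₀ t₀) hvS
          have hvball : v ∈ Metric.ball B₀ δ ∩ Ici 0 := by
            constructor
            · rw [Metric.mem_ball, Real.dist_eq, abs_lt]
              constructor <;> [linarith; linarith]
            · exact hvS.1.1
          have := hball hvball
          exact absurd hvS.2 (not_le.2 this)
        have hv₁lt : θ v₁ * G t₀ < r₀ := by
          rcases eq_or_lt_of_le (hGnn t₀ ht₀) with hG0 | hG0
          · rw [← hG0, mul_zero]; exact hr₀pos
          · have : θ v₁ < θ B₀ := hθs hv₁0 hB₀nn hv₁B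
            have h2 : θ v₁ * G t₀ < θ B₀ * G t₀ := mul_lt_mul_of_pos_right this hG0
            linarith
        have hF : ContinuousWithinAt (fun p : ℝ × ℝ => p.1 - θ v₁ * G p.2)
            (Ici 0 ×ˢ Ici 0) p₀ := hfst.sub (hGcwa.const_mul (θ v₁))
        have hFpos : (0:ℝ) < r₀ - θ v₁ * G t₀ := by linarith
        filter_upwards [eventually_mem_nhdsWithin,
          hF.eventually (eventually_gt_nhds hFpos),
          hfst.eventually (eventually_gt_nhds hv₁r)] with p hps hFp hpr
        have hmem : v₁ ∈ {v | v ∈ Icc 0 p.1 ∧ θ v * G p.2 ≤ p.1} :=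
          ⟨⟨hv₁0, hpr.le⟩, by linarith⟩
        have : v₁ ≤ Bfun θ G p.1 p.2 := le_csSup (Bfun_bddAbove p.1 p.2) hmem
        linarith
    filter_upwards [hU, hL] with p h1 h2
    rw [Real.dist_eq, abs_lt]
    constructor <;> [linarith; linarith]

end BCont

/-- iISS Lyapunov theorem in a Banach space: existence of an iISS Lyapunov functional
implies the global iISS estimate along trajectories. -/
theorem stmt_8 (X : Type*) [NormedAddCommGroup X] [NormedSpace ℝ X] [CompleteSpace X]
    (V : ℝ → X → ℝ)
    (α₁ α₂ α₁inv α₂inv θ₁ φ g₁ : ℝ → ℝ)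
    -- (a) sandwich bounds by 𝒦∞ functions
    (hα₁ : ClassKInf α₁) (hα₂ : ClassKInf α₂)
    (hα₁inv : ∀ s ∈ Ici (0:ℝ), 0 ≤ α₁inv s ∧ α₁ (α₁inv s) = s ∧ α₁inv (α₁ s) = s)
    (hα₂inv : ∀ s ∈ Ici (0:ℝ), 0 ≤ α₂inv s ∧ α₂ (α₂inv s) = s ∧ α₂inv (α₂ s) = s)
    (hV : ∀ t ∈ Ici (0:ℝ), ∀ x : X, α₁ ‖x‖ ≤ V t x ∧ V t x ≤ α₂ ‖x‖)
    -- (b) time-varying gain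
    (hg₁nn : ∀ t ∈ Ici (0:ℝ), 0 ≤ g₁ t)
    (hg₁int : ∀ T > (0:ℝ), IntegrableOn g₁ (Icc 0 T))
    (hGdiv : Tendsto (fun t => ∫ τ in (0:ℝ)..t, g₁ τ) atTop atTop)
    (hGpos : ∀ s t : ℝ, 0 ≤ s → s < t → 0 < ∫ τ in s..t, g₁ τ)
    -- (c) comparison functions
    (hθ₁ : ClassK θ₁) (hφ : ClassK φ)
    (hδC1 : ∃ δ' : ℝ → ℝ, ContinuousOn δ' (Ioi 0) ∧
      ∀ s ∈ Ioi (0:ℝ), HasDerivAt (fun s => θ₁ (α₂inv s)) (δ' s) s)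
    (hδLip : LocallyLipschitzOn (Ici 0) (fun s => θ₁ (α₂inv s))) :
    ∃ β : ℝ → ℝ → ℝ, ∃ σ γ : ℝ → ℝ, ClassKL β ∧ ClassKInf σ ∧ ClassK γ ∧
      ∀ T > (0:ℝ), ∀ w : ℝ → ℝ,
        ContinuousOn w (Icc 0 T) → (∀ t ∈ Icc (0:ℝ) T, 0 ≤ w t) →
        ∀ x : ℝ → X, ContinuousOn x (Icc 0 T) →
        ∀ y' : ℝ → ℝ,
        IsACDeriv T (fun t => V t (x t)) y' →
        (∀ᵐ t ∂(volume.restrict (Icc (0:ℝ) T)),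
          y' t ≤ -g₁ t * θ₁ ‖x t‖ + φ (w t)) →
        ∀ t ∈ Icc (0:ℝ) T, ‖x t‖ ≤ β ‖x 0‖ t + σ (∫ s in (0:ℝ)..t, γ (w s)) := by
  clear hδC1 hδLip
  obtain ⟨A1mono, A1strict, A1cont, A1zero, A1top⟩ := invFacts α₁ α₁inv hα₁ hα₁inv
  obtain ⟨A2mono, A2strict, A2cont, A2zero, A2top⟩ := invFacts α₂ α₂inv hα₂ hα₂inv
  obtain ⟨⟨hα₁c, hα₁s, hα₁z, hα₁nn⟩, hα₁div⟩ := hα₁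
  obtain ⟨⟨hα₂c, hα₂s, hα₂z, hα₂nn⟩, hα₂div⟩ := hα₂
  obtain ⟨hθ₁c, hθ₁s, hθ₁z, hθ₁nn⟩ := hθ₁
  obtain ⟨hφc, hφs, hφz, hφnn⟩ := hφ
  set θ : ℝ → ℝ := fun v => θ₁ (α₂inv v) with hθdef
  set G : ℝ → ℝ := fun τ => ∫ s in (0:ℝ)..τ, g₁ s with hGdef
  -- θ facts
  have hθc : ContinuousOn θ (Ici 0) :=
    hθ₁c.comp A2cont (fun v hv => (hα₂inv v hv).1)
  have hθs : StrictMonoOn θ (Ici 0) :=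
    hθ₁s.comp A2strict (fun v hv => (hα₂inv v hv).1)
  have hθ0 : θ 0 = 0 := by
    show θ₁ (α₂inv 0) = 0
    rw [A2zero, hθ₁z]
  have hθnn : ∀ v ∈ Ici (0:ℝ), 0 ≤ θ v :=
    fun v hv => hθ₁nn _ ((hα₂inv v hv).1)
  have hθmono : MonotoneOn θ (Ici 0) := hθs.monotoneOn
  -- G facts
  have hg₁all : ∀ t : ℝ, 0 ≤ t → IntegrableOn g₁ (Icc 0 t) := fun t ht =>
    (hg₁int (t + 1) (by linarith)).mono_set (Icc_subset_Icc_right (by linarith))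
  have hg₁ii : ∀ a b : ℝ, 0 ≤ a → a ≤ b → IntervalIntegrable g₁ volume a b := by
    intro a b ha hab
    rw [intervalIntegrable_iff_integrableOn_Icc_of_le hab]
    exact (hg₁all b (ha.trans hab)).mono_set (Icc_subset_Icc_left ha)
  have hGsub : ∀ a b : ℝ, 0 ≤ a → a ≤ b → G b - G a = ∫ τ in a..b, g₁ τ := by
    intro a b ha hab
    exact intervalIntegral.integral_interval_sub_left
      (hg₁ii 0 b (le_refl 0) (ha.trans hab)) (hg₁ii 0 a (le_refl 0) ha)
  have hGm : MonotoneOn G (Ici 0) := by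
    intro a ha b hb hab
    have h := hGsub a b ha hab
    rcases eq_or_lt_of_le hab with h' | h'
    · rw [h']
    · have := hGpos a b ha h'
      linarith
  have hG0 : G 0 = 0 := intervalIntegral.integral_same
  have hGnn : ∀ t ∈ Ici (0:ℝ), 0 ≤ G t := by
    intro t ht
    have := hGm (le_refl (0:ℝ)) ht ht
    rwa [hG0] at this
  have hGc : ContinuousOn G (Ici 0) := by
    intro t₀ ht₀
    have ht₀' : (0:ℝ) ≤ t₀ := ht₀
    have h1 : ContinuousOn G (Icc 0 (t₀ + 1)) := by
      have := intervalIntegral.continuousOn_primitive_interval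
        (f := g₁) (a := (0:ℝ)) (b := t₀ + 1) (μ := volume)
        (by rw [uIcc_of_le (by linarith : (0:ℝ) ≤ t₀+1)]; exact hg₁all _ (by linarith))
      rwa [uIcc_of_le (by linarith : (0:ℝ) ≤ t₀+1)] at this
    refine (h1 t₀ ⟨ht₀, by linarith⟩).mono_of_mem_nhdsWithin ?_
    refine Filter.mem_of_superset
      (inter_mem self_mem_nhdsWithin
        (mem_nhdsWithin_of_mem_nhds (Iio_mem_nhds (by linarith : t₀ < t₀ + 1)))) ?_
    rintro a ⟨h1', h2'⟩
    exact ⟨h1', le_of_lt h2'⟩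
  -- the candidate functions
  refine ⟨fun r t => α₁inv (2 * Bfun θ G (α₂ r) t) + r * Real.exp (-t),
    fun s => α₁inv (2 * s), fun s => 2 * φ s, ⟨?_, ?_, ?_⟩, ⟨⟨?_, ?_, ?_, ?_⟩, ?_⟩,
    ⟨?_, ?_, ?_, ?_⟩, ?_⟩
  · -- ClassKL continuity
    have hBcomp : ContinuousOn (fun p : ℝ × ℝ => Bfun θ G (α₂ p.1) p.2)
        (Ici 0 ×ˢ Ici 0) := by
      refine (Bfun_contOn hθc hθs hθ0 hθnn hGc hGnn).comp
        ((hα₂c.comp (continuous_fst.continuousOn) (fun p hp => hp.1)).prodMk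
          (continuous_snd.continuousOn)) ?_
      exact fun p hp => ⟨hα₂nn _ hp.1, hp.2⟩
    have h1 : ContinuousOn (fun p : ℝ × ℝ => α₁inv (2 * Bfun θ G (α₂ p.1) p.2))
        (Ici 0 ×ˢ Ici 0) := by
      refine A1cont.comp (continuousOn_const.mul hBcomp) ?_
      intro p hp
      have := Bfun_nonneg (θ := θ) (G := G) hθ0 p.2 (hα₂nn _ hp.1)
      simp only [mem_Ici]
      linarith
    exact h1.add ((continuous_fst.mul
      (Real.continuous_exp.comp continuous_snd.neg)).continuousOn)
  · -- ClassK in r for each t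
    intro t ht
    refine ⟨?_, ?_, ?_, ?_⟩
    · have hBcomp : ContinuousOn (fun r : ℝ => Bfun θ G (α₂ r) t) (Ici 0) := by
        refine (Bfun_contOn hθc hθs hθ0 hθnn hGc hGnn).comp
          ((hα₂c.prodMk continuousOn_const)) ?_
        exact fun r hr => ⟨hα₂nn _ hr, ht⟩
      have h1 : ContinuousOn (fun r : ℝ => α₁inv (2 * Bfun θ G (α₂ r) t)) (Ici 0) := by
        refine A1cont.comp (continuousOn_const.mul hBcomp) ?_
        intro r hr
        have := Bfun_nonneg (θ := θ) (G := G) hθ0 t (hα₂nn _ hr)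
        simp only [mem_Ici]; linarith
      exact h1.add ((continuous_id.mul continuous_const).continuousOn)
    · intro a ha b hb hab
      have hBa : (0:ℝ) ≤ Bfun θ G (α₂ a) t := Bfun_nonneg hθ0 t (hα₂nn _ ha)
      have hBab : Bfun θ G (α₂ a) t ≤ Bfun θ G (α₂ b) t :=
        Bfun_mono hθ0 t (hα₂nn _ ha) (hα₂s.monotoneOn ha hb hab.le)
      have h1 : α₁inv (2 * Bfun θ G (α₂ a) t) ≤ α₁inv (2 * Bfun θ G (α₂ b) t) :=
        A1mono (by simp only [mem_Ici]; linarith) (by simp only [mem_Ici]; linarith)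
          (by linarith)
      have h2 : a * Real.exp (-t) < b * Real.exp (-t) :=
        mul_lt_mul_of_pos_right hab (Real.exp_pos _)
      exact add_lt_add_of_le_of_lt h1 h2
    · simp only [hα₂z, Bfun_zero hθ0, mul_zero, A1zero, zero_mul, add_zero]
    · intro s hs
      have h1 : 0 ≤ α₁inv (2 * Bfun θ G (α₂ s) t) :=
        (hα₁inv _ (by
          have := Bfun_nonneg (θ := θ) (G := G) hθ0 t (hα₂nn _ hs)
          simp only [mem_Ici]; linarith)).1
      have h2 : 0 ≤ s * Real.exp (-t) := mul_nonneg hs (Real.exp_pos _).le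
      show 0 ≤ α₁inv (2 * Bfun θ G (α₂ s) t) + s * Real.exp (-t)
      linarith
  · -- KL in t
    intro r hr
    constructor
    · intro a ha b hb hab
      have hBab : Bfun θ G (α₂ r) b ≤ Bfun θ G (α₂ r) a :=
        Bfun_anti hθ0 hθnn hGm (hα₂nn _ hr.le) ha hab.le
      have hBb : (0:ℝ) ≤ Bfun θ G (α₂ r) b := Bfun_nonneg hθ0 b (hα₂nn _ hr.le)
      have h1 : α₁inv (2 * Bfun θ G (α₂ r) b) ≤ α₁inv (2 * Bfun θ G (α₂ r) a) :=
        A1mono (by simp only [mem_Ici]; linarith) (by simp only [mem_Ici]; linarith)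
          (by linarith)
      have h2 : r * Real.exp (-b) < r * Real.exp (-a) := by
        apply mul_lt_mul_of_pos_left _ hr
        exact Real.exp_lt_exp.2 (by linarith)
      exact add_lt_add_of_le_of_lt h1 h2
    · have hα₂r : 0 < α₂ r := by
        have := hα₂s (le_refl (0:ℝ)) hr.le hr
        rwa [hα₂z] at this
      have hB : Tendsto (fun t => Bfun θ G (α₂ r) t) atTop (nhds 0) :=
        Bfun_tendsto (hθs := hθs) (hθ0 := hθ0) (hθnn := hθnn) (hGnn := hGnn)
          (hGdiv := hGdiv) hα₂r
      have h2B : Tendsto (fun t => 2 * Bfun θ G (α₂ r) t) atTop (nhds 0) := by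
        have := hB.const_mul (2:ℝ)
        simpa using this
      have hev : ∀ᶠ t in atTop, 2 * Bfun θ G (α₂ r) t ∈ Ici (0:ℝ) := by
        refine Eventually.of_forall fun t => ?_
        have := Bfun_nonneg (θ := θ) (G := G) hθ0 t (hα₂nn _ hr.le)
        simp only [mem_Ici]; linarith
      have h3 : Tendsto (fun t => 2 * Bfun θ G (α₂ r) t) atTop
          (nhdsWithin 0 (Ici 0)) :=
        tendsto_nhdsWithin_of_tendsto_nhds_of_eventually_within _ h2B hev
      have h4 : Tendsto (fun t => α₁inv (2 * Bfun θ G (α₂ r) t)) atTop (nhds 0) := by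
        have := (A1cont 0 (le_refl (0:ℝ))).tendsto.comp h3
        rwa [A1zero] at this
      have h5 : Tendsto (fun t => r * Real.exp (-t)) atTop (nhds 0) := by
        have := (Real.tendsto_exp_neg_atTop_nhds_zero).const_mul r
        simpa using this
      have := h4.add h5
      simpa using this
  · -- σ continuous
    refine A1cont.comp ((continuous_const.mul continuous_id).continuousOn) ?_
    intro s hs
    simp only [mem_Ici] at hs ⊢
    linarith
  · -- σ strict mono
    intro a ha b hb hab
    exact A1strict (by simp only [mem_Ici] at ha ⊢; linarith)
      (by simp only [mem_Ici] at hb ⊢; linarith) (by linarith)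
  · -- σ 0 = 0
    simp [A1zero]
  · -- σ nonneg
    intro s hs
    exact (hα₁inv _ (by simp only [mem_Ici] at hs ⊢; linarith)).1
  · -- σ tendsto atTop
    refine A1top.comp ?_
    exact (tendsto_id.const_mul_atTop (by norm_num : (0:ℝ) < 2))
  · -- γ continuous
    exact continuousOn_const.mul hφc
  · -- γ strict
    intro a ha b hb hab
    exact mul_lt_mul_of_pos_left (hφs ha hb hab) (by norm_num)
  · -- γ 0
    simp [hφz]
  · -- γ nonneg
    intro s hs
    have := hφnn s hs
    show 0 ≤ 2 * φ s
    linarith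
  · -- the trajectory estimate
    intro T hT w hw hwnn x hx y' hAC hae t ht
    obtain ⟨hy'int, hyrep⟩ := hAC
    set y : ℝ → ℝ := fun τ => V τ (x τ) with hydef
    set u : ℝ → ℝ := fun τ => φ (w τ) with hudef
    set U : ℝ → ℝ := fun τ => ∫ s in (0:ℝ)..τ, u s with hUdef
    set z : ℝ → ℝ := fun τ => y τ - 2 * U τ with hzdef
    set ψ : ℝ → ℝ := fun τ => max (z τ) 0 with hψdef
    have h0T : (0:ℝ) ∈ Icc (0:ℝ) T := ⟨le_refl _, hT.le⟩
    have hyb : ∀ τ ∈ Icc (0:ℝ) T, α₁ ‖x τ‖ ≤ y τ ∧ y τ ≤ α₂ ‖x τ‖ :=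
      fun τ hτ => hV τ hτ.1 (x τ)
    have hynn : ∀ τ ∈ Icc (0:ℝ) T, 0 ≤ y τ :=
      fun τ hτ => le_trans (hα₁nn _ (norm_nonneg _)) (hyb τ hτ).1
    have hucont : ContinuousOn u (Icc 0 T) := hφc.comp hw (fun τ hτ => hwnn τ hτ)
    have hunn : ∀ τ ∈ Icc (0:ℝ) T, 0 ≤ u τ := fun τ hτ => hφnn _ (hwnn τ hτ)
    have huii : ∀ a b : ℝ, a ∈ Icc (0:ℝ) T → b ∈ Icc (0:ℝ) T → a ≤ b →
        IntervalIntegrable u volume a b := by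
      intro a b ha hb hab
      apply ContinuousOn.intervalIntegrable
      rw [uIcc_of_le hab]
      exact hucont.mono (Icc_subset_Icc ha.1 hb.2)
    have hy'ii : ∀ a b : ℝ, a ∈ Icc (0:ℝ) T → b ∈ Icc (0:ℝ) T → a ≤ b →
        IntervalIntegrable y' volume a b := by
      intro a b ha hb hab
      rw [intervalIntegrable_iff_integrableOn_Icc_of_le hab]
      exact hy'int.mono_set (Icc_subset_Icc ha.1 hb.2)
    have hU0 : U 0 = 0 := intervalIntegral.integral_same
    have hUsub : ∀ a b : ℝ, a ∈ Icc (0:ℝ) T → b ∈ Icc (0:ℝ) T → a ≤ b →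
        U b - U a = ∫ s in a..b, u s := fun a b ha hb hab =>
      intervalIntegral.integral_interval_sub_left
        (huii 0 b h0T hb (ha.1.trans hab)) (huii 0 a h0T ha ha.1)
    have hysub : ∀ a b : ℝ, a ∈ Icc (0:ℝ) T → b ∈ Icc (0:ℝ) T → a ≤ b →
        y b - y a = ∫ s in a..b, y' s := by
      intro a b ha hb hab
      rw [hyrep b hb, hyrep a ha]
      have := intervalIntegral.integral_interval_sub_left
        (hy'ii 0 b h0T hb (ha.1.trans hab)) (hy'ii 0 a h0T ha ha.1)
      linarith
    have hUnn : ∀ τ ∈ Icc (0:ℝ) T, 0 ≤ U τ := by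
      intro τ hτ
      exact intervalIntegral.integral_nonneg hτ.1
        (fun s hs => hunn s ⟨hs.1, hs.2.trans hτ.2⟩)
    have hycont : ContinuousOn y (Icc 0 T) := by
      have h1 : ContinuousOn (fun τ => y 0 + ∫ s in (0:ℝ)..τ, y' s) (Icc 0 T) := by
        apply continuousOn_const.add
        have := intervalIntegral.continuousOn_primitive_interval
          (f := y') (a := (0:ℝ)) (b := T) (μ := volume)
          (by rw [uIcc_of_le hT.le]; exact hy'int)
        rwa [uIcc_of_le hT.le] at this
      exact h1.congr (fun τ hτ => hyrep τ hτ)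
    have hUcont : ContinuousOn U (Icc 0 T) := by
      have := intervalIntegral.continuousOn_primitive_interval
        (f := u) (a := (0:ℝ)) (b := T) (μ := volume)
        (by rw [uIcc_of_le hT.le]; exact hucont.integrableOn_Icc)
      rwa [uIcc_of_le hT.le] at this
    have hzc : ContinuousOn z (Icc 0 T) := hycont.sub (continuousOn_const.mul hUcont)
    have hsupc : ContinuousOn (fun τ => z τ ⊔ 0) (Icc 0 T) := hzc.sup' continuousOn_const
    have hψcont : ContinuousOn ψ (Icc 0 T) := by
      simpa using hsupc
    have hψnn : ∀ τ : ℝ, 0 ≤ ψ τ := fun τ => le_max_right _ _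
    have hψley : ∀ τ ∈ Icc (0:ℝ) T, ψ τ ≤ y τ := by
      intro τ hτ
      apply max_le _ (hynn τ hτ)
      have := hUnn τ hτ
      show y τ - 2 * U τ ≤ y τ
      linarith
    have hθψle : ∀ τ ∈ Icc (0:ℝ) T, θ (ψ τ) ≤ θ₁ ‖x τ‖ := by
      intro τ hτ
      have h1 : ψ τ ≤ α₂ ‖x τ‖ := (hψley τ hτ).trans (hyb τ hτ).2
      have h2 : α₂inv (ψ τ) ≤ α₂inv (α₂ ‖x τ‖) :=
        A2mono (hψnn τ) (hα₂nn _ (norm_nonneg _)) h1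
      rw [(hα₂inv _ (norm_nonneg (x τ))).2.2] at h2
      exact hθ₁s.monotoneOn ((hα₂inv _ (hψnn τ)).1) (norm_nonneg _) h2
    have hθψcont : ContinuousOn (fun τ => θ (ψ τ)) (Icc 0 T) :=
      hθc.comp hψcont (fun τ _ => hψnn τ)
    obtain ⟨C, hC⟩ := isCompact_Icc.exists_bound_of_continuousOn hθψcont
    have hgθψii : ∀ a b : ℝ, a ∈ Icc (0:ℝ) T → b ∈ Icc (0:ℝ) T → a ≤ b →
        IntervalIntegrable (fun τ => g₁ τ * θ (ψ τ)) volume a b := by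
      intro a b ha hb hab
      rw [intervalIntegrable_iff_integrableOn_Icc_of_le hab]
      have hgint : IntegrableOn g₁ (Icc a b) :=
        (hg₁all T hT.le).mono_set (Icc_subset_Icc ha.1 hb.2)
      have hmeas : AEStronglyMeasurable (fun τ => θ (ψ τ))
          (volume.restrict (Icc a b)) :=
        ((hθψcont.mono (Icc_subset_Icc ha.1 hb.2)).aestronglyMeasurable
          measurableSet_Icc)
      have hbound : ∀ᵐ τ ∂(volume.restrict (Icc a b)), ‖θ (ψ τ)‖ ≤ C := by
        filter_upwards [ae_restrict_mem measurableSet_Icc] with τ hτ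
        exact hC τ (Icc_subset_Icc ha.1 hb.2 hτ)
      have := Integrable.bdd_mul hgint hmeas hbound
      exact this.congr (Eventually.of_forall (fun τ => mul_comm _ _))
    have KEY1 : ∀ a ∈ Icc (0:ℝ) T, ∀ b ∈ Icc (0:ℝ) T, a ≤ b →
        z b - z a ≤ -∫ τ in a..b, g₁ τ * θ (ψ τ) := by
      intro a ha b hb hab
      have hz : z b - z a = ∫ τ in a..b, (y' τ - 2 * u τ) := by
        rw [intervalIntegral.integral_sub (hy'ii a b ha hb hab)
          ((huii a b ha hb hab).const_mul 2)]
        rw [intervalIntegral.integral_const_mul]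
        have h1 := hysub a b ha hb hab
        have h2 := hUsub a b ha hb hab
        show y b - 2 * U b - (y a - 2 * U a) = _
        linarith
      rw [hz]
      have hle : (fun τ => y' τ - 2 * u τ) ≤ᵐ[volume.restrict (Icc a b)]
          (fun τ => -(g₁ τ * θ (ψ τ))) := by
        filter_upwards [ae_restrict_of_ae_restrict_of_subset
          (Icc_subset_Icc ha.1 hb.2) hae, ae_restrict_mem measurableSet_Icc]
          with τ h1 h2
        have hτT : τ ∈ Icc (0:ℝ) T := Icc_subset_Icc ha.1 hb.2 h2
        have h3 : θ (ψ τ) ≤ θ₁ ‖x τ‖ := hθψle τ hτT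
        have h4 : 0 ≤ g₁ τ := hg₁nn τ hτT.1
        have h5 : g₁ τ * θ (ψ τ) ≤ g₁ τ * θ₁ ‖x τ‖ := mul_le_mul_of_nonneg_left h3 h4
        have h6 : 0 ≤ u τ := hunn τ hτT
        show y' τ - 2 * u τ ≤ -(g₁ τ * θ (ψ τ))
        have h7 : u τ = φ (w τ) := rfl
        nlinarith [h1]
      have hmono := intervalIntegral.integral_mono_ae_restrict hab
        ((hy'ii a b ha hb hab).sub ((huii a b ha hb hab).const_mul 2))
        ((hgθψii a b ha hb hab).neg) hle
      have hneg : (∫ τ in a..b, -(g₁ τ * θ (ψ τ))) = -∫ τ in a..b, g₁ τ * θ (ψ τ) :=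
        intervalIntegral.integral_neg
      simp only [Pi.neg_apply] at hmono
      linarith [hmono, hneg.le, hneg.ge]
    have KEY2 : ∀ a ∈ Icc (0:ℝ) T, ∀ b ∈ Icc (0:ℝ) T, a ≤ b → z b ≤ z a := by
      intro a ha b hb hab
      have h1 := KEY1 a ha b hb hab
      have h2 : 0 ≤ ∫ τ in a..b, g₁ τ * θ (ψ τ) :=
        intervalIntegral.integral_nonneg hab
          (fun τ hτ => mul_nonneg (hg₁nn τ (ha.1.trans hτ.1))
            (hθnn _ (hψnn τ)))
      linarith
    have KEY3 : ∀ a ∈ Icc (0:ℝ) T, ∀ b ∈ Icc (0:ℝ) T, a ≤ b → ψ b ≤ ψ a :=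
      fun a ha b hb hab => max_le_max (KEY2 a ha b hb hab) (le_refl 0)
    have hz0 : z 0 = y 0 := by show y 0 - 2 * U 0 = y 0; rw [hU0]; ring
    have hψ0 : ψ 0 = y 0 := by
      show max (z 0) 0 = y 0
      rw [hz0]
      exact max_eq_left (hynn 0 h0T)
    have KEY4 : θ (ψ t) * G t ≤ α₂ ‖x 0‖ := by
      have hy0le : y 0 ≤ α₂ ‖x 0‖ := (hyb 0 h0T).2
      rcases le_or_gt (z t) 0 with hzt | hzt
      · have : ψ t = 0 := max_eq_right hzt
        rw [this, hθ0, zero_mul]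
        exact le_trans (hynn 0 h0T) (by linarith)
      · have h1 := KEY1 0 h0T t ht ht.1
        have h2 : ∫ τ in (0:ℝ)..t, g₁ τ * θ (ψ t) ≤ ∫ τ in (0:ℝ)..t, g₁ τ * θ (ψ τ) := by
          apply intervalIntegral.integral_mono_on ht.1
            ((hg₁ii 0 t (le_refl 0) ht.1).mul_const _) (hgθψii 0 t h0T ht ht.1)
          intro τ hτ
          have hτT : τ ∈ Icc (0:ℝ) T := ⟨hτ.1, hτ.2.trans ht.2⟩
          exact mul_le_mul_of_nonneg_left
            (hθmono (hψnn t) (hψnn τ) (KEY3 τ hτT t ht hτ.2)) (hg₁nn τ hτ.1)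
        have h3 : ∫ τ in (0:ℝ)..t, g₁ τ * θ (ψ t) = G t * θ (ψ t) := by
          rw [intervalIntegral.integral_mul_const]
        have h4 : θ (ψ t) * G t ≤ z 0 - z t := by
          rw [mul_comm]
          linarith
        have h5 : ψ t = z t := max_eq_left hzt.le
        rw [hz0] at h4
        linarith
    have KEY5 : ψ t ≤ Bfun θ G (α₂ ‖x 0‖) t := by
      apply le_csSup (Bfun_bddAbove _ _)
      refine ⟨⟨hψnn t, ?_⟩, KEY4⟩
      have := KEY3 0 h0T t ht ht.1
      rw [hψ0] at this
      exact this.trans (hyb 0 h0T).2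
    -- final assembly
    have hyt : y t ≤ Bfun θ G (α₂ ‖x 0‖) t + 2 * U t := by
      have h1 : y t = z t + 2 * U t := by show y t = y t - 2 * U t + 2 * U t; ring
      have h2 : z t ≤ ψ t := le_max_left _ _
      linarith
    set a := Bfun θ G (α₂ ‖x 0‖) t with hadef
    set b := 2 * U t with hbdef
    have hann : 0 ≤ a := Bfun_nonneg hθ0 t (hα₂nn _ (norm_nonneg _))
    have hbnn : 0 ≤ b := by
      have := hUnn t ht
      show (0:ℝ) ≤ 2 * U t
      linarith
    have hxa : ‖x t‖ ≤ α₁inv (y t) := by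
      have h1 : α₁inv (α₁ ‖x t‖) ≤ α₁inv (y t) :=
        A1mono (hα₁nn _ (norm_nonneg _)) (hynn t ht) (hyb t ht).1
      rwa [(hα₁inv _ (norm_nonneg (x t))).2.2] at h1
    have hxab : α₁inv (y t) ≤ α₁inv (a + b) :=
      A1mono (hynn t ht) (by simp only [mem_Ici]; linarith) hyt
    have hsplit : α₁inv (a + b) ≤ α₁inv (2 * a) + α₁inv (2 * b) := by
      have hia : 0 ≤ α₁inv (2 * a) := (hα₁inv _ (by simp only [mem_Ici]; linarith)).1
      have hib : 0 ≤ α₁inv (2 * b) := (hα₁inv _ (by simp only [mem_Ici]; linarith)).1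
      rcases le_total a b with hab | hab
      · have h1 : α₁inv (a + b) ≤ α₁inv (2 * b) :=
          A1mono (by simp only [mem_Ici]; linarith) (by simp only [mem_Ici]; linarith)
            (by linarith)
        linarith
      · have h1 : α₁inv (a + b) ≤ α₁inv (2 * a) :=
          A1mono (by simp only [mem_Ici]; linarith) (by simp only [mem_Ici]; linarith)
            (by linarith)
        linarith
    have hγint : ∫ s in (0:ℝ)..t, 2 * φ (w s) = b := by
      show ∫ s in (0:ℝ)..t, 2 * φ (w s) = 2 * U t
      rw [hUdef]
      show ∫ s in (0:ℝ)..t, 2 * φ (w s) = 2 * ∫ s in (0:ℝ)..t, u s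
      rw [intervalIntegral.integral_const_mul]
    show ‖x t‖ ≤ α₁inv (2 * Bfun θ G (α₂ ‖x 0‖) t) + ‖x 0‖ * Real.exp (-t)
      + α₁inv (2 * ∫ s in (0:ℝ)..t, 2 * φ (w s))
    rw [hγint, ← hadef]
    have hexp : 0 ≤ ‖x 0‖ * Real.exp (-t) :=
      mul_nonneg (norm_nonneg _) (Real.exp_pos _).le
    linarith
end
end

section
/- Let H be a real Hilbert space and U a real normed space. Let A : [0,∞) → ℒ(H), let F : [0,∞) × H × U → H, and let P : [0,∞) → ℒ(H) be continuously differentiable in operator norm with each P(t) self-adjoint and η₁‖x‖² ≤ ⟨P(t)x, x⟩ ≤ η₂‖x‖² for all x ∈ H and t ≥ 0, where η₂ ≥ η₁ > 0 are constants. Let a₁, a₂ : [0,∞) → [0,∞) be locally integrable with ∫₀^t a₁(τ)dτ → +∞ as t → +∞, ∫_s^t a₁(τ)dτ > 0 whenever 0 ≤ s < t, and a₂(t) ≤ M·a₁(t) for almost every t ≥ 0 with a constant M ≥ 0; let m₁, m₂ > 2 be real constants and ζ a function of class 𝒦. Assume that for all x ∈ H, u ∈ U, and t ≥ 0: ⟨(A(t)*P(t)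 + P(t)A(t) + P′(t))x, x⟩ + 2⟨F(t,x,u), P(t)x⟩ ≤ −a₁(t)‖x‖² + a₂(t)(‖x‖^{m₁} + ‖x‖^{m₂}) + ζ(‖u‖). Then there exist β of class 𝒦𝓛, σ of class 𝒦∞, γ of class 𝒦, and r′ > 0 such that: for every T > 0, every continuous u : [0,T] → U, and every continuously differentiable x : [0,T] → H satisfying x′(t) = A(t)x(t) + F(t, x(t), u(t)) on (0,T), if η₂‖x(0)‖² + 2∫₀^T ζ(‖u(s)‖)ds < r′, then ‖x(t)‖ ≤ β(‖x(0)‖, t) + σ(∫₀^t γ(‖u(s)‖)ds) for all t ∈ [0,T]. -/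
open Set MeasureTheory Filter

noncomputable section

open ContinuousLinearMap
open scoped RealInnerProductSpace

lemma liiss_tendsto_sqrt_atTop : Tendsto Real.sqrt atTop atTop := by
  have h := tendsto_rpow_atTop (by norm_num : (0:ℝ) < 1/2)
  refine Tendsto.congr' ?_ h
  filter_upwards [eventually_ge_atTop (0:ℝ)] with x hx
  rw [Real.sqrt_eq_rpow]

lemma liiss_absorb (M a₁ a₂ n δ m₁ m₂ : ℝ) (ha₁ : 0 ≤ a₁) (ha₂ : 0 ≤ a₂)
    (hle : a₂ ≤ M * a₁) (hn : 0 ≤ n) (hnδ : n ≤ δ)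
    (hm₁ : 2 < m₁) (hm₂ : 2 < m₂)
    (habs : M * (δ ^ (m₁ - 2) + δ ^ (m₂ - 2)) ≤ 1/2) :
    a₂ * (n ^ m₁ + n ^ m₂) ≤ 2⁻¹ * (a₁ * n ^ (2:ℕ)) := by
  have hδ0 : 0 ≤ δ := le_trans hn hnδ
  have hn2 : (0:ℝ) ≤ n ^ (2:ℕ) := by positivity
  have key : ∀ m : ℝ, 2 < m → n ^ m ≤ δ ^ (m - 2) * n ^ (2:ℕ) := by
    intro m hm
    rcases eq_or_lt_of_le hn with h0 | h0
    · rw [← h0, Real.zero_rpow (by linarith)]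
      simp
    · have : n ^ m = n ^ (m - 2) * n ^ (2:ℕ) := by
        rw [← Real.rpow_natCast n 2, ← Real.rpow_add h0]
        norm_num
      rw [this]
      exact mul_le_mul_of_nonneg_right (Real.rpow_le_rpow hn hnδ (by linarith)) hn2
  have k₁ := key m₁ hm₁
  have k₂ := key m₂ hm₂
  have hδp : (0:ℝ) ≤ δ ^ (m₁ - 2) := Real.rpow_nonneg hδ0 _
  have hδp2 : (0:ℝ) ≤ δ ^ (m₂ - 2) := Real.rpow_nonneg hδ0 _
  nlinarith [mul_le_mul_of_nonneg_left (add_le_add k₁ k₂) ha₂,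
    mul_le_mul_of_nonneg_right hle (add_nonneg (Real.rpow_nonneg hn m₁) (Real.rpow_nonneg hn m₂)),
    mul_le_mul_of_nonneg_right habs hn2, mul_nonneg ha₁ hn2]

set_option maxHeartbeats 1000000 in
/-- LiISS of a non-autonomous semilinear system in a Hilbert space via the Lyapunov
functional `V(t,x) = ⟨P(t)x, x⟩`. -/
theorem stmt_10 (H U : Type*) [NormedAddCommGroup H] [InnerProductSpace ℝ H] [CompleteSpace H]
    [NormedAddCommGroup U] [NormedSpace ℝ U]
    (A : ℝ → H →L[ℝ] H) (F : ℝ → H → U → H) (P P' : ℝ → H →L[ℝ] H)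
    (η₁ η₂ M : ℝ) (a₁ a₂ ζ : ℝ → ℝ) (m₁ m₂ : ℝ)
    -- `P` is continuously differentiable, self-adjoint, uniformly bounded and coercive
    (hPd : ∀ t ∈ Ici (0:ℝ), HasDerivWithinAt P (P' t) (Ici 0) t)
    (hPdc : ContinuousOn P' (Ici 0))
    (hPsa : ∀ t ∈ Ici (0:ℝ), IsSelfAdjoint (P t))
    (hη₁ : 0 < η₁) (hη₁₂ : η₁ ≤ η₂)
    (hcoer : ∀ t ∈ Ici (0:ℝ), ∀ x : H,
      η₁ * ‖x‖ ^ 2 ≤ ⟪P t x, x⟫ ∧ ⟪P t x, x⟫ ≤ η₂ * ‖x‖ ^ 2)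
    -- time-varying gains
    (ha₁nn : ∀ t ∈ Ici (0:ℝ), 0 ≤ a₁ t) (ha₂nn : ∀ t ∈ Ici (0:ℝ), 0 ≤ a₂ t)
    (ha₁int : ∀ T > (0:ℝ), MeasureTheory.IntegrableOn a₁ (Icc 0 T))
    (ha₂int : ∀ T > (0:ℝ), MeasureTheory.IntegrableOn a₂ (Icc 0 T))
    (hdiv : Tendsto (fun t => ∫ τ in (0:ℝ)..t, a₁ τ) atTop atTop)
    (hpos : ∀ s t : ℝ, 0 ≤ s → s < t → 0 < ∫ τ in s..t, a₁ τ)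
    (hM : 0 ≤ M)
    (hle : ∀ᵐ t ∂(volume.restrict (Ici (0:ℝ))), a₂ t ≤ M * a₁ t)
    -- superlinear exponents and gain on the input
    (hm₁ : 2 < m₁) (hm₂ : 2 < m₂) (hζ : ClassK ζ)
    -- the dissipation inequality
    (hdiss : ∀ t ∈ Ici (0:ℝ), ∀ x : H, ∀ u : U,
      ⟪((ContinuousLinearMap.adjoint (A t)) ∘L P t + P t ∘L A t + P' t) x, x⟫
        + 2 * ⟪F t x u, P t x⟫
      ≤ -a₁ t * ‖x‖ ^ 2 + a₂ t * (‖x‖ ^ m₁ + ‖x‖ ^ m₂) + ζ ‖u‖) :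
    ∃ β : ℝ → ℝ → ℝ, ∃ σ γ : ℝ → ℝ, ∃ r' : ℝ,
      ClassKL β ∧ ClassKInf σ ∧ ClassK γ ∧ 0 < r' ∧
      ∀ T > (0:ℝ), ∀ u : ℝ → U, ContinuousOn u (Icc 0 T) →
        ∀ x : ℝ → H, ContinuousOn x (Icc 0 T) →
        (∀ t ∈ Ioo (0:ℝ) T, HasDerivAt x (A t (x t) + F t (x t) (u t)) t) →
        η₂ * ‖x 0‖ ^ 2 + 2 * (∫ s in (0:ℝ)..T, ζ ‖u s‖) < r' →
        ∀ t ∈ Icc (0:ℝ) T, ‖x t‖ ≤ β ‖x 0‖ t + σ (∫ s in (0:ℝ)..t, γ ‖u s‖) := by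
  have hη₂ : 0 < η₂ := lt_of_lt_of_le hη₁ hη₁₂
  set c : ℝ := (2 * η₂)⁻¹ with hc_def
  have hc : 0 < c := by positivity
  have hcη : c * η₂ = 2⁻¹ := by
    rw [hc_def]
    field_simp
  -- choice of δ
  set p : ℝ := min (m₁ - 2) (m₂ - 2) with hp_def
  have hp : 0 < p := lt_min (by linarith) (by linarith)
  have hb0 : (0:ℝ) < (4 * (M + 1))⁻¹ := by positivity
  set δ : ℝ := min 1 ((4 * (M + 1))⁻¹ ^ p⁻¹) with hδ_def
  have hδ0 : 0 < δ := lt_min one_pos (Real.rpow_pos_of_pos hb0 _)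
  have hδ1 : δ ≤ 1 := min_le_left _ _
  have habs : M * (δ ^ (m₁ - 2) + δ ^ (m₂ - 2)) ≤ 1/2 := by
    have hkey : ∀ m : ℝ, 2 < m → p ≤ m - 2 → δ ^ (m - 2) ≤ (4 * (M + 1))⁻¹ := by
      intro m hm hpm
      have h1 : δ ^ (m - 2) ≤ δ ^ p := Real.rpow_le_rpow_of_exponent_ge hδ0 hδ1 hpm
      have h2 : δ ^ p ≤ ((4 * (M + 1))⁻¹ ^ p⁻¹) ^ p :=
        Real.rpow_le_rpow hδ0.le (min_le_right _ _) hp.le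
      have h3 : (((4 * (M + 1))⁻¹ ^ p⁻¹ : ℝ)) ^ p = (4 * (M + 1))⁻¹ := by
        rw [← Real.rpow_mul hb0.le, inv_mul_cancel₀ hp.ne', Real.rpow_one]
      linarith [h1, h2.trans_eq h3]
    have h₁ := hkey m₁ hm₁ (min_le_left _ _)
    have h₂ := hkey m₂ hm₂ (min_le_right _ _)
    have : M * (δ ^ (m₁ - 2) + δ ^ (m₂ - 2)) ≤ M * (2 * (4 * (M + 1))⁻¹) := by
      apply mul_le_mul_of_nonneg_left _ hM
      linarith
    have h40 : (0:ℝ) < 4 * (M + 1) := by positivity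
    have h4 : M * (2 * (4 * (M + 1))⁻¹) ≤ 1/2 := by
      rw [show M * (2 * (4 * (M + 1))⁻¹) = 2 * M / (4 * (M + 1)) by field_simp,
        div_le_iff₀ h40]
      linarith
    linarith
  set r : ℝ := η₁ * δ ^ 2 with hr_def
  have hr : 0 < r := by positivity
  -- integrability helpers for a₁, a₂
  have ha₁Icc : ∀ s t : ℝ, 0 ≤ s → IntegrableOn a₁ (Icc s t) := by
    intro s t hs
    exact (ha₁int (max t 0 + 1) (by linarith [le_max_right t 0])).mono_set
      (fun τ hτ => ⟨le_trans hs hτ.1, le_trans hτ.2 (by linarith [le_max_left t 0])⟩)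
  have ha₂Icc : ∀ s t : ℝ, 0 ≤ s → IntegrableOn a₂ (Icc s t) := by
    intro s t hs
    exact (ha₂int (max t 0 + 1) (by linarith [le_max_right t 0])).mono_set
      (fun τ hτ => ⟨le_trans hs hτ.1, le_trans hτ.2 (by linarith [le_max_left t 0])⟩)
  have ha₁ii : ∀ s t : ℝ, 0 ≤ s → s ≤ t → IntervalIntegrable a₁ volume s t := by
    intro s t hs hst
    refine IntegrableOn.intervalIntegrable ?_
    rw [uIcc_of_le hst]
    exact ha₁Icc s t hs
  -- the primitive G
  set G : ℝ → ℝ := fun t => ∫ τ in (0:ℝ)..t, a₁ τ with hG_def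
  have hGadd : ∀ s t : ℝ, 0 ≤ s → s ≤ t → G t = G s + ∫ τ in s..t, a₁ τ := by
    intro s t hs hst
    rw [hG_def]
    exact (intervalIntegral.integral_add_adjacent_intervals (ha₁ii 0 s le_rfl hs)
      (ha₁ii s t hs hst)).symm
  have hGmono : ∀ s t : ℝ, 0 ≤ s → s ≤ t → G s ≤ G t := by
    intro s t hs hst
    rcases eq_or_lt_of_le hst with rfl | hlt
    · exact le_rfl
    · rw [hGadd s t hs hst]
      linarith [hpos s t hs hlt]
  have hGlt : ∀ s t : ℝ, 0 ≤ s → s < t → G s < G t := by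
    intro s t hs hst
    rw [hGadd s t hs hst.le]
    linarith [hpos s t hs hst]
  have hGnn : ∀ t : ℝ, 0 ≤ t → 0 ≤ G t := by
    intro t ht
    have := hGmono 0 t le_rfl ht
    simpa [hG_def] using this
  have hGcont : ContinuousOn G (Ici 0) := by
    intro t ht
    have hsub : Icc (0:ℝ) (t+1) ⊆ Ici 0 := fun τ hτ => hτ.1
    have h1 : ContinuousOn G (Icc 0 (t+1)) := by
      have := intervalIntegral.continuousOn_primitive_interval
        (a := (0:ℝ)) (b := t+1) (μ := volume) (f := a₁) ?_
      · rwa [uIcc_of_le (by linarith [mem_Ici.1 ht] : (0:ℝ) ≤ t+1)] at this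
      · rw [uIcc_of_le (by linarith [mem_Ici.1 ht] : (0:ℝ) ≤ t+1)]
        exact ha₁Icc 0 (t+1) le_rfl
    have hmem : Icc (0:ℝ) (t+1) ∈ nhdsWithin t (Ici 0) := by
      rw [← Ici_inter_Iic]
      exact inter_mem_nhdsWithin _ (Iic_mem_nhds (by linarith))
    exact (h1 t ⟨ht, by linarith⟩).mono_of_mem_nhdsWithin hmem
  -- the KL function
  set sq2 : ℝ := Real.sqrt (η₂ / η₁) with hsq2_def
  have hsq2 : 0 < sq2 := Real.sqrt_pos.2 (by positivity)
  set k : ℝ → ℝ := fun t => sq2 / Real.sqrt (max 1 (c * G t)) + Real.exp (-t) with hk_def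
  have hden1 : ∀ t : ℝ, (1:ℝ) ≤ Real.sqrt (max 1 (c * G t)) := by
    intro t
    rw [Real.one_le_sqrt]
    exact le_max_left _ _
  have hdenpos : ∀ t : ℝ, (0:ℝ) < Real.sqrt (max 1 (c * G t)) :=
    fun t => lt_of_lt_of_le one_pos (hden1 t)
  have hkpos : ∀ t : ℝ, 0 < k t := by
    intro t
    have h1 : 0 < sq2 / Real.sqrt (max 1 (c * G t)) := div_pos hsq2 (hdenpos t)
    have := Real.exp_pos (-t)
    rw [hk_def]
    dsimp only
    linarith
  have hkcont : ContinuousOn k (Ici 0) := by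
    rw [hk_def]
    apply ContinuousOn.add
    · apply ContinuousOn.div continuousOn_const
      · exact (Real.continuous_sqrt.comp
          ((continuous_const.max (continuous_const.mul continuous_id)))).comp_continuousOn hGcont
      · exact fun t _ => (hdenpos t).ne'
    · exact (Real.continuous_exp.comp continuous_neg).continuousOn
  have hkanti : ∀ t₁ t₂ : ℝ, 0 ≤ t₁ → t₁ < t₂ → k t₂ < k t₁ := by
    intro t₁ t₂ ht₁ hlt
    have hG : G t₁ ≤ G t₂ := hGmono t₁ t₂ ht₁ hlt.le
    have hmax : max 1 (c * G t₁) ≤ max 1 (c * G t₂) :=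
      max_le_max le_rfl (mul_le_mul_of_nonneg_left hG hc.le)
    have h1 : sq2 / Real.sqrt (max 1 (c * G t₂)) ≤ sq2 / Real.sqrt (max 1 (c * G t₁)) := by
      apply div_le_div_of_nonneg_left hsq2.le (hdenpos t₁)
      exact Real.sqrt_le_sqrt hmax
    have h2 : Real.exp (-t₂) < Real.exp (-t₁) := Real.exp_lt_exp.2 (by linarith)
    rw [hk_def]
    dsimp only
    linarith
  have hk0 : Tendsto k atTop (nhds 0) := by
    rw [hk_def]
    have h1 : Tendsto (fun t => sq2 / Real.sqrt (max 1 (c * G t))) atTop (nhds 0) := by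
      apply Tendsto.div_atTop tendsto_const_nhds
      apply liiss_tendsto_sqrt_atTop.comp
      apply tendsto_atTop_mono (fun t => le_max_right 1 (c * G t))
      exact Tendsto.const_mul_atTop hc hdiv
    have h2 : Tendsto (fun t : ℝ => Real.exp (-t)) atTop (nhds 0) :=
      Real.tendsto_exp_neg_atTop_nhds_zero
    simpa using h1.add h2
  refine ⟨fun s t => s * k t, fun s => Real.sqrt (2 * s / η₁), ζ, r, ?_, ?_, hζ, hr, ?_⟩
  · -- ClassKL
    refine ⟨?_, ?_, ?_⟩
    · exact (continuous_fst.continuousOn).mul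
        (hkcont.comp continuous_snd.continuousOn (fun q hq => hq.2))
    · intro t ht
      refine ⟨(continuous_mul_right _).continuousOn, ?_, zero_mul _, ?_⟩
      · intro s₁ _ s₂ _ hlt
        exact mul_lt_mul_of_pos_right hlt (hkpos t)
      · intro s hs
        exact mul_nonneg hs (hkpos t).le
    · intro ρ hρ
      constructor
      · intro t₁ ht₁ t₂ _ hlt
        exact mul_lt_mul_of_pos_left (hkanti t₁ t₂ ht₁ hlt) hρ
      · simpa using (hk0.const_mul ρ)
  · -- ClassKInf
    have hmono : ∀ s₁ s₂ : ℝ, 0 ≤ s₁ → s₁ < s₂ → Real.sqrt (2 * s₁ / η₁) < Real.sqrt (2 * s₂ / η₁) := by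
      intro s₁ s₂ h1 h2
      apply Real.sqrt_lt_sqrt (by positivity)
      gcongr
    refine ⟨⟨?_, ?_, ?_, ?_⟩, ?_⟩
    · exact (Real.continuous_sqrt.comp
        ((continuous_const.mul continuous_id).div_const η₁)).continuousOn
    · intro s₁ h1 s₂ h2 hlt
      exact hmono s₁ s₂ h1 hlt
    · norm_num
    · intro s _
      exact Real.sqrt_nonneg _
    · apply liiss_tendsto_sqrt_atTop.comp
      apply Tendsto.atTop_div_const hη₁
      exact tendsto_atTop_mono (fun s => le_rfl) (tendsto_id.const_mul_atTop two_pos)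
  · -- main estimate
    intro T hT u hu x hx hode hsmall
    have hIciT : Icc (0:ℝ) T ⊆ Ici 0 := fun τ hτ => hτ.1
    set h : ℝ → ℝ := fun s => ζ ‖u s‖ with hh_def
    have hhcont : ContinuousOn h (Icc 0 T) :=
      hζ.1.comp (continuous_norm.comp_continuousOn hu) (fun τ _ => mem_Ici.2 (norm_nonneg _))
    have hhnn : ∀ τ : ℝ, 0 ≤ h τ := fun τ => hζ.2.2.2 _ (mem_Ici.2 (norm_nonneg _))
    have hhii : ∀ s t : ℝ, 0 ≤ s → s ≤ t → t ≤ T → IntervalIntegrable h volume s t := by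
      intro s t hs hst htT
      refine IntegrableOn.intervalIntegrable ?_
      rw [uIcc_of_le hst]
      exact (hhcont.mono (Icc_subset_Icc hs htT)).integrableOn_Icc
    set V : ℝ → ℝ := fun t => ⟪P t (x t), x t⟫ with hV_def
    have hPcont : ContinuousOn P (Ici 0) := fun t ht => (hPd t ht).continuousWithinAt
    have hVcont : ContinuousOn V (Icc 0 T) :=
      ContinuousOn.inner ((hPcont.mono hIciT).clm_apply hx) hx
    have hV1 : ∀ t ∈ Icc (0:ℝ) T, η₁ * ‖x t‖ ^ 2 ≤ V t := fun t ht => (hcoer t (hIciT ht) (x t)).1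
    have hV2 : ∀ t ∈ Icc (0:ℝ) T, V t ≤ η₂ * ‖x t‖ ^ 2 := fun t ht => (hcoer t (hIciT ht) (x t)).2
    have hVnn : ∀ t ∈ Icc (0:ℝ) T, 0 ≤ V t := fun t ht =>
      le_trans (by positivity) (hV1 t ht)
    set g : ℝ → ℝ := fun τ => -a₁ τ * ‖x τ‖ ^ 2 + a₂ τ * (‖x τ‖ ^ m₁ + ‖x τ‖ ^ m₂) + h τ
      with hg_def
    have hnx : ContinuousOn (fun τ => ‖x τ‖) (Icc 0 T) := hx.norm
    have hgIcc : ∀ s t : ℝ, 0 ≤ s → s ≤ t → t ≤ T → IntegrableOn g (Icc s t) := by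
      intro s t hs hst htT
      have hsub : Icc s t ⊆ Icc 0 T := Icc_subset_Icc hs htT
      have hK : IsCompact (Icc s t) := isCompact_Icc
      have hneg : IntegrableOn (fun τ => -a₁ τ) (Icc s t) := (ha₁Icc s t hs).neg
      have h1 : IntegrableOn (fun τ => -a₁ τ * ‖x τ‖ ^ 2) (Icc s t) :=
        hneg.mul_continuousOn ((hnx.mono hsub).pow 2) hK
      have h2 : IntegrableOn (fun τ => a₂ τ * (‖x τ‖ ^ m₁ + ‖x τ‖ ^ m₂)) (Icc s t) := by
        refine (ha₂Icc s t hs).mul_continuousOn ?_ hK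
        exact ((hnx.mono hsub).rpow_const (fun τ _ => Or.inr (by linarith))).add
          ((hnx.mono hsub).rpow_const (fun τ _ => Or.inr (by linarith)))
      have h3 : IntegrableOn h (Icc s t) := (hhcont.mono hsub).integrableOn_Icc
      exact (h1.add h2).add h3
    have hgii : ∀ s t : ℝ, 0 ≤ s → s ≤ t → t ≤ T → IntervalIntegrable g volume s t := by
      intro s t hs hst htT
      refine IntegrableOn.intervalIntegrable ?_
      rw [uIcc_of_le hst]
      exact hgIcc s t hs hst htT
    have haVIcc : ∀ s t : ℝ, 0 ≤ s → s ≤ t → t ≤ T →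
        IntegrableOn (fun τ => a₁ τ * V τ) (Icc s t) := by
      intro s t hs hst htT
      exact (ha₁Icc s t hs).mul_continuousOn (hVcont.mono (Icc_subset_Icc hs htT)) isCompact_Icc
    have haVii : ∀ s t : ℝ, 0 ≤ s → s ≤ t → t ≤ T →
        IntervalIntegrable (fun τ => a₁ τ * V τ) volume s t := by
      intro s t hs hst htT
      refine IntegrableOn.intervalIntegrable ?_
      rw [uIcc_of_le hst]
      exact haVIcc s t hs hst htT
    have hqii : ∀ s t : ℝ, 0 ≤ s → s ≤ t → t ≤ T →
        IntervalIntegrable (fun τ => -(c * (a₁ τ * V τ)) + h τ) volume s t := by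
      intro s t hs hst htT
      exact (((haVii s t hs hst htT).const_mul c).neg).add (hhii s t hs hst htT)
    -- the fundamental integral inequality
    have hkey : ∀ s t : ℝ, 0 ≤ s → s ≤ t → t ≤ T → V t - V s ≤ ∫ τ in s..t, g τ := by
      intro s t hs hst htT
      refine intervalIntegral.sub_le_integral_of_hasDeriv_right_of_le hst
        (hVcont.mono (Icc_subset_Icc hs htT))
        (g' := fun τ => ⟪P τ (x τ), A τ (x τ) + F τ (x τ) (u τ)⟫ +
          ⟪P' τ (x τ) + P τ (A τ (x τ) + F τ (x τ) (u τ)), x τ⟫)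
        (fun τ hτ => ?_) (hgIcc s t hs hst htT) (fun τ hτ => ?_)
      · have hτT : τ ∈ Ioo (0:ℝ) T := ⟨lt_of_le_of_lt hs hτ.1, lt_of_lt_of_le hτ.2 htT⟩
        have hxd := hode τ hτT
        have hPdτ : HasDerivAt P (P' τ) τ :=
          (hPd τ (le_of_lt hτT.1)).hasDerivAt (Ici_mem_nhds hτT.1)
        exact ((hPdτ.clm_apply hxd).inner ℝ hxd).hasDerivWithinAt
      · have hτT : τ ∈ Ioo (0:ℝ) T := ⟨lt_of_le_of_lt hs hτ.1, lt_of_lt_of_le hτ.2 htT⟩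
        have hτIci : τ ∈ Ici (0:ℝ) := le_of_lt hτT.1
        have hd := hdiss τ hτIci (x τ) (u τ)
        have hsa : ∀ y z : H, ⟪P τ y, z⟫ = ⟪y, P τ z⟫ := by
          intro y z
          conv_lhs => rw [← (hPsa τ hτIci).adjoint_eq]
          exact ContinuousLinearMap.adjoint_inner_left _ _ _
        have e1 : ⟪ContinuousLinearMap.adjoint (A τ) (P τ (x τ)), x τ⟫
            = ⟪P τ (x τ), A τ (x τ)⟫ := ContinuousLinearMap.adjoint_inner_left _ _ _
        have e2 : ⟪P τ (x τ), F τ (x τ) (u τ)⟫ = ⟪F τ (x τ) (u τ), P τ (x τ)⟫ :=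
          real_inner_comm _ _
        have e3 : ⟪P τ (F τ (x τ) (u τ)), x τ⟫ = ⟪F τ (x τ) (u τ), P τ (x τ)⟫ :=
          hsa _ _
        simp only [ContinuousLinearMap.add_apply, ContinuousLinearMap.comp_apply,
          inner_add_left] at hd
        rw [hg_def]
        simp only [inner_add_right, map_add, inner_add_left]
        linarith
    -- a.e. absorption of the superlinear terms
    have hgleq : ∀ s t : ℝ, 0 ≤ s → s ≤ t → t ≤ T → (∀ τ ∈ Icc s t, ‖x τ‖ ≤ δ) →
        (∫ τ in s..t, g τ) ≤ ∫ τ in s..t, (-(c * (a₁ τ * V τ)) + h τ) := by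
      intro s t hs hst htT hxδ
      refine intervalIntegral.integral_mono_ae_restrict hst (hgii s t hs hst htT)
        (hqii s t hs hst htT) ?_
      have hsub : Icc s t ⊆ Ici (0:ℝ) := fun τ hτ => le_trans hs hτ.1
      filter_upwards [ae_restrict_of_ae_restrict_of_subset hsub hle,
        ae_restrict_mem measurableSet_Icc] with τ h1 h2
      have hτIci : (0:ℝ) ≤ τ := le_trans hs h2.1
      have habs2 := liiss_absorb M (a₁ τ) (a₂ τ) ‖x τ‖ δ m₁ m₂ (ha₁nn τ hτIci)
        (ha₂nn τ hτIci) h1 (norm_nonneg _) (hxδ τ h2) hm₁ hm₂ habs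
      have hV2τ := hV2 τ (Icc_subset_Icc hs htT h2)
      have ha₁τ := ha₁nn τ hτIci
      have hcv : c * (a₁ τ * V τ) ≤ 2⁻¹ * (a₁ τ * ‖x τ‖ ^ 2) := by
        have h3 : a₁ τ * V τ ≤ a₁ τ * (η₂ * ‖x τ‖ ^ 2) := mul_le_mul_of_nonneg_left hV2τ ha₁τ
        calc c * (a₁ τ * V τ) ≤ c * (a₁ τ * (η₂ * ‖x τ‖ ^ 2)) :=
              mul_le_mul_of_nonneg_left h3 hc.le
          _ = (c * η₂) * (a₁ τ * ‖x τ‖ ^ 2) := by ring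
          _ = 2⁻¹ * (a₁ τ * ‖x τ‖ ^ 2) := by rw [hcη]
      rw [hg_def]
      dsimp only
      linarith
    -- combined integral inequality
    have hmain : ∀ s t : ℝ, 0 ≤ s → s ≤ t → t ≤ T → (∀ τ ∈ Icc s t, ‖x τ‖ ≤ δ) →
        V t + c * ∫ τ in s..t, a₁ τ * V τ ≤ V s + ∫ τ in s..t, h τ := by
      intro s t hs hst htT hxδ
      have h1 := hkey s t hs hst htT
      have h2 := hgleq s t hs hst htT hxδ
      have h3 : (∫ τ in s..t, (-(c * (a₁ τ * V τ)) + h τ))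
          = -(c * ∫ τ in s..t, a₁ τ * V τ) + ∫ τ in s..t, h τ := by
        have hf : IntervalIntegrable (fun τ => -(c * (a₁ τ * V τ))) volume s t :=
          ((haVii s t hs hst htT).const_mul c).neg
        rw [intervalIntegral.integral_add hf (hhii s t hs hst htT),
          intervalIntegral.integral_neg, intervalIntegral.integral_const_mul]
      linarith
    -- monotonicity of the input integral
    have hImono : ∀ t ∈ Icc (0:ℝ) T, (∫ τ in (0:ℝ)..t, h τ) ≤ ∫ τ in (0:ℝ)..T, h τ := by
      intro t ht
      have hadd := intervalIntegral.integral_add_adjacent_intervals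
        (hhii 0 t le_rfl ht.1 ht.2) (hhii t T ht.1 ht.2 le_rfl)
      have hnn : 0 ≤ ∫ τ in t..T, h τ :=
        intervalIntegral.integral_nonneg ht.2 (fun τ _ => hhnn τ)
      linarith
    have hITnn : 0 ≤ ∫ τ in (0:ℝ)..T, h τ :=
      intervalIntegral.integral_nonneg hT.le (fun τ _ => hhnn τ)
    -- norm bound from V bound
    have hδr : ∀ t ∈ Icc (0:ℝ) T, V t ≤ r → ‖x t‖ ≤ δ := by
      intro t ht hVt
      have h1 := hV1 t ht
      have hn2 : ‖x t‖ ^ 2 ≤ δ ^ 2 := by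
        refine le_of_mul_le_mul_left ?_ hη₁
        rw [hr_def] at hVt
        linarith
      calc ‖x t‖ = Real.sqrt (‖x t‖ ^ 2) := (Real.sqrt_sq (norm_nonneg _)).symm
        _ ≤ Real.sqrt (δ ^ 2) := Real.sqrt_le_sqrt hn2
        _ = δ := Real.sqrt_sq hδ0.le
    -- invariance: V stays below r
    have hVltr : ∀ t ∈ Icc (0:ℝ) T, V t ≤ r := by
      by_contra hcon
      push_neg at hcon
      obtain ⟨t₀, ht₀, ht₀r⟩ := hcon
      set B : Set ℝ := {t | t ∈ Icc (0:ℝ) T ∧ r ≤ V t} with hB_def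
      have hBne : B.Nonempty := ⟨t₀, ht₀, ht₀r.le⟩
      have hBbd : BddBelow B := ⟨0, fun τ hτ => hτ.1.1⟩
      have hBclosed : IsClosed B := by
        have : B = Icc 0 T ∩ V ⁻¹' Ici r := by
          ext τ; simp [hB_def, mem_preimage]
        rw [this]
        exact hVcont.preimage_isClosed_of_isClosed isClosed_Icc isClosed_Ici
      set t₁ := sInf B with ht₁_def
      have ht₁B : t₁ ∈ B := hBclosed.csInf_mem hBne hBbd
      have ht₁Icc : t₁ ∈ Icc (0:ℝ) T := ht₁B.1
      have ht₁r : r ≤ V t₁ := ht₁B.2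
      have hV0lt : V 0 < r := by
        have h2 := hV2 0 ⟨le_rfl, hT.le⟩
        linarith [hsmall, hITnn]
      have ht₁pos : 0 < t₁ := by
        rcases eq_or_lt_of_le ht₁Icc.1 with heq | hlt
        · exfalso; rw [← heq] at ht₁r; linarith
        · exact hlt
      have hlt : ∀ s ∈ Ico (0:ℝ) t₁, V s < r := by
        intro s hs
        by_contra hge
        push_neg at hge
        have hmem : s ∈ B := ⟨⟨hs.1, le_trans hs.2.le ht₁Icc.2⟩, hge⟩
        have := csInf_le hBbd hmem
        rw [← ht₁_def] at this
        linarith [hs.2]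
      have hVt₁le : V t₁ ≤ r := by
        have hclosmem : t₁ ∈ closure (Ico 0 t₁) := by
          rw [closure_Ico (ne_of_lt ht₁pos)]
          exact right_mem_Icc.2 ht₁pos.le
        have hne : (nhdsWithin t₁ (Ico 0 t₁)).NeBot :=
          mem_closure_iff_nhdsWithin_neBot.1 hclosmem
        have htd : Tendsto V (nhdsWithin t₁ (Ico 0 t₁)) (nhds (V t₁)) :=
          (hVcont t₁ ht₁Icc).mono (fun τ hτ => ⟨hτ.1, le_trans hτ.2.le ht₁Icc.2⟩)
        exact le_of_tendsto htd (eventually_mem_nhdsWithin.mono (fun s hs => (hlt s hs).le))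
      have hxδ1 : ∀ τ ∈ Icc (0:ℝ) t₁, ‖x τ‖ ≤ δ := by
        intro τ hτ
        apply hδr τ ⟨hτ.1, le_trans hτ.2 ht₁Icc.2⟩
        rcases eq_or_lt_of_le hτ.2 with heq | hlt2
        · rw [heq]; exact hVt₁le
        · exact (hlt τ ⟨hτ.1, hlt2⟩).le
      have hM1 := hmain 0 t₁ le_rfl ht₁Icc.1 ht₁Icc.2 hxδ1
      have hInt0 : 0 ≤ ∫ τ in (0:ℝ)..t₁, a₁ τ * V τ :=
        intervalIntegral.integral_nonneg ht₁Icc.1 (fun τ hτ =>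
          mul_nonneg (ha₁nn τ hτ.1) (hVnn τ ⟨hτ.1, le_trans hτ.2 ht₁Icc.2⟩))
      have hIt₁ := hImono t₁ ht₁Icc
      have hV0le := hV2 0 ⟨le_rfl, hT.le⟩
      nlinarith [mul_nonneg hc.le hInt0]
    have hxδ : ∀ τ ∈ Icc (0:ℝ) T, ‖x τ‖ ≤ δ := fun τ hτ => hδr τ hτ (hVltr τ hτ)
    -- final estimate
    intro t ht
    have hItnn : 0 ≤ ∫ τ in (0:ℝ)..t, h τ :=
      intervalIntegral.integral_nonneg ht.1 (fun τ _ => hhnn τ)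
    have hmain0t := hmain 0 t le_rfl ht.1 ht.2
      (fun τ hτ => hxδ τ ⟨hτ.1, le_trans hτ.2 ht.2⟩)
    have haVnn : 0 ≤ ∫ τ in (0:ℝ)..t, a₁ τ * V τ :=
      intervalIntegral.integral_nonneg ht.1 (fun τ hτ =>
        mul_nonneg (ha₁nn τ hτ.1) (hVnn τ ⟨hτ.1, le_trans hτ.2 ht.2⟩))
    obtain ⟨τ₀, hτ₀mem, hτ₀min⟩ := isCompact_Icc.exists_isMinOn (nonempty_Icc.2 ht.1)
      (hVcont.mono (Icc_subset_Icc le_rfl ht.2))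
    have hmin : V τ₀ * G t ≤ ∫ τ in (0:ℝ)..t, a₁ τ * V τ := by
      have hm1 : (∫ τ in (0:ℝ)..t, a₁ τ * V τ₀) ≤ ∫ τ in (0:ℝ)..t, a₁ τ * V τ := by
        refine intervalIntegral.integral_mono_on ht.1
          ((ha₁ii 0 t le_rfl ht.1).mul_const (V τ₀)) (haVii 0 t le_rfl ht.1 ht.2) ?_
        intro τ hτ
        exact mul_le_mul_of_nonneg_left (isMinOn_iff.1 hτ₀min τ hτ) (ha₁nn τ hτ.1)
      rwa [intervalIntegral.integral_mul_const, mul_comm] at hm1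
    have hVt0 : V t ≤ V τ₀ + ∫ τ in (0:ℝ)..t, h τ := by
      have hm2 := hmain τ₀ t hτ₀mem.1 hτ₀mem.2 ht.2
        (fun τ hτ => hxδ τ ⟨le_trans hτ₀mem.1 hτ.1, le_trans hτ.2 ht.2⟩)
      have h0 : 0 ≤ ∫ τ in τ₀..t, a₁ τ * V τ :=
        intervalIntegral.integral_nonneg hτ₀mem.2 (fun τ hτ =>
          mul_nonneg (ha₁nn τ (le_trans hτ₀mem.1 hτ.1))
            (hVnn τ ⟨le_trans hτ₀mem.1 hτ.1, le_trans hτ.2 ht.2⟩))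
      have h1 : (∫ τ in τ₀..t, h τ) ≤ ∫ τ in (0:ℝ)..t, h τ := by
        have hadd := intervalIntegral.integral_add_adjacent_intervals
          (hhii 0 τ₀ le_rfl hτ₀mem.1 (le_trans hτ₀mem.2 ht.2))
          (hhii τ₀ t hτ₀mem.1 hτ₀mem.2 ht.2)
        have hnn0 : 0 ≤ ∫ τ in (0:ℝ)..τ₀, h τ :=
          intervalIntegral.integral_nonneg hτ₀mem.1 (fun τ _ => hhnn τ)
        linarith
      linarith [hm2, h1, mul_nonneg hc.le h0]
    have hV0le := hV2 0 ⟨le_rfl, hT.le⟩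
    have hfinal : V t ≤ (η₂ * ‖x 0‖ ^ 2) / max 1 (c * G t) + 2 * ∫ τ in (0:ℝ)..t, h τ := by
      rcases le_or_gt (c * G t) 1 with hcase | hcase
      · rw [max_eq_left hcase, div_one]
        linarith [hmain0t, mul_nonneg hc.le haVnn]
      · rw [max_eq_right hcase.le]
        have hGpos : 0 < c * G t := lt_trans one_pos hcase
        have hτ₀V : V τ₀ * (c * G t) ≤ V 0 + ∫ τ in (0:ℝ)..t, h τ := by
          have h5 : c * (V τ₀ * G t) ≤ c * ∫ τ in (0:ℝ)..t, a₁ τ * V τ :=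
            mul_le_mul_of_nonneg_left hmin hc.le
          have h6 := hVnn t ht
          nlinarith [hmain0t]
        have hτ₀le : V τ₀ ≤ (V 0 + ∫ τ in (0:ℝ)..t, h τ) / (c * G t) := by
          rw [le_div_iff₀ hGpos]; exact hτ₀V
        have h7 : (∫ τ in (0:ℝ)..t, h τ) / (c * G t) ≤ ∫ τ in (0:ℝ)..t, h τ := by
          rw [div_le_iff₀ hGpos]; nlinarith
        have h8 : V 0 / (c * G t) ≤ η₂ * ‖x 0‖ ^ 2 / (c * G t) :=
          (div_le_div_iff_of_pos_right hGpos).2 hV0le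
        rw [add_div] at hτ₀le
        linarith [hVt0]
    -- convert to the norm estimate
    have hm1le : (1:ℝ) ≤ max 1 (c * G t) := le_max_left _ _
    have hmpos : (0:ℝ) < max 1 (c * G t) := lt_of_lt_of_le one_pos hm1le
    set b : ℝ := sq2 * ‖x 0‖ / Real.sqrt (max 1 (c * G t)) with hb_def
    set cc : ℝ := Real.sqrt (2 * (∫ τ in (0:ℝ)..t, h τ) / η₁) with hcc_def
    have hbnn : 0 ≤ b := by positivity
    have hccnn : 0 ≤ cc := Real.sqrt_nonneg _
    have hb2 : b ^ 2 = (η₂ / η₁) * ‖x 0‖ ^ 2 / max 1 (c * G t) := by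
      rw [hb_def, div_pow, mul_pow, Real.sq_sqrt hmpos.le, hsq2_def,
        Real.sq_sqrt (by positivity : (0:ℝ) ≤ η₂ / η₁)]
    have hcc2 : cc ^ 2 = 2 * (∫ τ in (0:ℝ)..t, h τ) / η₁ := by
      rw [hcc_def, Real.sq_sqrt (by positivity)]
    have hxt2 : ‖x t‖ ^ 2 ≤ b ^ 2 + cc ^ 2 := by
      have h1 := hV1 t ht
      rw [hb2, hcc2]
      have h2 : V t / η₁ ≤ ((η₂ * ‖x 0‖ ^ 2) / max 1 (c * G t) + 2 * ∫ τ in (0:ℝ)..t, h τ) / η₁ :=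
        (div_le_div_iff_of_pos_right hη₁).2 hfinal
      have h3 : ‖x t‖ ^ 2 ≤ V t / η₁ := by
        rw [le_div_iff₀ hη₁]; linarith
      have h4 : ((η₂ * ‖x 0‖ ^ 2) / max 1 (c * G t) + 2 * ∫ τ in (0:ℝ)..t, h τ) / η₁
          = (η₂ / η₁) * ‖x 0‖ ^ 2 / max 1 (c * G t) + 2 * (∫ τ in (0:ℝ)..t, h τ) / η₁ := by
        field_simp
      linarith
    have hxtle : ‖x t‖ ≤ b + cc := by
      have h5 : ‖x t‖ ^ 2 ≤ (b + cc) ^ 2 := by nlinarith [mul_nonneg hbnn hccnn]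
      calc ‖x t‖ = Real.sqrt (‖x t‖ ^ 2) := (Real.sqrt_sq (norm_nonneg _)).symm
        _ ≤ Real.sqrt ((b + cc) ^ 2) := Real.sqrt_le_sqrt h5
        _ = b + cc := Real.sqrt_sq (by positivity)
    show ‖x t‖ ≤ ‖x 0‖ * k t + Real.sqrt (2 * (∫ τ in (0:ℝ)..t, h τ) / η₁)
    have hke : ‖x 0‖ * k t = b + ‖x 0‖ * Real.exp (-t) := by
      rw [hk_def, hb_def]
      ring
    rw [← hcc_def, hke]
    have : 0 ≤ ‖x 0‖ * Real.exp (-t) := by positivity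
    linarith
end
end

section
/- Assume the structural conditions: g, g̃ : [0,∞) → [0,∞) and b : [0,∞) → (0,∞) are continuous; h₁ : [0,∞) → [0,∞) is continuously differentiable with h₁(t) ≤ M and h₁′(t) ≤ h₁(t) for all t ≥ 0, where M > 0 is a constant; m > 3 and n > 1 are integers; g₁, g₂, h₂ : [0,∞) → [0,∞) are continuous with h₂(t) = h₁(t)/(1 + h₁(t)) and g₂(t) ≥ 1 + g₁(t) for all t ≥ 0; and d : [0,∞) → ℝ is continuous. Let T > 0 and let x = (x₁, x₂) : [0,T] → ℝ² be a continuously differentiable solution of the closed-loop system. Define V(t) := (1/2)x₁(t)² + (1/4)(1 + h₁(t))x₂(t)⁴. Then for every ε ∈ (0, 1/(1+M)) and every t ∈ [0,T]: V′(t) ≤ −(1/2)g₁(t)·min{|x(t)|², |x(t)|⁴} + (1 + M)·ḡ(t)·max{|x(t)|^{m+1}, |x(t)|^{n+3}} + (1 + M)·ε⁻³·d(t)⁴, where ḡ(t) := max{g(t), g̃(t)}. -/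
set_option maxHeartbeats 1000000

open Set

private lemma aux_young (x y : ℝ) : 4 * x ^ 3 * y ≤ 3 * x ^ 4 + y ^ 4 := by
  nlinarith [mul_nonneg (sq_nonneg (x - y)) (sq_nonneg (x + y)),
    mul_nonneg (sq_nonneg (x - y)) (sq_nonneg x)]

private lemma aux_min1 (A C : ℝ) (hA : 0 ≤ A) (hC : 0 ≤ C) (h : A + C ≤ (A + C) ^ 2) :
    1 / 2 * (A + C) ≤ A + C ^ 2 := by
  nlinarith [sq_nonneg (C - 1/2), sq_nonneg (A + C - 1), mul_nonneg hA hC, sq_nonneg A]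

private lemma aux_min2 (A C : ℝ) (hA : 0 ≤ A) (hC : 0 ≤ C) (h : (A + C) ^ 2 ≤ A + C) :
    1 / 2 * (A + C) ^ 2 ≤ A + C ^ 2 := by
  nlinarith [sq_nonneg (A - C), mul_nonneg hA hC, sq_nonneg A, sq_nonneg C]

private lemma aux_L1 (G1 H1 H1v G2 A C4 : ℝ) (hG1 : 0 ≤ G1) (hH1 : 0 ≤ H1)
    (hH1v : H1v ≤ H1) (hG2 : 1 + G1 ≤ G2) (hC4 : 0 ≤ C4) :
    -G1 * A + (1/4) * H1v * C4 - (1 + H1) * G2 * C4 ≤ -G1 * (A + C4) - C4 := by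
  have k1 : (1 + H1) * (1 + G1) ≤ (1 + H1) * G2 :=
    mul_le_mul_of_nonneg_left hG2 (by linarith)
  nlinarith [mul_le_mul_of_nonneg_right k1 hC4, mul_le_mul_of_nonneg_right hH1v hC4,
    mul_nonneg (mul_nonneg hH1 hG1) hC4, mul_nonneg hH1 hC4]

private lemma aux_step3 (K e C : ℝ) (h : e * K ≤ 1) (hC : 0 ≤ C) :
    K * (3 / 4 * e * C) ≤ 3 / 4 * C := by
  nlinarith [mul_le_mul_of_nonneg_right h hC]

noncomputable section

/-- Derivative estimate for the Lyapunov function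
`V(t) = (1/2)x₁(t)² + (1/4)(1 + h₁(t))x₂(t)⁴` along the planar closed-loop system. -/
theorem stmt_13 (M : ℝ) (hM : 0 < M) (m n : ℕ) (hm : 3 < m) (hn : 1 < n)
    (g gt b h₁ h₁' g₁ g₂ h₂ d : ℝ → ℝ)
    (hgc : ContinuousOn g (Ici 0)) (hgnn : ∀ t ∈ Ici (0:ℝ), 0 ≤ g t)
    (hgtc : ContinuousOn gt (Ici 0)) (hgtnn : ∀ t ∈ Ici (0:ℝ), 0 ≤ gt t)
    (hbc : ContinuousOn b (Ici 0)) (hbpos : ∀ t ∈ Ici (0:ℝ), 0 < b t)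
    (hh₁d : ∀ t ∈ Ici (0:ℝ), HasDerivAt h₁ (h₁' t) t)
    (hh₁'c : ContinuousOn h₁' (Ici 0))
    (hh₁nn : ∀ t ∈ Ici (0:ℝ), 0 ≤ h₁ t) (hh₁M : ∀ t ∈ Ici (0:ℝ), h₁ t ≤ M)
    (hh₁' : ∀ t ∈ Ici (0:ℝ), h₁' t ≤ h₁ t)
    (hg₁c : ContinuousOn g₁ (Ici 0)) (hg₁nn : ∀ t ∈ Ici (0:ℝ), 0 ≤ g₁ t)
    (hg₂c : ContinuousOn g₂ (Ici 0)) (hg₂nn : ∀ t ∈ Ici (0:ℝ), 0 ≤ g₂ t)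
    (hh₂c : ContinuousOn h₂ (Ici 0)) (hh₂nn : ∀ t ∈ Ici (0:ℝ), 0 ≤ h₂ t)
    (hh₂ : ∀ t ∈ Ici (0:ℝ), h₂ t = h₁ t / (1 + h₁ t))
    (hg₂ : ∀ t ∈ Ici (0:ℝ), 1 + g₁ t ≤ g₂ t)
    (hdc : ContinuousOn d (Ici 0))
    (T : ℝ) (hT : 0 < T) (x₁ x₂ : ℝ → ℝ)
    (hx₁ : ∀ t ∈ Icc (0:ℝ) T,
      HasDerivAt x₁ (-g₁ t * x₁ t + g t * x₁ t ^ m - h₁ t * x₂ t ^ 3) t)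
    (hx₂ : ∀ t ∈ Icc (0:ℝ) T,
      HasDerivAt x₂ (h₂ t * x₁ t - g₂ t * x₂ t + gt t * x₂ t ^ n
        - b t * x₁ t ^ 2 * x₂ t + d t) t) :
    ∀ ε : ℝ, 0 < ε → ε < 1 / (1 + M) →
    ∀ t ∈ Icc (0:ℝ) T, ∀ D : ℝ,
      HasDerivAt (fun τ => (1 / 2) * x₁ τ ^ 2 + (1 / 4) * (1 + h₁ τ) * x₂ τ ^ 4) D t →
      D ≤ -(1 / 2) * g₁ t
            * min (Real.sqrt (x₁ t ^ 2 + x₂ t ^ 2) ^ 2) (Real.sqrt (x₁ t ^ 2 + x₂ t ^ 2) ^ 4)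
          + (1 + M) * max (g t) (gt t)
            * max (Real.sqrt (x₁ t ^ 2 + x₂ t ^ 2) ^ (m + 1))
                  (Real.sqrt (x₁ t ^ 2 + x₂ t ^ 2) ^ (n + 3))
          + (1 + M) * ε⁻¹ ^ 3 * d t ^ 4 := by
  intro ε hε hεM t ht D hD
  have ht0 : t ∈ Ici (0:ℝ) := ht.1
  -- abbreviations
  set a := x₁ t with ha
  set c := x₂ t with hc
  set s := Real.sqrt (x₁ t ^ 2 + x₂ t ^ 2) with hsdef
  have hs0 : 0 ≤ s := Real.sqrt_nonneg _
  have hs2 : s ^ 2 = a ^ 2 + c ^ 2 := Real.sq_sqrt (by positivity)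
  have hH1 : 0 ≤ h₁ t := hh₁nn t ht0
  have hH1M : h₁ t ≤ M := hh₁M t ht0
  have hH1' : h₁' t ≤ h₁ t := hh₁' t ht0
  have hG1 : 0 ≤ g₁ t := hg₁nn t ht0
  have hG : 0 ≤ g t := hgnn t ht0
  have hGT : 0 ≤ gt t := hgtnn t ht0
  have hB : 0 < b t := hbpos t ht0
  have hG2 : 1 + g₁ t ≤ g₂ t := hg₂ t ht0
  have h1H1 : (0:ℝ) < 1 + h₁ t := by linarith
  have hfact : (1 + h₁ t) * h₂ t = h₁ t := by
    rw [hh₂ t ht0]; field_simp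
  -- identify D
  have h1 := hx₁ t ht
  have h2 := hx₂ t ht
  have h3 := hh₁d t ht0
  have hV : HasDerivAt (fun τ => (1 / 2) * x₁ τ ^ 2 + (1 / 4) * (1 + h₁ τ) * x₂ τ ^ 4)
      (a * (-g₁ t * a + g t * a ^ m - h₁ t * c ^ 3)
        + (1/4) * h₁' t * c ^ 4
        + (1 + h₁ t) * c ^ 3
          * (h₂ t * a - g₂ t * c + gt t * c ^ n - b t * a ^ 2 * c + d t)) t := by
    have hA := (h1.pow 2).const_mul (1/2 : ℝ)
    have hB' := (((hasDerivAt_const t (1:ℝ)).add h3).mul (h2.pow 4)).const_mul (1/4 : ℝ)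
    have h := hA.add hB'
    have hfun : (fun τ => (1 / 2) * x₁ τ ^ 2 + (1 / 4) * (1 + h₁ τ) * x₂ τ ^ 4)
        = (fun τ => 1/2 * x₁ τ ^ 2 + 1/4 * ((1 + h₁ τ) * x₂ τ ^ 4)) := by
      funext τ; ring
    rw [hfun]
    refine h.congr_deriv ?_
    push_cast
    simp only [Pi.add_apply, Pi.pow_apply]
    ring
  have hDE : D = a * (-g₁ t * a + g t * a ^ m - h₁ t * c ^ 3)
        + (1/4) * h₁' t * c ^ 4
        + (1 + h₁ t) * c ^ 3
          * (h₂ t * a - g₂ t * c + gt t * c ^ n - b t * a ^ 2 * c + d t) :=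
    hD.unique hV
  -- rewrite D using the cancellation (1+h₁)h₂ = h₁
  have hDE2 : D = -g₁ t * a ^ 2 + g t * a ^ (m+1)
      + (1/4) * h₁' t * c ^ 4 - (1 + h₁ t) * g₂ t * c ^ 4
      + (1 + h₁ t) * gt t * c ^ (n+3)
      - (1 + h₁ t) * b t * a ^ 2 * c ^ 4
      + (1 + h₁ t) * c ^ 3 * d t := by
    rw [hDE]
    have e1 : a ^ (m+1) = a ^ m * a := by rw [pow_succ]
    have e2 : c ^ (n+3) = c ^ n * c ^ 3 := by rw [← pow_add]
    rw [e1, e2]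
    linear_combination (a * c ^ 3) * hfact
  -- Step 1: linear damping part
  have hc4 : (0:ℝ) ≤ c ^ 4 := by positivity
  have L1 : -g₁ t * a ^ 2 + (1/4) * h₁' t * c ^ 4 - (1 + h₁ t) * g₂ t * c ^ 4
      ≤ -g₁ t * (a ^ 2 + c ^ 4) - c ^ 4 :=
    aux_L1 (g₁ t) (h₁ t) (h₁' t) (g₂ t) (a ^ 2) (c ^ 4) hG1 hH1 hH1' hG2 hc4
  -- Step 2: min comparison
  have L2 : (1/2) * min (s ^ 2) (s ^ 4) ≤ a ^ 2 + c ^ 4 := by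
    have hA : (0:ℝ) ≤ a ^ 2 := sq_nonneg a
    have hC : (0:ℝ) ≤ c ^ 2 := sq_nonneg c
    have hs4 : s ^ 4 = (a ^ 2 + c ^ 2) ^ 2 := by
      rw [show (4:ℕ) = 2 * 2 from rfl, pow_mul, hs2]
    have hc42 : c ^ 4 = (c ^ 2) ^ 2 := by ring
    rcases le_total (s ^ 2) (s ^ 4) with h | h
    · rw [min_eq_left h, hs2]
      rw [hs2, hs4] at h
      rw [hc42]
      exact aux_min1 (a ^ 2) (c ^ 2) hA hC h
    · rw [min_eq_right h, hs4]
      rw [hs2, hs4] at h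
      rw [hc42]
      exact aux_min2 (a ^ 2) (c ^ 2) hA hC h
  have L2' : -g₁ t * (a ^ 2 + c ^ 4) ≤ -(1/2) * g₁ t * min (s ^ 2) (s ^ 4) := by
    have h' := mul_le_mul_of_nonneg_left L2 hG1
    linarith [h']
  -- Step 3: growth part
  have habs_a : |a| ≤ s := by
    rw [hsdef, ← ha, ← hc, ← Real.sqrt_sq_eq_abs]
    exact Real.sqrt_le_sqrt (by nlinarith [sq_nonneg c])
  have habs_c : |c| ≤ s := by
    rw [hsdef, ← ha, ← hc, ← Real.sqrt_sq_eq_abs]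
    exact Real.sqrt_le_sqrt (by nlinarith [sq_nonneg a])
  have p1 : a ^ (m+1) ≤ a ^ 2 * s ^ (m-1) := by
    calc a ^ (m+1) ≤ |a ^ (m+1)| := le_abs_self _
      _ = |a| ^ 2 * |a| ^ (m-1) := by rw [abs_pow, ← pow_add]; congr 1; omega
      _ ≤ a ^ 2 * s ^ (m-1) := by
          rw [sq_abs]
          exact mul_le_mul_of_nonneg_left (pow_le_pow_left₀ (abs_nonneg a) habs_a _) (sq_nonneg a)
  have p2 : c ^ (n+3) ≤ c ^ 2 * s ^ (n+1) := by
    calc c ^ (n+3) ≤ |c ^ (n+3)| := le_abs_self _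
      _ = |c| ^ 2 * |c| ^ (n+1) := by rw [abs_pow, ← pow_add]; congr 1; omega
      _ ≤ c ^ 2 * s ^ (n+1) := by
          rw [sq_abs]
          exact mul_le_mul_of_nonneg_left (pow_le_pow_left₀ (abs_nonneg c) habs_c _) (sq_nonneg c)
  have hmx : (0:ℝ) ≤ max (g t) (gt t) := le_trans hG (le_max_left _ _)
  have hM1 : (1:ℝ) ≤ 1 + M := by linarith
  have hsm1 : (0:ℝ) ≤ s ^ (m-1) := by positivity
  have hsn1 : (0:ℝ) ≤ s ^ (n+1) := by positivity
  have pmax : s ^ 2 * max (s ^ (m-1)) (s ^ (n+1)) = max (s ^ (m+1)) (s ^ (n+3)) := by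
    rw [mul_max_of_nonneg _ _ (by positivity : (0:ℝ) ≤ s ^ 2), ← pow_add, ← pow_add]
    congr 2 <;> omega
  have L3 : g t * a ^ (m+1) + (1 + h₁ t) * gt t * c ^ (n+3)
      ≤ (1 + M) * max (g t) (gt t) * max (s ^ (m+1)) (s ^ (n+3)) := by
    have q1 : g t * a ^ (m+1) ≤ (1 + M) * max (g t) (gt t) * (a ^ 2 * s ^ (m-1)) := by
      calc g t * a ^ (m+1) ≤ g t * (a ^ 2 * s ^ (m-1)) := mul_le_mul_of_nonneg_left p1 hG
        _ ≤ (1 + M) * max (g t) (gt t) * (a ^ 2 * s ^ (m-1)) := by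
            apply mul_le_mul_of_nonneg_right _ (mul_nonneg (sq_nonneg a) hsm1)
            exact le_trans (le_max_left (g t) (gt t)) (le_mul_of_one_le_left hmx hM1)
    have q2 : (1 + h₁ t) * gt t * c ^ (n+3)
        ≤ (1 + M) * max (g t) (gt t) * (c ^ 2 * s ^ (n+1)) := by
      calc (1 + h₁ t) * gt t * c ^ (n+3) ≤ (1 + h₁ t) * gt t * (c ^ 2 * s ^ (n+1)) := by
            apply mul_le_mul_of_nonneg_left p2
            positivity
        _ ≤ (1 + M) * max (g t) (gt t) * (c ^ 2 * s ^ (n+1)) := by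
            apply mul_le_mul_of_nonneg_right _ (mul_nonneg (sq_nonneg c) hsn1)
            exact mul_le_mul (by linarith) (le_max_right _ _) hGT (by linarith)
    have q3 : a ^ 2 * s ^ (m-1) + c ^ 2 * s ^ (n+1)
        ≤ (a ^ 2 + c ^ 2) * max (s ^ (m-1)) (s ^ (n+1)) := by
      have r1 := mul_le_mul_of_nonneg_left (le_max_left (s ^ (m-1)) (s ^ (n+1))) (sq_nonneg a)
      have r2 := mul_le_mul_of_nonneg_left (le_max_right (s ^ (m-1)) (s ^ (n+1))) (sq_nonneg c)
      have expand : (a ^ 2 + c ^ 2) * max (s ^ (m-1)) (s ^ (n+1))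
          = a ^ 2 * max (s ^ (m-1)) (s ^ (n+1)) + c ^ 2 * max (s ^ (m-1)) (s ^ (n+1)) := by ring
      rw [expand]
      exact add_le_add r1 r2
    have q4 : (a ^ 2 + c ^ 2) * max (s ^ (m-1)) (s ^ (n+1)) = max (s ^ (m+1)) (s ^ (n+3)) := by
      rw [← hs2, pmax]
    have hcoef : (0:ℝ) ≤ (1 + M) * max (g t) (gt t) := by positivity
    calc g t * a ^ (m+1) + (1 + h₁ t) * gt t * c ^ (n+3)
        ≤ (1 + M) * max (g t) (gt t) * (a ^ 2 * s ^ (m-1))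
            + (1 + M) * max (g t) (gt t) * (c ^ 2 * s ^ (n+1)) := add_le_add q1 q2
      _ = (1 + M) * max (g t) (gt t) * (a ^ 2 * s ^ (m-1) + c ^ 2 * s ^ (n+1)) := by ring
      _ ≤ (1 + M) * max (g t) (gt t) * ((a ^ 2 + c ^ 2) * max (s ^ (m-1)) (s ^ (n+1))) :=
          mul_le_mul_of_nonneg_left q3 hcoef
      _ = (1 + M) * max (g t) (gt t) * max (s ^ (m+1)) (s ^ (n+3)) := by rw [q4]
  -- Step 4: drop dissipative term
  have L4 : -(1 + h₁ t) * b t * a ^ 2 * c ^ 4 ≤ 0 := by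
    have : 0 ≤ (1 + h₁ t) * b t * a ^ 2 * c ^ 4 :=
      mul_nonneg (mul_nonneg (mul_nonneg (le_of_lt h1H1) (le_of_lt hB)) (sq_nonneg a)) hc4
    linarith
  -- Step 5: disturbance via Young's inequality
  have hεM' : ε * (1 + M) < 1 := by
    rw [lt_div_iff₀ (by linarith : (0:ℝ) < 1 + M)] at hεM
    linarith
  have young : |c| ^ 3 * |d t| ≤ (3/4) * ε * c ^ 4 + (1/4) * (ε ^ 3)⁻¹ * d t ^ 4 := by
    have key : 4 * (ε * |c|) ^ 3 * |d t| ≤ 3 * (ε * |c|) ^ 4 + |d t| ^ 4 :=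
      aux_young (ε * |c|) (|d t|)
    have e1 : 4 * (ε * |c|) ^ 3 * |d t| = 4 * ε ^ 3 * (|c| ^ 3 * |d t|) := by ring
    have e2 : 3 * (ε * |c|) ^ 4 = 3 * ε ^ 4 * |c| ^ 4 := by ring
    have h2' : 4 * ε ^ 3 * (|c| ^ 3 * |d t|) ≤ 3 * ε ^ 4 * |c| ^ 4 + |d t| ^ 4 := by
      rw [← e1, ← e2]; exact key
    rw [← sub_nonneg]
    have h4' : (3/4) * ε * c ^ 4 + (1/4) * (ε ^ 3)⁻¹ * d t ^ 4 - |c| ^ 3 * |d t|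
        = (ε ^ 3)⁻¹ * (1/4) * (3 * ε ^ 4 * |c| ^ 4 + |d t| ^ 4 - 4 * ε ^ 3 * (|c| ^ 3 * |d t|)) := by
      have hc' : |c| ^ 4 = c ^ 4 := by rw [← abs_pow, abs_of_nonneg hc4]
      have hd' : |d t| ^ 4 = d t ^ 4 := by
        rw [← abs_pow, abs_of_nonneg (by positivity)]
      rw [hc', hd']
      field_simp
    rw [h4']
    apply mul_nonneg (by positivity)
    linarith [h2']
  have L5 : (1 + h₁ t) * c ^ 3 * d t ≤ (3/4) * c ^ 4 + (1 + M) * ε⁻¹ ^ 3 * d t ^ 4 := by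
    have step1 : (1 + h₁ t) * c ^ 3 * d t ≤ (1 + M) * (|c| ^ 3 * |d t|) := by
      have hle : c ^ 3 * d t ≤ |c| ^ 3 * |d t| := by
        calc c ^ 3 * d t ≤ |c ^ 3 * d t| := le_abs_self _
          _ = |c| ^ 3 * |d t| := by rw [abs_mul, abs_pow]
      have hnn : (0:ℝ) ≤ |c| ^ 3 * |d t| := by positivity
      calc (1 + h₁ t) * c ^ 3 * d t = (1 + h₁ t) * (c ^ 3 * d t) := by ring
        _ ≤ (1 + h₁ t) * (|c| ^ 3 * |d t|) := mul_le_mul_of_nonneg_left hle (le_of_lt h1H1)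
        _ ≤ (1 + M) * (|c| ^ 3 * |d t|) := mul_le_mul_of_nonneg_right (by linarith) hnn
    have step2 : (1 + M) * (|c| ^ 3 * |d t|)
        ≤ (1 + M) * ((3/4) * ε * c ^ 4 + (1/4) * (ε ^ 3)⁻¹ * d t ^ 4) :=
      mul_le_mul_of_nonneg_left young (by linarith)
    have step3 : (1 + M) * ((3/4) * ε * c ^ 4) ≤ (3/4) * c ^ 4 :=
      aux_step3 (1 + M) ε (c ^ 4) (le_of_lt hεM') hc4
    have step4 : (1 + M) * ((1/4) * (ε ^ 3)⁻¹ * d t ^ 4) ≤ (1 + M) * ε⁻¹ ^ 3 * d t ^ 4 := by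
      rw [inv_pow]
      have hq : (0:ℝ) ≤ (1 + M) * ((ε ^ 3)⁻¹ * d t ^ 4) :=
        mul_nonneg (by linarith) (by positivity)
      linarith [hq]
    linarith [step1, step2, step3, step4]
  -- combine everything
  rw [hDE2]
  have hg1min : -g₁ t * a ^ 2 + (1/4) * h₁' t * c ^ 4 - (1 + h₁ t) * g₂ t * c ^ 4
      ≤ -(1/2) * g₁ t * min (s ^ 2) (s ^ 4) - c ^ 4 := by linarith [L1, L2']
  linarith [hg1min, L3, L4, L5, hc4]
end
end
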